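/- arXiv:2105.07551 — 2 statements merged into one kernel-verified Lean document; each statement's English description precedes it below -/
import Mathlib

section
/- Let G be a 4-connected planar triangulation and let S be an independent set in G that saturates no 4-cycle and no 5-cycle of G. Let u, u' in S be distinct and let D_u and D_{u'} be 4-cycles of G with u in V(D_u) and u' in V(D_{u'}). Then |V(D_u) intersect V(D_{u'})| <= 2, no vertex of V(D_u) intersect V(D_{u'}) lies in S, and if V(D_u) intersect V(D_{u'}) consists of two vertices a and b, then ab is an edge of both D_u and D_{u'}. -/
open SimpleGraph

variable {V : Type}

/-- The degree of a vertex, as the cardinality of its neighbour set. -/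
noncomputable def vdeg (G : SimpleGraph V) (v : V) : ℕ := (G.neighborSet v).ncard

/-- A graph is `k`-connected if it has more than `k` vertices and remains connected
whenever fewer than `k` vertices are removed. -/
def KConnected [Fintype V] (k : ℕ) (G : SimpleGraph V) : Prop :=
  k < Fintype.card V ∧
    ∀ S : Finset V, S.card < k → (G.induce ((↑S : Set V)ᶜ)).Connected

/-- `S` is an independent set of vertices. -/
def IndepSet (G : SimpleGraph V) (S : Set V) : Prop :=
  ∀ ⦃a⦄, a ∈ S → ∀ ⦃b⦄, b ∈ S → ¬ G.Adj a b

/-- `H` is a minor of `G` (branch-set definition). -/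
def HasMinor {W : Type} (G : SimpleGraph V) (H : SimpleGraph W) : Prop :=
  ∃ f : W → Set V,
    (∀ w, (f w).Nonempty) ∧
    (∀ w, (G.induce (f w)).Connected) ∧
    (∀ w₁ w₂, w₁ ≠ w₂ → Disjoint (f w₁) (f w₂)) ∧
    (∀ w₁ w₂, H.Adj w₁ w₂ → ∃ v₁ ∈ f w₁, ∃ v₂ ∈ f w₂, G.Adj v₁ v₂)

/-- Planarity, via Wagner's characterization: no `K₅` and no `K₃,₃` minor. -/
def IsPlanar (G : SimpleGraph V) : Prop :=
  ¬ HasMinor G (⊤ : SimpleGraph (Fin 5)) ∧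
    ¬ HasMinor G (completeBipartiteGraph (Fin 3) (Fin 3))

/-- Outerplanarity: no `K₄` and no `K₂,₃` minor. -/
def IsOuterplanarGraph {W : Type} (H : SimpleGraph W) : Prop :=
  ¬ HasMinor H (⊤ : SimpleGraph (Fin 4)) ∧
    ¬ HasMinor H (completeBipartiteGraph (Fin 2) (Fin 3))

/-- A planar triangulation: an edge-maximal planar graph on at least 3 vertices,
equivalently a planar graph with `3n - 6` edges. -/
def IsPlanarTriangulation [Fintype V] (G : SimpleGraph V) : Prop :=
  3 ≤ Fintype.card V ∧ IsPlanar G ∧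
    (G.edgeSet.ncard : ℤ) = 3 * (Fintype.card V : ℤ) - 6

/-- `p` is a Hamiltonian path of the subgraph of `G` induced on the vertex set `A`:
a path in `G` whose support is exactly `A`. -/
def IsHamPathOn (G : SimpleGraph V) (A : Set V) {a b : V} (p : G.Walk a b) : Prop :=
  p.IsPath ∧ ∀ x, x ∈ p.support ↔ x ∈ A

/-- There are at least two Hamiltonian paths between `a` and `b` in the subgraph of `G`
induced on the vertex set `A`. -/
def TwoHamPathsOn (G : SimpleGraph V) (A : Set V) (a b : V) : Prop :=
  ∃ p q : G.Walk a b, IsHamPathOn G A p ∧ IsHamPathOn G A q ∧ p ≠ q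

/-- The number of (distinct, i.e. with distinct edge sets) Hamiltonian cycles of `G`
containing all edges of `E₀`. -/
noncomputable def hamCycleCountThrough (G : SimpleGraph V) (E₀ : Set (Sym2 V)) : ℕ :=
  {E : Set (Sym2 V) | ∃ (v : V) (c : G.Walk v v), c.IsCycle ∧ (∀ x, x ∈ c.support) ∧
    (∀ e ∈ E₀, e ∈ c.edges) ∧ E = {e | e ∈ c.edges}}.ncard

/-- The number of Hamiltonian cycles of `G`. -/
noncomputable def hamCycleCount (G : SimpleGraph V) : ℕ := hamCycleCountThrough G ∅

/-- The distance between `x` and `y` in `G` is at least `k`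
(every walk from `x` to `y` has length at least `k`). -/
def DistAtLeast (G : SimpleGraph V) (x y : V) (k : ℕ) : Prop :=
  ∀ p : G.Walk x y, k ≤ p.length

/-- The link `A_u` of a vertex `u` of degree at most 6: if `deg u = 4`, the set of
edges of `G` with both ends in `N(u)`; if `deg u ∈ {5,6}`, the set of edges `e`
incident with `u` such that `G - e` is 4-connected. -/
def link [Fintype V] (G : SimpleGraph V) (u : V) : Set (Sym2 V) :=
  {e | e ∈ G.edgeSet ∧
    ((vdeg G u = 4 ∧ ∀ v ∈ e, v ∈ G.neighborSet u) ∨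
     (vdeg G u ≠ 4 ∧ u ∈ e ∧ KConnected 4 (G.deleteEdges {e})))}

/-- `S` saturates some `k`-cycle of `G`: there is a `k`-cycle `C` with `|S ∩ V(C)| = 2`. -/
def Saturates (G : SimpleGraph V) (S : Set V) (k : ℕ) : Prop :=
  ∃ (v : V) (c : G.Walk v v), c.IsCycle ∧ c.length = k ∧
    (S ∩ {x | x ∈ c.support}).ncard = 2

/-- `S` saturates some diamond-6-cycle of `G`: there is a subgraph of `G` isomorphic to
the diamond-6-cycle (crucial vertices `x i`, `y i`, hub vertices `k i`) such that `S`
contains three of its crucial vertices. -/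
def SaturatesDiamond6 (G : SimpleGraph V) (S : Set V) : Prop :=
  ∃ x y k : Fin 3 → V,
    List.Nodup [x 0, y 0, x 1, y 1, x 2, y 2, k 0, k 1, k 2] ∧
    (∀ i, G.Adj (x i) (y i)) ∧
    (∀ i, G.Adj (x i) (k i) ∧ G.Adj (y i) (k i) ∧
          G.Adj (x i) (k (i + 1)) ∧ G.Adj (y i) (k (i + 1))) ∧
    3 ≤ (S ∩ ({x 0, y 0, x 1, y 1, x 2, y 2} : Set V)).ncard

/-- `G` has a separating triangle: a 3-cycle whose vertex deletion disconnects `G`. -/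
def HasSeparatingTriangle (G : SimpleGraph V) : Prop :=
  ∃ a b c : V, G.Adj a b ∧ G.Adj b c ∧ G.Adj a c ∧
    ¬ (G.induce {v | v ≠ a ∧ v ≠ b ∧ v ≠ c}).Connected

/-- A combinatorial plane graph: a graph together with a type of faces, a distinguished
(outer, i.e. infinite) face, and incidence relations of vertices and edges with faces. -/
structure PlaneGraph (V : Type) where
  graph : SimpleGraph V
  Face : Type
  outer : Face
  vertexOn : V → Face → Prop
  edgeOn : Sym2 V → Face → Prop
  edgeOn_mem : ∀ e f, edgeOn e f → e ∈ graph.edgeSet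
  vertexOn_of_edgeOn : ∀ e f, edgeOn e f → ∀ v, v ∈ e → vertexOn v f

/-- A vertex `y` and an edge `e` are cofacial: incident with a common face. -/
def PlaneGraph.Cofacial (P : PlaneGraph V) (y : V) (e : Sym2 V) : Prop :=
  ∃ f, P.vertexOn y f ∧ P.edgeOn e f

/-- The face `f` is bounded by a triangle. -/
def PlaneGraph.IsTriFace (P : PlaneGraph V) (f : P.Face) : Prop :=
  ∃ a b c : V, a ≠ b ∧ a ≠ c ∧ b ≠ c ∧
    P.graph.Adj a b ∧ P.graph.Adj b c ∧ P.graph.Adj a c ∧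
    (∀ v, P.vertexOn v f ↔ v = a ∨ v = b ∨ v = c) ∧
    (∀ e, P.edgeOn e f ↔ e = s(a, b) ∨ e = s(b, c) ∨ e = s(a, c))

/-- A near triangulation: every face except possibly the outer one is a triangle. -/
def PlaneGraph.IsNearTriangulation (P : PlaneGraph V) : Prop :=
  ∀ f, f ≠ P.outer → P.IsTriFace f

/-- The outer face of `P` is bounded by the 4-cycle `u v w x u`. -/
def PlaneGraph.OuterCycle4 (P : PlaneGraph V) (u v w x : V) : Prop :=
  [u, v, w, x].Nodup ∧
  P.graph.Adj u v ∧ P.graph.Adj v w ∧ P.graph.Adj w x ∧ P.graph.Adj x u ∧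
  (∀ y, P.vertexOn y P.outer ↔ y = u ∨ y = v ∨ y = w ∨ y = x) ∧
  (∀ e, P.edgeOn e P.outer ↔ e = s(u, v) ∨ e = s(v, w) ∨ e = s(w, x) ∨ e = s(x, u))

/-- `H` is a cycle (as a graph): it has a Hamiltonian cycle using all of its edges. -/
def IsCycleGraph {W : Type} (H : SimpleGraph W) : Prop :=
  ∃ (v : W) (c : H.Walk v v), c.IsCycle ∧ (∀ x, x ∈ c.support) ∧
    ∀ e ∈ H.edgeSet, e ∈ c.edges

/-- The subgraph of `G` on the vertex set `B` (kept on the ambient vertex type;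
vertices outside `B` become isolated). -/
def restrictTo (G : SimpleGraph V) (B : Set V) : SimpleGraph V where
  Adj a b := a ∈ B ∧ b ∈ B ∧ G.Adj a b
  symm := ⟨fun _ _ h => ⟨h.2.1, h.1, h.2.2.symm⟩⟩
  loopless := ⟨fun _ h => G.irrefl h.2.2⟩

/-- The graph obtained from `G` by contracting the set `A` to the single vertex `z`
(with `z ∈ A` serving as the new vertex; the other vertices of `A` become isolated). -/
def contractSetTo (G : SimpleGraph V) (A : Set V) (z : V) : SimpleGraph V :=
  SimpleGraph.fromRel (fun a b =>
    (a ∉ A ∧ b ∉ A ∧ G.Adj a b) ∨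
    (a = z ∧ b ∉ A ∧ ∃ w ∈ A, G.Adj w b))

/-- `c` is a separating 4-cycle of `G` and `A` is the vertex set of its interior:
`Vclosure(c) = V(c) ∪ A`. -/
def IsSeparating4CycleWithInside (G : SimpleGraph V) {v : V} (c : G.Walk v v) (A : Set V)
    : Prop :=
  c.IsCycle ∧ c.length = 4 ∧
  A.Nonempty ∧ (∀ a ∈ A, a ∉ c.support) ∧
  (G.induce A).Connected ∧
  (∀ a ∈ A, ∀ b, G.Adj a b → b ∈ A ∨ b ∈ c.support) ∧
  {x | x ∉ A ∧ x ∉ c.support}.Nonempty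

/-- The alternative conclusion of Lemma 4.2 for a graph `H` with relevant vertex set `W`,
outer 4-cycle vertex set `C` and contracted vertex `z`: either (i) for all distinct
`a, b ∈ C`, `H - (C \ {a,b})` has at least two Hamiltonian `a`–`b` paths, or (ii) there are
distinct `a, b ∈ C` for which there is a unique such path `P`, and for every other pair
`c, d ∈ C` there are at least two Hamiltonian `c`–`d` paths, each avoiding an edge of `P`
incident with `z`. -/
def TwoPathOrUnique (H : SimpleGraph V) (C W : Set V) (z : V) : Prop :=
  (∀ a b : V, a ∈ C → b ∈ C → a ≠ b → TwoHamPathsOn H (W \ (C \ {a, b})) a b) ∨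
  (∃ a b : V, a ∈ C ∧ b ∈ C ∧ a ≠ b ∧
    ∃ p : H.Walk a b, IsHamPathOn H (W \ (C \ {a, b})) p ∧
      (∀ q : H.Walk a b, IsHamPathOn H (W \ (C \ {a, b})) q → q = p) ∧
      ∀ c d : V, c ∈ C → d ∈ C → c ≠ d → ({c, d} : Set V) ≠ ({a, b} : Set V) →
        ∃ q₁ q₂ : H.Walk c d,
          IsHamPathOn H (W \ (C \ {c, d})) q₁ ∧ IsHamPathOn H (W \ (C \ {c, d})) q₂ ∧
          q₁ ≠ q₂ ∧
          (∃ e ∈ p.edges, z ∈ e ∧ e ∉ q₁.edges) ∧ (∃ e ∈ p.edges, z ∈ e ∧ e ∉ q₂.edges))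

/-- Chordality: every cycle of length at least 4 has a chord. -/
def Chordal {W : Type} (H : SimpleGraph W) : Prop :=
  ∀ (v : W) (c : H.Walk v v), c.IsCycle → 4 ≤ c.length →
    ∃ a b, a ∈ c.support ∧ b ∈ c.support ∧ H.Adj a b ∧ s(a, b) ∉ c.edges

/-! An independent set meets a 4-cycle in at most two (opposite) vertices, so a 4-cycle through
`u ∈ S` that `S` does not saturate meets `S` in `u` alone. In particular `u'` is not on `D_u`,
`u` is not on `D_{u'}`, and no common vertex lies in `S`. Write `D_u = u p q r`. If both
neighbours `p`, `r` of `u` lay on `D_{u'}`, then either both are neighbours of `u'` on `D_{u'}`,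
and `u p u' r` is a 4-cycle, or one of them, say `p`, is a neighbour of `u'` and `r` is opposite
to `u'` on `D_{u'} = u' p q' r'`, and `u p u' r' r` is a 5-cycle. Either cycle meets `S` in
exactly `u` and `u'`. So the common vertices lie in `{p, q}` or in `{q, r}`, an edge of `D_u`. -/

section FourCycles

variable {G : SimpleGraph V} {S : Set V}

structure IsFourCycle (G : SimpleGraph V) (a b c d : V) : Prop where
  adj₁ : G.Adj a b
  adj₂ : G.Adj b c
  adj₃ : G.Adj c d
  adj₄ : G.Adj d a
  ne₁₃ : a ≠ c
  ne₂₄ : b ≠ d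

theorem saturates_five_of_adj {a b c d e : V} (hab : G.Adj a b) (hbc : G.Adj b c)
    (hcd : G.Adj c d) (hde : G.Adj d e) (hea : G.Adj e a) (hac : a ≠ c) (had : a ≠ d)
    (hbd : b ≠ d) (hbe : b ≠ e) (hce : c ≠ e) (ha : a ∈ S) (hc : c ∈ S) (hb : b ∉ S)
    (hd : d ∉ S) (he : e ∉ S) : Saturates G S 5 := by
  let w : G.Walk a a := .cons hab (.cons hbc (.cons hcd (.cons hde (.cons hea .nil))))
  refine ⟨a, w, ?_, rfl, ?_⟩
  · simp [w, Walk.isCycle_iff_isPath_tail_and_le_length, Walk.isPath_def, hab.ne', hbc.ne, hbd,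
      hbe, hcd.ne, hce, hac.symm, hde.ne, had.symm, hea.ne]
  · have : S ∩ {x | x ∈ w.support} = {a, c} := by
      ext x
      simp only [w, Walk.support_cons, Walk.support_nil, List.mem_cons, List.not_mem_nil,
        or_false, Set.mem_inter_iff, Set.mem_ofPred_eq, Set.mem_insert_iff, Set.mem_singleton_iff]
      grind
    rw [this, Set.ncard_pair hac]

namespace IsFourCycle

variable {a b c d : V}

theorem reverse (h : IsFourCycle G a b c d) : IsFourCycle G a d c b :=
  ⟨h.adj₄.symm, h.adj₃.symm, h.adj₂.symm, h.adj₁.symm, h.ne₁₃, h.ne₂₄.symm⟩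

def toWalk (h : IsFourCycle G a b c d) : G.Walk a a :=
  .cons h.adj₁ (.cons h.adj₂ (.cons h.adj₃ (.cons h.adj₄ .nil)))

theorem toWalk_isCycle (h : IsFourCycle G a b c d) : h.toWalk.IsCycle := by
  simp [toWalk, Walk.isCycle_iff_isPath_tail_and_le_length, Walk.isPath_def, h.adj₁.ne', h.adj₂.ne,
    h.ne₂₄, h.adj₃.ne, h.ne₁₃.symm, h.adj₄.ne]

theorem saturates (h : IsFourCycle G a b c d) (ha : a ∈ S) (hc : c ∈ S) (hb : b ∉ S)
    (hd : d ∉ S) : Saturates G S 4 := by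
  refine ⟨a, h.toWalk, h.toWalk_isCycle, rfl, ?_⟩
  have : S ∩ {x | x ∈ h.toWalk.support} = {a, c} := by
    ext x
    simp only [toWalk, Walk.support_cons, Walk.support_nil, List.mem_cons, List.not_mem_nil,
      or_false, Set.mem_inter_iff, Set.mem_ofPred_eq, Set.mem_insert_iff, Set.mem_singleton_iff]
    grind
  rw [this, Set.ncard_pair h.ne₁₃]

theorem not_mem_of_not_saturates (h : IsFourCycle G a b c d) (hS : IndepSet G S)
    (h4c : ¬ Saturates G S 4) (ha : a ∈ S) : b ∉ S ∧ c ∉ S ∧ d ∉ S := by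
  have hb : b ∉ S := fun hb => hS ha hb h.adj₁
  have hd : d ∉ S := fun hd => hS ha hd h.adj₄.symm
  exact ⟨hb, fun hc => h4c (h.saturates ha hc hb hd), hd⟩

theorem saturates_of_common_neighbor {u u' p q r q' r' : V}
    (h : IsFourCycle G u p q r) (h' : IsFourCycle G u' p q' r') (hr : r = q' ∨ r = r')
    (hne : u ≠ u') (hu : u ∈ S) (hu' : u' ∈ S) (hp : p ∉ S) (hrS : r ∉ S) (hr' : r' ∉ S) :
    Saturates G S 4 ∨ Saturates G S 5 := by
  have hu'r : u' ≠ r := fun e => hrS (e ▸ hu')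
  rcases hr with rfl | rfl
  -- the 5-cycle `u p u' r' r`, resp. the 4-cycle `u p u' r`
  · exact .inr <| saturates_five_of_adj h.adj₁ h'.adj₁.symm h'.adj₄.symm h'.adj₃.symm h.adj₄
      hne (fun e => hr' (e ▸ hu)) h'.ne₂₄ h.ne₂₄ hu'r hu hu' hp hr' hrS
  · exact .inl <| saturates ⟨h.adj₁, h'.adj₁.symm, h'.adj₄.symm, h.adj₄, hne, h.ne₂₄⟩
      hu hu' hp hrS

theorem saturates_of_neighbors_mem {u u' p q r p' q' r' : V}
    (h : IsFourCycle G u p q r) (h' : IsFourCycle G u' p' q' r') (hne : u ≠ u') (hu : u ∈ S)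
    (hu' : u' ∈ S) (hpS : p ∉ S) (hrS : r ∉ S) (hp'S : p' ∉ S) (hr'S : r' ∉ S)
    (hp : p = p' ∨ p = q' ∨ p = r') (hr : r = p' ∨ r = q' ∨ r = r') :
    Saturates G S 4 ∨ Saturates G S 5 := by
  have hpr := h.ne₂₄
  rcases hp with rfl | rfl | rfl
  · exact h.saturates_of_common_neighbor h' (hr.resolve_left hpr.symm) hne hu hu' hpS hrS hr'S
  · rcases hr with rfl | hrp | rfl
    · exact h.reverse.saturates_of_common_neighbor h' (.inl rfl) hne hu hu' hrS hpS hr'S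
    · exact absurd hrp hpr.symm
    · exact h.reverse.saturates_of_common_neighbor h'.reverse (.inl rfl) hne hu hu' hrS hpS hp'S
  · refine h.saturates_of_common_neighbor h'.reverse ?_ hne hu hu' hpS hrS hp'S
    rcases hr with hr | hr | hr
    exacts [.inr hr, .inl hr, absurd hr hpr.symm]

end IsFourCycle

namespace SimpleGraph.Walk.IsCycle

theorem exists_isFourCycle_eq_toWalk {u : V} {c : G.Walk u u} (hc : c.IsCycle)
    (h4 : c.length = 4) : ∃ p q r, ∃ h : IsFourCycle G u p q r, c = h.toWalk := by
  match c, h4 with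
  | .cons h₁ (.cons h₂ (.cons h₃ (.cons h₄ .nil))), _ =>
    have hnd := hc.support_nodup
    simp only [support_cons, support_nil, List.tail_cons, List.nodup_cons, List.mem_cons,
      List.not_mem_nil, or_false, not_or] at hnd
    exact ⟨_, _, _, ⟨h₁, h₂, h₃, h₄, fun h => hnd.2.1.2 h.symm, hnd.1.2.1⟩, rfl⟩

theorem exists_isFourCycle {v u : V} {c : G.Walk v v} (hc : c.IsCycle) (h4 : c.length = 4)
    (hu : u ∈ c.support) :
    ∃ p q r, IsFourCycle G u p q r ∧ {x | x ∈ c.support} = {u, p, q, r} ∧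
      c.edges ~r [s(u, p), s(p, q), s(q, r), s(r, u)] := by
  classical
  obtain ⟨p, q, r, h, hrot⟩ :=
    (hc.rotate hu).exists_isFourCycle_eq_toWalk ((c.length_rotate u hu).trans h4)
  refine ⟨p, q, r, h, ?_, ?_⟩
  · ext x
    simp only [← c.mem_support_rotate_iff u hu, hrot, IsFourCycle.toWalk, support_cons,
      support_nil, List.mem_cons, List.not_mem_nil, or_false, Set.mem_ofPred_eq,
      Set.mem_insert_iff, Set.mem_singleton_iff]
    tauto
  · simpa [hrot, IsFourCycle.toWalk] using (c.rotate_edges u hu).symm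

theorem eq_of_mem_support_of_mem {u v x : V} {c : G.Walk v v} (hc : c.IsCycle)
    (h4 : c.length = 4) (hS : IndepSet G S) (h4c : ¬ Saturates G S 4) (hu : u ∈ S)
    (huc : u ∈ c.support) (hx : x ∈ S) (hxc : x ∈ c.support) : x = u := by
  obtain ⟨p, q, r, h, hsupp, -⟩ := hc.exists_isFourCycle h4 huc
  obtain ⟨hp, hq, hr⟩ := h.not_mem_of_not_saturates hS h4c hu
  have : x ∈ ({u, p, q, r} : Set V) := hsupp ▸ hxc
  rcases this with rfl | rfl | rfl | rfl <;> first | rfl | contradiction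

end SimpleGraph.Walk.IsCycle

theorem exists_edge_inter_support_subset (hS : IndepSet G S) (h4c : ¬ Saturates G S 4)
    (h5c : ¬ Saturates G S 5) {u u' v v' : V} (hu : u ∈ S) (hu' : u' ∈ S) (hne : u ≠ u')
    {c : G.Walk v v} {c' : G.Walk v' v'} (hc : c.IsCycle) (hc4 : c.length = 4)
    (huc : u ∈ c.support) (hc' : c'.IsCycle) (hc'4 : c'.length = 4) (huc' : u' ∈ c'.support) :
    ∃ x y, s(x, y) ∈ c.edges ∧ {x | x ∈ c.support} ∩ {x | x ∈ c'.support} ⊆ {x, y} := by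
  obtain ⟨p, q, r, h, hsupp, hedges⟩ := hc.exists_isFourCycle hc4 huc
  obtain ⟨p', q', r', h', hsupp', -⟩ := hc'.exists_isFourCycle hc'4 huc'
  obtain ⟨hpS, -, hrS⟩ := h.not_mem_of_not_saturates hS h4c hu
  obtain ⟨hp'S, -, hr'S⟩ := h'.not_mem_of_not_saturates hS h4c hu'
  have hu_c' : u ∉ c'.support := fun huc =>
    hne (hc'.eq_of_mem_support_of_mem hc'4 hS h4c hu' huc' hu huc)
  have mem_c' : ∀ x ∉ S, x ∈ c'.support → x = p' ∨ x = q' ∨ x = r' := by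
    intro x hxS hx
    rcases (hsupp' ▸ hx : x ∈ ({u', p', q', r'} : Set V)) with rfl | hx
    exacts [absurd hu' hxS, hx]
  have hI : {x | x ∈ c.support} ∩ {x | x ∈ c'.support} ⊆ {p, q, r} := by
    rintro x ⟨hx, hx'⟩
    rcases (hsupp ▸ hx : x ∈ ({u, p, q, r} : Set V)) with rfl | hx
    exacts [absurd hx' hu_c', hx]
  by_cases hp : p ∈ c'.support
  · by_cases hr : r ∈ c'.support
    · exact absurd (h.saturates_of_neighbors_mem h' hne hu hu' hpS hrS hp'S hr'S
        (mem_c' p hpS hp) (mem_c' r hrS hr)) (not_or.2 ⟨h4c, h5c⟩)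
    · refine ⟨p, q, hedges.mem_iff.2 (by simp), fun x hx => ?_⟩
      rcases hI hx with rfl | rfl | rfl
      exacts [.inl rfl, .inr rfl, absurd hx.2 hr]
  · refine ⟨q, r, hedges.mem_iff.2 (by simp), fun x hx => ?_⟩
    rcases hI hx with rfl | rfl | rfl
    exacts [absurd hx.2 hp, .inl rfl, .inr rfl]

end FourCycles

theorem Sym2.eq_of_pair_subset {α : Type*} {a b x y : α} (hab : a ≠ b)
    (h : ({a, b} : Set α) ⊆ {x, y}) : s(a, b) = s(x, y) := by
  rcases h (.inl rfl) with rfl | rfl <;> rcases h (.inr rfl) with rfl | rfl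
  exacts [absurd rfl hab, rfl, Sym2.eq_swap, absurd rfl hab]

theorem intersection_of_four_cycles_through_independent_set_general
    {V : Type} (G : SimpleGraph V)
    (S : Set V) (hS : IndepSet G S) (h4c : ¬ Saturates G S 4) (h5c : ¬ Saturates G S 5)
    (u u' : V) (hu : u ∈ S) (hu' : u' ∈ S) (hne : u ≠ u')
    (v v' : V) (c : G.Walk v v) (c' : G.Walk v' v')
    (hc : c.IsCycle) (hc4 : c.length = 4) (huc : u ∈ c.support)
    (hc' : c'.IsCycle) (hc'4 : c'.length = 4) (huc' : u' ∈ c'.support) :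
    ({x | x ∈ c.support} ∩ {x | x ∈ c'.support}).ncard ≤ 2 ∧
    (∀ x : V, x ∈ c.support → x ∈ c'.support → x ∉ S) ∧
    (∀ a b : V, a ≠ b →
      ({x | x ∈ c.support} ∩ {x | x ∈ c'.support}) = ({a, b} : Set V) →
      s(a, b) ∈ c.edges ∧ s(a, b) ∈ c'.edges) := by
  obtain ⟨x, y, hxy, hI⟩ :=
    exists_edge_inter_support_subset hS h4c h5c hu hu' hne hc hc4 huc hc' hc'4 huc'
  obtain ⟨x', y', hxy', hI'⟩ :=
    exists_edge_inter_support_subset hS h4c h5c hu' hu hne.symm hc' hc'4 huc' hc hc4 huc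
  rw [Set.inter_comm] at hI'
  refine ⟨?_, fun z hz hz' hzS => ?_, fun a b hab hab' => ?_⟩
  · exact (Set.ncard_le_ncard hI).trans (Set.ncard_insert_le _ _) |>.trans (by simp)
  · exact hne ((hc.eq_of_mem_support_of_mem hc4 hS h4c hu huc hzS hz).symm.trans
      (hc'.eq_of_mem_support_of_mem hc'4 hS h4c hu' huc' hzS hz'))
  · rw [hab'] at hI hI'
    exact ⟨Sym2.eq_of_pair_subset hab hI ▸ hxy, Sym2.eq_of_pair_subset hab hI' ▸ hxy'⟩

/-- Let `G` be a 4-connected planar triangulation, `S` an independent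
set saturating no 4-cycle and no 5-cycle. Let `u ≠ u'` in `S` and `D_u`, `D_{u'}` be
4-cycles containing `u`, `u'` respectively. Then `|V(D_u) ∩ V(D_{u'})| ≤ 2`, no vertex of
`V(D_u) ∩ V(D_{u'})` lies in `S`, and if `V(D_u) ∩ V(D_{u'}) = {a, b}` with `a ≠ b`, then
`ab ∈ E(D_u) ∩ E(D_{u'})`. -/
theorem intersection_of_four_cycles_through_independent_set
    {V : Type} [Fintype V] (G : SimpleGraph V)
    (hG : IsPlanarTriangulation G) (h4 : KConnected 4 G)
    (S : Set V) (hS : IndepSet G S) (h4c : ¬ Saturates G S 4) (h5c : ¬ Saturates G S 5)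
    (u u' : V) (hu : u ∈ S) (hu' : u' ∈ S) (hne : u ≠ u')
    (v v' : V) (c : G.Walk v v) (c' : G.Walk v' v')
    (hc : c.IsCycle) (hc4 : c.length = 4) (huc : u ∈ c.support)
    (hc' : c'.IsCycle) (hc'4 : c'.length = 4) (huc' : u' ∈ c'.support) :
    ({x | x ∈ c.support} ∩ {x | x ∈ c'.support}).ncard ≤ 2 ∧
    (∀ x : V, x ∈ c.support → x ∈ c'.support → x ∉ S) ∧
    (∀ a b : V, a ≠ b →
      ({x | x ∈ c.support} ∩ {x | x ∈ c'.support}) = ({a, b} : Set V) →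
      s(a, b) ∈ c.edges ∧ s(a, b) ∈ c'.edges) :=
  intersection_of_four_cycles_through_independent_set_general G S hS h4c h5c u u' hu hu' hne v v' c
    c' hc hc4 huc hc' hc'4 huc'
end

section
/- Let G be a 4-connected planar triangulation, let S be an independent set of vertices of degree at most 6 in G, and let S' be a maximal subset of S such that S' saturates no 4-cycle in G. Then there exist distinct vertices v, x in V(G) such that |(N(v) intersect N(x)) intersect S| >= |S|/(9|S'|). -/
open SimpleGraph

variable {V : Type}

lemma induce_connected_star (G : SimpleGraph V) (x : V) (s : Set V) (hx : x ∈ s)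
    (h : ∀ y ∈ s, y = x ∨ G.Adj x y) : (G.induce s).Connected := by
  rw [connected_iff]
  refine ⟨?_, ⟨⟨x, hx⟩⟩⟩
  have key : ∀ a : s, (G.induce s).Reachable a ⟨x, hx⟩ := by
    rintro ⟨a, ha⟩
    rcases h a ha with rfl | hadj
    · exact Reachable.refl _
    · exact Adj.reachable (hadj.symm : (G.induce s).Adj ⟨a, ha⟩ ⟨x, hx⟩)
  intro a b
  exact (key a).trans (key b).symm

lemma patternA (G : SimpleGraph V) (hT : ¬ HasMinor G (⊤ : SimpleGraph (Fin 5)))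
    (w : V)
    (x0 x1 x2 x3 : V)
    (hx0 : G.Adj w x0)
    (hx1 : G.Adj w x1)
    (hx2 : G.Adj w x2)
    (hx3 : G.Adj w x3)
    (d0_1 : x0 ≠ x1)
    (d0_2 : x0 ≠ x2)
    (d0_3 : x0 ≠ x3)
    (d1_2 : x1 ≠ x2)
    (d1_3 : x1 ≠ x3)
    (d2_3 : x2 ≠ x3)
    (Used : Sym2 V → Prop) (ap : Sym2 V → V)
    (hap : ∀ p, Used p → ∀ a b, p = s(a, b) → G.Adj (ap p) a ∧ G.Adj (ap p) b)
    (hax : ∀ p, Used p → ¬ G.Adj w (ap p) ∧ ap p ≠ w)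
    (hinj : ∀ p q, Used p → Used q → ap p = ap q → p = q)
    (u0_1 : Used s(x0, x1))
    (u0_2 : Used s(x0, x2))
    (u0_3 : Used s(x0, x3))
    (u1_2 : Used s(x1, x2))
    (u1_3 : Used s(x1, x3))
    (u2_3 : Used s(x2, x3))
    : False := by
  apply hT
  obtain ⟨jA0_1, jB0_1⟩ := hap _ u0_1 x0 x1 rfl
  obtain ⟨n0_1, m0_1⟩ := hax _ u0_1
  obtain ⟨jA0_2, jB0_2⟩ := hap _ u0_2 x0 x2 rfl
  obtain ⟨n0_2, m0_2⟩ := hax _ u0_2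
  obtain ⟨jA0_3, jB0_3⟩ := hap _ u0_3 x0 x3 rfl
  obtain ⟨n0_3, m0_3⟩ := hax _ u0_3
  obtain ⟨jA1_2, jB1_2⟩ := hap _ u1_2 x1 x2 rfl
  obtain ⟨n1_2, m1_2⟩ := hax _ u1_2
  obtain ⟨jA1_3, jB1_3⟩ := hap _ u1_3 x1 x3 rfl
  obtain ⟨n1_3, m1_3⟩ := hax _ u1_3
  obtain ⟨jA2_3, jB2_3⟩ := hap _ u2_3 x2 x3 rfl
  obtain ⟨n2_3, m2_3⟩ := hax _ u2_3
  have e0 : x0 ≠ w := fun h => G.irrefl (h ▸ hx0)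
  have e1 : x1 ≠ w := fun h => G.irrefl (h ▸ hx1)
  have e2 : x2 ≠ w := fun h => G.irrefl (h ▸ hx2)
  have e3 : x3 ≠ w := fun h => G.irrefl (h ▸ hx3)
  have ab0_1_0 : ap s(x0, x1) ≠ x0 := fun h => n0_1 (by rw [h]; exact hx0)
  have ab0_1_1 : ap s(x0, x1) ≠ x1 := fun h => n0_1 (by rw [h]; exact hx1)
  have ab0_1_2 : ap s(x0, x1) ≠ x2 := fun h => n0_1 (by rw [h]; exact hx2)
  have ab0_1_3 : ap s(x0, x1) ≠ x3 := fun h => n0_1 (by rw [h]; exact hx3)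
  have ab0_2_0 : ap s(x0, x2) ≠ x0 := fun h => n0_2 (by rw [h]; exact hx0)
  have ab0_2_1 : ap s(x0, x2) ≠ x1 := fun h => n0_2 (by rw [h]; exact hx1)
  have ab0_2_2 : ap s(x0, x2) ≠ x2 := fun h => n0_2 (by rw [h]; exact hx2)
  have ab0_2_3 : ap s(x0, x2) ≠ x3 := fun h => n0_2 (by rw [h]; exact hx3)
  have ab0_3_0 : ap s(x0, x3) ≠ x0 := fun h => n0_3 (by rw [h]; exact hx0)
  have ab0_3_1 : ap s(x0, x3) ≠ x1 := fun h => n0_3 (by rw [h]; exact hx1)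
  have ab0_3_2 : ap s(x0, x3) ≠ x2 := fun h => n0_3 (by rw [h]; exact hx2)
  have ab0_3_3 : ap s(x0, x3) ≠ x3 := fun h => n0_3 (by rw [h]; exact hx3)
  have ab1_2_0 : ap s(x1, x2) ≠ x0 := fun h => n1_2 (by rw [h]; exact hx0)
  have ab1_2_1 : ap s(x1, x2) ≠ x1 := fun h => n1_2 (by rw [h]; exact hx1)
  have ab1_2_2 : ap s(x1, x2) ≠ x2 := fun h => n1_2 (by rw [h]; exact hx2)
  have ab1_2_3 : ap s(x1, x2) ≠ x3 := fun h => n1_2 (by rw [h]; exact hx3)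
  have ab1_3_0 : ap s(x1, x3) ≠ x0 := fun h => n1_3 (by rw [h]; exact hx0)
  have ab1_3_1 : ap s(x1, x3) ≠ x1 := fun h => n1_3 (by rw [h]; exact hx1)
  have ab1_3_2 : ap s(x1, x3) ≠ x2 := fun h => n1_3 (by rw [h]; exact hx2)
  have ab1_3_3 : ap s(x1, x3) ≠ x3 := fun h => n1_3 (by rw [h]; exact hx3)
  have ab2_3_0 : ap s(x2, x3) ≠ x0 := fun h => n2_3 (by rw [h]; exact hx0)
  have ab2_3_1 : ap s(x2, x3) ≠ x1 := fun h => n2_3 (by rw [h]; exact hx1)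
  have ab2_3_2 : ap s(x2, x3) ≠ x2 := fun h => n2_3 (by rw [h]; exact hx2)
  have ab2_3_3 : ap s(x2, x3) ≠ x3 := fun h => n2_3 (by rw [h]; exact hx3)
  have s0_1_0_2 : (s(x0, x1) : Sym2 V) ≠ s(x0, x2) := by
    intro h; rw [Sym2.eq_iff] at h
    rcases h with ⟨h1, h2⟩ | ⟨h1, h2⟩
    · exact absurd h2 d1_2
    · exact absurd h1 d0_2
  have q0_1_0_2 : ap s(x0, x1) ≠ ap s(x0, x2) := fun h => s0_1_0_2 (hinj _ _ u0_1 u0_2 h)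
  have s0_1_0_3 : (s(x0, x1) : Sym2 V) ≠ s(x0, x3) := by
    intro h; rw [Sym2.eq_iff] at h
    rcases h with ⟨h1, h2⟩ | ⟨h1, h2⟩
    · exact absurd h2 d1_3
    · exact absurd h1 d0_3
  have q0_1_0_3 : ap s(x0, x1) ≠ ap s(x0, x3) := fun h => s0_1_0_3 (hinj _ _ u0_1 u0_3 h)
  have s0_1_1_2 : (s(x0, x1) : Sym2 V) ≠ s(x1, x2) := by
    intro h; rw [Sym2.eq_iff] at h
    rcases h with ⟨h1, h2⟩ | ⟨h1, h2⟩
    · exact absurd h1 d0_1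
    · exact absurd h1 d0_2
  have q0_1_1_2 : ap s(x0, x1) ≠ ap s(x1, x2) := fun h => s0_1_1_2 (hinj _ _ u0_1 u1_2 h)
  have s0_1_1_3 : (s(x0, x1) : Sym2 V) ≠ s(x1, x3) := by
    intro h; rw [Sym2.eq_iff] at h
    rcases h with ⟨h1, h2⟩ | ⟨h1, h2⟩
    · exact absurd h1 d0_1
    · exact absurd h1 d0_3
  have q0_1_1_3 : ap s(x0, x1) ≠ ap s(x1, x3) := fun h => s0_1_1_3 (hinj _ _ u0_1 u1_3 h)
  have s0_1_2_3 : (s(x0, x1) : Sym2 V) ≠ s(x2, x3) := by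
    intro h; rw [Sym2.eq_iff] at h
    rcases h with ⟨h1, h2⟩ | ⟨h1, h2⟩
    · exact absurd h1 d0_2
    · exact absurd h1 d0_3
  have q0_1_2_3 : ap s(x0, x1) ≠ ap s(x2, x3) := fun h => s0_1_2_3 (hinj _ _ u0_1 u2_3 h)
  have s0_2_0_3 : (s(x0, x2) : Sym2 V) ≠ s(x0, x3) := by
    intro h; rw [Sym2.eq_iff] at h
    rcases h with ⟨h1, h2⟩ | ⟨h1, h2⟩
    · exact absurd h2 d2_3
    · exact absurd h1 d0_3
  have q0_2_0_3 : ap s(x0, x2) ≠ ap s(x0, x3) := fun h => s0_2_0_3 (hinj _ _ u0_2 u0_3 h)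
  have s0_2_1_2 : (s(x0, x2) : Sym2 V) ≠ s(x1, x2) := by
    intro h; rw [Sym2.eq_iff] at h
    rcases h with ⟨h1, h2⟩ | ⟨h1, h2⟩
    · exact absurd h1 d0_1
    · exact absurd h1 d0_2
  have q0_2_1_2 : ap s(x0, x2) ≠ ap s(x1, x2) := fun h => s0_2_1_2 (hinj _ _ u0_2 u1_2 h)
  have s0_2_1_3 : (s(x0, x2) : Sym2 V) ≠ s(x1, x3) := by
    intro h; rw [Sym2.eq_iff] at h
    rcases h with ⟨h1, h2⟩ | ⟨h1, h2⟩
    · exact absurd h1 d0_1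
    · exact absurd h1 d0_3
  have q0_2_1_3 : ap s(x0, x2) ≠ ap s(x1, x3) := fun h => s0_2_1_3 (hinj _ _ u0_2 u1_3 h)
  have s0_2_2_3 : (s(x0, x2) : Sym2 V) ≠ s(x2, x3) := by
    intro h; rw [Sym2.eq_iff] at h
    rcases h with ⟨h1, h2⟩ | ⟨h1, h2⟩
    · exact absurd h1 d0_2
    · exact absurd h1 d0_3
  have q0_2_2_3 : ap s(x0, x2) ≠ ap s(x2, x3) := fun h => s0_2_2_3 (hinj _ _ u0_2 u2_3 h)
  have s0_3_1_2 : (s(x0, x3) : Sym2 V) ≠ s(x1, x2) := by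
    intro h; rw [Sym2.eq_iff] at h
    rcases h with ⟨h1, h2⟩ | ⟨h1, h2⟩
    · exact absurd h1 d0_1
    · exact absurd h1 d0_2
  have q0_3_1_2 : ap s(x0, x3) ≠ ap s(x1, x2) := fun h => s0_3_1_2 (hinj _ _ u0_3 u1_2 h)
  have s0_3_1_3 : (s(x0, x3) : Sym2 V) ≠ s(x1, x3) := by
    intro h; rw [Sym2.eq_iff] at h
    rcases h with ⟨h1, h2⟩ | ⟨h1, h2⟩
    · exact absurd h1 d0_1
    · exact absurd h1 d0_3
  have q0_3_1_3 : ap s(x0, x3) ≠ ap s(x1, x3) := fun h => s0_3_1_3 (hinj _ _ u0_3 u1_3 h)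
  have s0_3_2_3 : (s(x0, x3) : Sym2 V) ≠ s(x2, x3) := by
    intro h; rw [Sym2.eq_iff] at h
    rcases h with ⟨h1, h2⟩ | ⟨h1, h2⟩
    · exact absurd h1 d0_2
    · exact absurd h1 d0_3
  have q0_3_2_3 : ap s(x0, x3) ≠ ap s(x2, x3) := fun h => s0_3_2_3 (hinj _ _ u0_3 u2_3 h)
  have s1_2_1_3 : (s(x1, x2) : Sym2 V) ≠ s(x1, x3) := by
    intro h; rw [Sym2.eq_iff] at h
    rcases h with ⟨h1, h2⟩ | ⟨h1, h2⟩
    · exact absurd h2 d2_3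
    · exact absurd h1 d1_3
  have q1_2_1_3 : ap s(x1, x2) ≠ ap s(x1, x3) := fun h => s1_2_1_3 (hinj _ _ u1_2 u1_3 h)
  have s1_2_2_3 : (s(x1, x2) : Sym2 V) ≠ s(x2, x3) := by
    intro h; rw [Sym2.eq_iff] at h
    rcases h with ⟨h1, h2⟩ | ⟨h1, h2⟩
    · exact absurd h1 d1_2
    · exact absurd h1 d1_3
  have q1_2_2_3 : ap s(x1, x2) ≠ ap s(x2, x3) := fun h => s1_2_2_3 (hinj _ _ u1_2 u2_3 h)
  have s1_3_2_3 : (s(x1, x3) : Sym2 V) ≠ s(x2, x3) := by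
    intro h; rw [Sym2.eq_iff] at h
    rcases h with ⟨h1, h2⟩ | ⟨h1, h2⟩
    · exact absurd h1 d1_2
    · exact absurd h1 d1_3
  have q1_3_2_3 : ap s(x1, x3) ≠ ap s(x2, x3) := fun h => s1_3_2_3 (hinj _ _ u1_3 u2_3 h)
  set B0 : Set V := {w} with hB0
  set B1 : Set V := {x0, (ap s(x0, x1)), (ap s(x0, x2)), (ap s(x0, x3))} with hB1
  set B2 : Set V := {x1, (ap s(x1, x2)), (ap s(x1, x3))} with hB2
  set B3 : Set V := {x2, (ap s(x2, x3))} with hB3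
  set B4 : Set V := {x3} with hB4
  have NE0 : B0.Nonempty := ⟨w, by rw [hB0]; simp⟩
  have NE1 : B1.Nonempty := ⟨x0, by rw [hB1]; simp⟩
  have NE2 : B2.Nonempty := ⟨x1, by rw [hB2]; simp⟩
  have NE3 : B3.Nonempty := ⟨x2, by rw [hB3]; simp⟩
  have NE4 : B4.Nonempty := ⟨x3, by rw [hB4]; simp⟩
  have CN0 : (G.induce B0).Connected := by
    rw [hB0]
    exact induce_connected_star G w {w} rfl (fun y hy => Or.inl hy)
  have CN1 : (G.induce B1).Connected := by
    rw [hB1]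
    exact induce_connected_star G x0 {x0, (ap s(x0, x1)), (ap s(x0, x2)), (ap s(x0, x3))} (by simp) (by rintro y (rfl | rfl | rfl | rfl); exacts [Or.inl rfl, Or.inr jA0_1.symm, Or.inr jA0_2.symm, Or.inr jA0_3.symm])
  have CN2 : (G.induce B2).Connected := by
    rw [hB2]
    exact induce_connected_star G x1 {x1, (ap s(x1, x2)), (ap s(x1, x3))} (by simp) (by rintro y (rfl | rfl | rfl); exacts [Or.inl rfl, Or.inr jA1_2.symm, Or.inr jA1_3.symm])
  have CN3 : (G.induce B3).Connected := by
    rw [hB3]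
    exact induce_connected_star G x2 {x2, (ap s(x2, x3))} (by simp) (by rintro y (rfl | rfl); exacts [Or.inl rfl, Or.inr jA2_3.symm])
  have CN4 : (G.induce B4).Connected := by
    rw [hB4]
    exact induce_connected_star G x3 {x3} rfl (fun y hy => Or.inl hy)
  have D0_1 : Disjoint B0 B1 := by
    rw [hB0, hB1]
    refine Set.disjoint_left.2 ?_
    intro z hz hz'
    simp only [Set.mem_insert_iff, Set.mem_singleton_iff, Set.mem_union] at hz hz'
    rcases hz with rfl
    · rcases hz' with h | h | h | h
      exacts [absurd h (e0.symm), absurd h (m0_1.symm), absurd h (m0_2.symm), absurd h (m0_3.symm)]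
  have D0_2 : Disjoint B0 B2 := by
    rw [hB0, hB2]
    refine Set.disjoint_left.2 ?_
    intro z hz hz'
    simp only [Set.mem_insert_iff, Set.mem_singleton_iff, Set.mem_union] at hz hz'
    rcases hz with rfl
    · rcases hz' with h | h | h
      exacts [absurd h (e1.symm), absurd h (m1_2.symm), absurd h (m1_3.symm)]
  have D0_3 : Disjoint B0 B3 := by
    rw [hB0, hB3]
    refine Set.disjoint_left.2 ?_
    intro z hz hz'
    simp only [Set.mem_insert_iff, Set.mem_singleton_iff, Set.mem_union] at hz hz'
    rcases hz with rfl
    · rcases hz' with h | h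
      exacts [absurd h (e2.symm), absurd h (m2_3.symm)]
  have D0_4 : Disjoint B0 B4 := by
    rw [hB0, hB4]
    refine Set.disjoint_left.2 ?_
    intro z hz hz'
    simp only [Set.mem_insert_iff, Set.mem_singleton_iff, Set.mem_union] at hz hz'
    rcases hz with rfl
    · exact absurd hz' (e3.symm)
  have D1_2 : Disjoint B1 B2 := by
    rw [hB1, hB2]
    refine Set.disjoint_left.2 ?_
    intro z hz hz'
    simp only [Set.mem_insert_iff, Set.mem_singleton_iff, Set.mem_union] at hz hz'
    rcases hz with rfl | rfl | rfl | rfl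
    · rcases hz' with h | h | h
      exacts [absurd h (d0_1), absurd h ((ab1_2_0).symm), absurd h ((ab1_3_0).symm)]
    · rcases hz' with h | h | h
      exacts [absurd h (ab0_1_1), absurd h (q0_1_1_2), absurd h (q0_1_1_3)]
    · rcases hz' with h | h | h
      exacts [absurd h (ab0_2_1), absurd h (q0_2_1_2), absurd h (q0_2_1_3)]
    · rcases hz' with h | h | h
      exacts [absurd h (ab0_3_1), absurd h (q0_3_1_2), absurd h (q0_3_1_3)]
  have D1_3 : Disjoint B1 B3 := by
    rw [hB1, hB3]
    refine Set.disjoint_left.2 ?_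
    intro z hz hz'
    simp only [Set.mem_insert_iff, Set.mem_singleton_iff, Set.mem_union] at hz hz'
    rcases hz with rfl | rfl | rfl | rfl
    · rcases hz' with h | h
      exacts [absurd h (d0_2), absurd h ((ab2_3_0).symm)]
    · rcases hz' with h | h
      exacts [absurd h (ab0_1_2), absurd h (q0_1_2_3)]
    · rcases hz' with h | h
      exacts [absurd h (ab0_2_2), absurd h (q0_2_2_3)]
    · rcases hz' with h | h
      exacts [absurd h (ab0_3_2), absurd h (q0_3_2_3)]
  have D1_4 : Disjoint B1 B4 := by
    rw [hB1, hB4]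
    refine Set.disjoint_left.2 ?_
    intro z hz hz'
    simp only [Set.mem_insert_iff, Set.mem_singleton_iff, Set.mem_union] at hz hz'
    rcases hz with rfl | rfl | rfl | rfl
    · exact absurd hz' (d0_3)
    · exact absurd hz' (ab0_1_3)
    · exact absurd hz' (ab0_2_3)
    · exact absurd hz' (ab0_3_3)
  have D2_3 : Disjoint B2 B3 := by
    rw [hB2, hB3]
    refine Set.disjoint_left.2 ?_
    intro z hz hz'
    simp only [Set.mem_insert_iff, Set.mem_singleton_iff, Set.mem_union] at hz hz'
    rcases hz with rfl | rfl | rfl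
    · rcases hz' with h | h
      exacts [absurd h (d1_2), absurd h ((ab2_3_1).symm)]
    · rcases hz' with h | h
      exacts [absurd h (ab1_2_2), absurd h (q1_2_2_3)]
    · rcases hz' with h | h
      exacts [absurd h (ab1_3_2), absurd h (q1_3_2_3)]
  have D2_4 : Disjoint B2 B4 := by
    rw [hB2, hB4]
    refine Set.disjoint_left.2 ?_
    intro z hz hz'
    simp only [Set.mem_insert_iff, Set.mem_singleton_iff, Set.mem_union] at hz hz'
    rcases hz with rfl | rfl | rfl
    · exact absurd hz' (d1_3)
    · exact absurd hz' (ab1_2_3)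
    · exact absurd hz' (ab1_3_3)
  have D3_4 : Disjoint B3 B4 := by
    rw [hB3, hB4]
    refine Set.disjoint_left.2 ?_
    intro z hz hz'
    simp only [Set.mem_insert_iff, Set.mem_singleton_iff, Set.mem_union] at hz hz'
    rcases hz with rfl | rfl
    · exact absurd hz' (d2_3)
    · exact absurd hz' (ab2_3_3)
  have Esymm : ∀ (s t : Set V), (∃ v₁ ∈ s, ∃ v₂ ∈ t, G.Adj v₁ v₂) → ∃ v₁ ∈ t, ∃ v₂ ∈ s, G.Adj v₁ v₂ := fun s t ⟨a, ha, b, hb, hab⟩ => ⟨b, hb, a, ha, hab.symm⟩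
  have E0_1 : ∃ v₁ ∈ B0, ∃ v₂ ∈ B1, G.Adj v₁ v₂ := ⟨w, by rw [hB0]; simp, x0, by rw [hB1]; simp, hx0⟩
  have E0_2 : ∃ v₁ ∈ B0, ∃ v₂ ∈ B2, G.Adj v₁ v₂ := ⟨w, by rw [hB0]; simp, x1, by rw [hB2]; simp, hx1⟩
  have E0_3 : ∃ v₁ ∈ B0, ∃ v₂ ∈ B3, G.Adj v₁ v₂ := ⟨w, by rw [hB0]; simp, x2, by rw [hB3]; simp, hx2⟩
  have E0_4 : ∃ v₁ ∈ B0, ∃ v₂ ∈ B4, G.Adj v₁ v₂ := ⟨w, by rw [hB0]; simp, x3, by rw [hB4]; simp, hx3⟩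
  have E1_2 : ∃ v₁ ∈ B1, ∃ v₂ ∈ B2, G.Adj v₁ v₂ := ⟨(ap s(x0, x1)), by rw [hB1]; simp, x1, by rw [hB2]; simp, jB0_1⟩
  have E1_3 : ∃ v₁ ∈ B1, ∃ v₂ ∈ B3, G.Adj v₁ v₂ := ⟨(ap s(x0, x2)), by rw [hB1]; simp, x2, by rw [hB3]; simp, jB0_2⟩
  have E1_4 : ∃ v₁ ∈ B1, ∃ v₂ ∈ B4, G.Adj v₁ v₂ := ⟨(ap s(x0, x3)), by rw [hB1]; simp, x3, by rw [hB4]; simp, jB0_3⟩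
  have E2_3 : ∃ v₁ ∈ B2, ∃ v₂ ∈ B3, G.Adj v₁ v₂ := ⟨(ap s(x1, x2)), by rw [hB2]; simp, x2, by rw [hB3]; simp, jB1_2⟩
  have E2_4 : ∃ v₁ ∈ B2, ∃ v₂ ∈ B4, G.Adj v₁ v₂ := ⟨(ap s(x1, x3)), by rw [hB2]; simp, x3, by rw [hB4]; simp, jB1_3⟩
  have E3_4 : ∃ v₁ ∈ B3, ∃ v₂ ∈ B4, G.Adj v₁ v₂ := ⟨(ap s(x2, x3)), by rw [hB3]; simp, x3, by rw [hB4]; simp, jB2_3⟩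
  refine ⟨![B0, B1, B2, B3, B4], ?_, ?_, ?_, ?_⟩
  · intro i; fin_cases i
    exacts [NE0, NE1, NE2, NE3, NE4]
  · intro i; fin_cases i
    exacts [CN0, CN1, CN2, CN3, CN4]
  · intro i j hij; fin_cases i <;> fin_cases j
    exacts [absurd rfl hij, D0_1, D0_2, D0_3, D0_4, D0_1.symm, absurd rfl hij, D1_2, D1_3, D1_4, D0_2.symm, D1_2.symm, absurd rfl hij, D2_3, D2_4, D0_3.symm, D1_3.symm, D2_3.symm, absurd rfl hij, D3_4, D0_4.symm, D1_4.symm, D2_4.symm, D3_4.symm, absurd rfl hij]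
  · intro i j hadj; fin_cases i <;> fin_cases j
    exacts [absurd rfl hadj.ne, E0_1, E0_2, E0_3, E0_4, Esymm _ _ E0_1, absurd rfl hadj.ne, E1_2, E1_3, E1_4, Esymm _ _ E0_2, Esymm _ _ E1_2, absurd rfl hadj.ne, E2_3, E2_4, Esymm _ _ E0_3, Esymm _ _ E1_3, Esymm _ _ E2_3, absurd rfl hadj.ne, E3_4, Esymm _ _ E0_4, Esymm _ _ E1_4, Esymm _ _ E2_4, Esymm _ _ E3_4, absurd rfl hadj.ne]

lemma patternB (G : SimpleGraph V) (hT : ¬ HasMinor G (completeBipartiteGraph (Fin 3) (Fin 3)))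
    (w : V)
    (x0 x1 x2 x3 x4 : V)
    (hx0 : G.Adj w x0)
    (hx1 : G.Adj w x1)
    (hx2 : G.Adj w x2)
    (hx3 : G.Adj w x3)
    (hx4 : G.Adj w x4)
    (d0_1 : x0 ≠ x1)
    (d0_2 : x0 ≠ x2)
    (d0_3 : x0 ≠ x3)
    (d0_4 : x0 ≠ x4)
    (d1_2 : x1 ≠ x2)
    (d1_3 : x1 ≠ x3)
    (d1_4 : x1 ≠ x4)
    (d2_3 : x2 ≠ x3)
    (d2_4 : x2 ≠ x4)
    (d3_4 : x3 ≠ x4)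
    (Used : Sym2 V → Prop) (ap : Sym2 V → V)
    (hap : ∀ p, Used p → ∀ a b, p = s(a, b) → G.Adj (ap p) a ∧ G.Adj (ap p) b)
    (hax : ∀ p, Used p → ¬ G.Adj w (ap p) ∧ ap p ≠ w)
    (hinj : ∀ p q, Used p → Used q → ap p = ap q → p = q)
    (u0_2 : Used s(x0, x2))
    (u0_3 : Used s(x0, x3))
    (u0_4 : Used s(x0, x4))
    (u1_2 : Used s(x1, x2))
    (u1_3 : Used s(x1, x3))
    (u1_4 : Used s(x1, x4))
    : False := by
  apply hT
  obtain ⟨jA0_2, jB0_2⟩ := hap _ u0_2 x0 x2 rfl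
  obtain ⟨n0_2, m0_2⟩ := hax _ u0_2
  obtain ⟨jA0_3, jB0_3⟩ := hap _ u0_3 x0 x3 rfl
  obtain ⟨n0_3, m0_3⟩ := hax _ u0_3
  obtain ⟨jA0_4, jB0_4⟩ := hap _ u0_4 x0 x4 rfl
  obtain ⟨n0_4, m0_4⟩ := hax _ u0_4
  obtain ⟨jA1_2, jB1_2⟩ := hap _ u1_2 x1 x2 rfl
  obtain ⟨n1_2, m1_2⟩ := hax _ u1_2
  obtain ⟨jA1_3, jB1_3⟩ := hap _ u1_3 x1 x3 rfl
  obtain ⟨n1_3, m1_3⟩ := hax _ u1_3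
  obtain ⟨jA1_4, jB1_4⟩ := hap _ u1_4 x1 x4 rfl
  obtain ⟨n1_4, m1_4⟩ := hax _ u1_4
  have e0 : x0 ≠ w := fun h => G.irrefl (h ▸ hx0)
  have e1 : x1 ≠ w := fun h => G.irrefl (h ▸ hx1)
  have e2 : x2 ≠ w := fun h => G.irrefl (h ▸ hx2)
  have e3 : x3 ≠ w := fun h => G.irrefl (h ▸ hx3)
  have e4 : x4 ≠ w := fun h => G.irrefl (h ▸ hx4)
  have ab0_2_0 : ap s(x0, x2) ≠ x0 := fun h => n0_2 (by rw [h]; exact hx0)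
  have ab0_2_1 : ap s(x0, x2) ≠ x1 := fun h => n0_2 (by rw [h]; exact hx1)
  have ab0_2_2 : ap s(x0, x2) ≠ x2 := fun h => n0_2 (by rw [h]; exact hx2)
  have ab0_2_3 : ap s(x0, x2) ≠ x3 := fun h => n0_2 (by rw [h]; exact hx3)
  have ab0_2_4 : ap s(x0, x2) ≠ x4 := fun h => n0_2 (by rw [h]; exact hx4)
  have ab0_3_0 : ap s(x0, x3) ≠ x0 := fun h => n0_3 (by rw [h]; exact hx0)
  have ab0_3_1 : ap s(x0, x3) ≠ x1 := fun h => n0_3 (by rw [h]; exact hx1)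
  have ab0_3_2 : ap s(x0, x3) ≠ x2 := fun h => n0_3 (by rw [h]; exact hx2)
  have ab0_3_3 : ap s(x0, x3) ≠ x3 := fun h => n0_3 (by rw [h]; exact hx3)
  have ab0_3_4 : ap s(x0, x3) ≠ x4 := fun h => n0_3 (by rw [h]; exact hx4)
  have ab0_4_0 : ap s(x0, x4) ≠ x0 := fun h => n0_4 (by rw [h]; exact hx0)
  have ab0_4_1 : ap s(x0, x4) ≠ x1 := fun h => n0_4 (by rw [h]; exact hx1)
  have ab0_4_2 : ap s(x0, x4) ≠ x2 := fun h => n0_4 (by rw [h]; exact hx2)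
  have ab0_4_3 : ap s(x0, x4) ≠ x3 := fun h => n0_4 (by rw [h]; exact hx3)
  have ab0_4_4 : ap s(x0, x4) ≠ x4 := fun h => n0_4 (by rw [h]; exact hx4)
  have ab1_2_0 : ap s(x1, x2) ≠ x0 := fun h => n1_2 (by rw [h]; exact hx0)
  have ab1_2_1 : ap s(x1, x2) ≠ x1 := fun h => n1_2 (by rw [h]; exact hx1)
  have ab1_2_2 : ap s(x1, x2) ≠ x2 := fun h => n1_2 (by rw [h]; exact hx2)
  have ab1_2_3 : ap s(x1, x2) ≠ x3 := fun h => n1_2 (by rw [h]; exact hx3)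
  have ab1_2_4 : ap s(x1, x2) ≠ x4 := fun h => n1_2 (by rw [h]; exact hx4)
  have ab1_3_0 : ap s(x1, x3) ≠ x0 := fun h => n1_3 (by rw [h]; exact hx0)
  have ab1_3_1 : ap s(x1, x3) ≠ x1 := fun h => n1_3 (by rw [h]; exact hx1)
  have ab1_3_2 : ap s(x1, x3) ≠ x2 := fun h => n1_3 (by rw [h]; exact hx2)
  have ab1_3_3 : ap s(x1, x3) ≠ x3 := fun h => n1_3 (by rw [h]; exact hx3)
  have ab1_3_4 : ap s(x1, x3) ≠ x4 := fun h => n1_3 (by rw [h]; exact hx4)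
  have ab1_4_0 : ap s(x1, x4) ≠ x0 := fun h => n1_4 (by rw [h]; exact hx0)
  have ab1_4_1 : ap s(x1, x4) ≠ x1 := fun h => n1_4 (by rw [h]; exact hx1)
  have ab1_4_2 : ap s(x1, x4) ≠ x2 := fun h => n1_4 (by rw [h]; exact hx2)
  have ab1_4_3 : ap s(x1, x4) ≠ x3 := fun h => n1_4 (by rw [h]; exact hx3)
  have ab1_4_4 : ap s(x1, x4) ≠ x4 := fun h => n1_4 (by rw [h]; exact hx4)
  have s0_2_0_3 : (s(x0, x2) : Sym2 V) ≠ s(x0, x3) := by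
    intro h; rw [Sym2.eq_iff] at h
    rcases h with ⟨h1, h2⟩ | ⟨h1, h2⟩
    · exact absurd h2 d2_3
    · exact absurd h1 d0_3
  have q0_2_0_3 : ap s(x0, x2) ≠ ap s(x0, x3) := fun h => s0_2_0_3 (hinj _ _ u0_2 u0_3 h)
  have s0_2_0_4 : (s(x0, x2) : Sym2 V) ≠ s(x0, x4) := by
    intro h; rw [Sym2.eq_iff] at h
    rcases h with ⟨h1, h2⟩ | ⟨h1, h2⟩
    · exact absurd h2 d2_4
    · exact absurd h1 d0_4
  have q0_2_0_4 : ap s(x0, x2) ≠ ap s(x0, x4) := fun h => s0_2_0_4 (hinj _ _ u0_2 u0_4 h)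
  have s0_2_1_2 : (s(x0, x2) : Sym2 V) ≠ s(x1, x2) := by
    intro h; rw [Sym2.eq_iff] at h
    rcases h with ⟨h1, h2⟩ | ⟨h1, h2⟩
    · exact absurd h1 d0_1
    · exact absurd h1 d0_2
  have q0_2_1_2 : ap s(x0, x2) ≠ ap s(x1, x2) := fun h => s0_2_1_2 (hinj _ _ u0_2 u1_2 h)
  have s0_2_1_3 : (s(x0, x2) : Sym2 V) ≠ s(x1, x3) := by
    intro h; rw [Sym2.eq_iff] at h
    rcases h with ⟨h1, h2⟩ | ⟨h1, h2⟩
    · exact absurd h1 d0_1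
    · exact absurd h1 d0_3
  have q0_2_1_3 : ap s(x0, x2) ≠ ap s(x1, x3) := fun h => s0_2_1_3 (hinj _ _ u0_2 u1_3 h)
  have s0_2_1_4 : (s(x0, x2) : Sym2 V) ≠ s(x1, x4) := by
    intro h; rw [Sym2.eq_iff] at h
    rcases h with ⟨h1, h2⟩ | ⟨h1, h2⟩
    · exact absurd h1 d0_1
    · exact absurd h1 d0_4
  have q0_2_1_4 : ap s(x0, x2) ≠ ap s(x1, x4) := fun h => s0_2_1_4 (hinj _ _ u0_2 u1_4 h)
  have s0_3_0_4 : (s(x0, x3) : Sym2 V) ≠ s(x0, x4) := by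
    intro h; rw [Sym2.eq_iff] at h
    rcases h with ⟨h1, h2⟩ | ⟨h1, h2⟩
    · exact absurd h2 d3_4
    · exact absurd h1 d0_4
  have q0_3_0_4 : ap s(x0, x3) ≠ ap s(x0, x4) := fun h => s0_3_0_4 (hinj _ _ u0_3 u0_4 h)
  have s0_3_1_2 : (s(x0, x3) : Sym2 V) ≠ s(x1, x2) := by
    intro h; rw [Sym2.eq_iff] at h
    rcases h with ⟨h1, h2⟩ | ⟨h1, h2⟩
    · exact absurd h1 d0_1
    · exact absurd h1 d0_2
  have q0_3_1_2 : ap s(x0, x3) ≠ ap s(x1, x2) := fun h => s0_3_1_2 (hinj _ _ u0_3 u1_2 h)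
  have s0_3_1_3 : (s(x0, x3) : Sym2 V) ≠ s(x1, x3) := by
    intro h; rw [Sym2.eq_iff] at h
    rcases h with ⟨h1, h2⟩ | ⟨h1, h2⟩
    · exact absurd h1 d0_1
    · exact absurd h1 d0_3
  have q0_3_1_3 : ap s(x0, x3) ≠ ap s(x1, x3) := fun h => s0_3_1_3 (hinj _ _ u0_3 u1_3 h)
  have s0_3_1_4 : (s(x0, x3) : Sym2 V) ≠ s(x1, x4) := by
    intro h; rw [Sym2.eq_iff] at h
    rcases h with ⟨h1, h2⟩ | ⟨h1, h2⟩
    · exact absurd h1 d0_1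
    · exact absurd h1 d0_4
  have q0_3_1_4 : ap s(x0, x3) ≠ ap s(x1, x4) := fun h => s0_3_1_4 (hinj _ _ u0_3 u1_4 h)
  have s0_4_1_2 : (s(x0, x4) : Sym2 V) ≠ s(x1, x2) := by
    intro h; rw [Sym2.eq_iff] at h
    rcases h with ⟨h1, h2⟩ | ⟨h1, h2⟩
    · exact absurd h1 d0_1
    · exact absurd h1 d0_2
  have q0_4_1_2 : ap s(x0, x4) ≠ ap s(x1, x2) := fun h => s0_4_1_2 (hinj _ _ u0_4 u1_2 h)
  have s0_4_1_3 : (s(x0, x4) : Sym2 V) ≠ s(x1, x3) := by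
    intro h; rw [Sym2.eq_iff] at h
    rcases h with ⟨h1, h2⟩ | ⟨h1, h2⟩
    · exact absurd h1 d0_1
    · exact absurd h1 d0_3
  have q0_4_1_3 : ap s(x0, x4) ≠ ap s(x1, x3) := fun h => s0_4_1_3 (hinj _ _ u0_4 u1_3 h)
  have s0_4_1_4 : (s(x0, x4) : Sym2 V) ≠ s(x1, x4) := by
    intro h; rw [Sym2.eq_iff] at h
    rcases h with ⟨h1, h2⟩ | ⟨h1, h2⟩
    · exact absurd h1 d0_1
    · exact absurd h1 d0_4
  have q0_4_1_4 : ap s(x0, x4) ≠ ap s(x1, x4) := fun h => s0_4_1_4 (hinj _ _ u0_4 u1_4 h)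
  have s1_2_1_3 : (s(x1, x2) : Sym2 V) ≠ s(x1, x3) := by
    intro h; rw [Sym2.eq_iff] at h
    rcases h with ⟨h1, h2⟩ | ⟨h1, h2⟩
    · exact absurd h2 d2_3
    · exact absurd h1 d1_3
  have q1_2_1_3 : ap s(x1, x2) ≠ ap s(x1, x3) := fun h => s1_2_1_3 (hinj _ _ u1_2 u1_3 h)
  have s1_2_1_4 : (s(x1, x2) : Sym2 V) ≠ s(x1, x4) := by
    intro h; rw [Sym2.eq_iff] at h
    rcases h with ⟨h1, h2⟩ | ⟨h1, h2⟩
    · exact absurd h2 d2_4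
    · exact absurd h1 d1_4
  have q1_2_1_4 : ap s(x1, x2) ≠ ap s(x1, x4) := fun h => s1_2_1_4 (hinj _ _ u1_2 u1_4 h)
  have s1_3_1_4 : (s(x1, x3) : Sym2 V) ≠ s(x1, x4) := by
    intro h; rw [Sym2.eq_iff] at h
    rcases h with ⟨h1, h2⟩ | ⟨h1, h2⟩
    · exact absurd h2 d3_4
    · exact absurd h1 d1_4
  have q1_3_1_4 : ap s(x1, x3) ≠ ap s(x1, x4) := fun h => s1_3_1_4 (hinj _ _ u1_3 u1_4 h)
  set B0 : Set V := {w} with hB0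
  set B1 : Set V := {x0, (ap s(x0, x2)), (ap s(x0, x3)), (ap s(x0, x4))} with hB1
  set B2 : Set V := {x1, (ap s(x1, x2)), (ap s(x1, x3)), (ap s(x1, x4))} with hB2
  set B3 : Set V := {x2} with hB3
  set B4 : Set V := {x3} with hB4
  set B5 : Set V := {x4} with hB5
  have NE0 : B0.Nonempty := ⟨w, by rw [hB0]; simp⟩
  have NE1 : B1.Nonempty := ⟨x0, by rw [hB1]; simp⟩
  have NE2 : B2.Nonempty := ⟨x1, by rw [hB2]; simp⟩
  have NE3 : B3.Nonempty := ⟨x2, by rw [hB3]; simp⟩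
  have NE4 : B4.Nonempty := ⟨x3, by rw [hB4]; simp⟩
  have NE5 : B5.Nonempty := ⟨x4, by rw [hB5]; simp⟩
  have CN0 : (G.induce B0).Connected := by
    rw [hB0]
    exact induce_connected_star G w {w} rfl (fun y hy => Or.inl hy)
  have CN1 : (G.induce B1).Connected := by
    rw [hB1]
    exact induce_connected_star G x0 {x0, (ap s(x0, x2)), (ap s(x0, x3)), (ap s(x0, x4))} (by simp) (by rintro y (rfl | rfl | rfl | rfl); exacts [Or.inl rfl, Or.inr jA0_2.symm, Or.inr jA0_3.symm, Or.inr jA0_4.symm])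
  have CN2 : (G.induce B2).Connected := by
    rw [hB2]
    exact induce_connected_star G x1 {x1, (ap s(x1, x2)), (ap s(x1, x3)), (ap s(x1, x4))} (by simp) (by rintro y (rfl | rfl | rfl | rfl); exacts [Or.inl rfl, Or.inr jA1_2.symm, Or.inr jA1_3.symm, Or.inr jA1_4.symm])
  have CN3 : (G.induce B3).Connected := by
    rw [hB3]
    exact induce_connected_star G x2 {x2} rfl (fun y hy => Or.inl hy)
  have CN4 : (G.induce B4).Connected := by
    rw [hB4]
    exact induce_connected_star G x3 {x3} rfl (fun y hy => Or.inl hy)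
  have CN5 : (G.induce B5).Connected := by
    rw [hB5]
    exact induce_connected_star G x4 {x4} rfl (fun y hy => Or.inl hy)
  have D0_1 : Disjoint B0 B1 := by
    rw [hB0, hB1]
    refine Set.disjoint_left.2 ?_
    intro z hz hz'
    simp only [Set.mem_insert_iff, Set.mem_singleton_iff, Set.mem_union] at hz hz'
    rcases hz with rfl
    · rcases hz' with h | h | h | h
      exacts [absurd h (e0.symm), absurd h (m0_2.symm), absurd h (m0_3.symm), absurd h (m0_4.symm)]
  have D0_2 : Disjoint B0 B2 := by
    rw [hB0, hB2]
    refine Set.disjoint_left.2 ?_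
    intro z hz hz'
    simp only [Set.mem_insert_iff, Set.mem_singleton_iff, Set.mem_union] at hz hz'
    rcases hz with rfl
    · rcases hz' with h | h | h | h
      exacts [absurd h (e1.symm), absurd h (m1_2.symm), absurd h (m1_3.symm), absurd h (m1_4.symm)]
  have D0_3 : Disjoint B0 B3 := by
    rw [hB0, hB3]
    refine Set.disjoint_left.2 ?_
    intro z hz hz'
    simp only [Set.mem_insert_iff, Set.mem_singleton_iff, Set.mem_union] at hz hz'
    rcases hz with rfl
    · exact absurd hz' (e2.symm)
  have D0_4 : Disjoint B0 B4 := by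
    rw [hB0, hB4]
    refine Set.disjoint_left.2 ?_
    intro z hz hz'
    simp only [Set.mem_insert_iff, Set.mem_singleton_iff, Set.mem_union] at hz hz'
    rcases hz with rfl
    · exact absurd hz' (e3.symm)
  have D0_5 : Disjoint B0 B5 := by
    rw [hB0, hB5]
    refine Set.disjoint_left.2 ?_
    intro z hz hz'
    simp only [Set.mem_insert_iff, Set.mem_singleton_iff, Set.mem_union] at hz hz'
    rcases hz with rfl
    · exact absurd hz' (e4.symm)
  have D1_2 : Disjoint B1 B2 := by
    rw [hB1, hB2]
    refine Set.disjoint_left.2 ?_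
    intro z hz hz'
    simp only [Set.mem_insert_iff, Set.mem_singleton_iff, Set.mem_union] at hz hz'
    rcases hz with rfl | rfl | rfl | rfl
    · rcases hz' with h | h | h | h
      exacts [absurd h (d0_1), absurd h ((ab1_2_0).symm), absurd h ((ab1_3_0).symm), absurd h ((ab1_4_0).symm)]
    · rcases hz' with h | h | h | h
      exacts [absurd h (ab0_2_1), absurd h (q0_2_1_2), absurd h (q0_2_1_3), absurd h (q0_2_1_4)]
    · rcases hz' with h | h | h | h
      exacts [absurd h (ab0_3_1), absurd h (q0_3_1_2), absurd h (q0_3_1_3), absurd h (q0_3_1_4)]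
    · rcases hz' with h | h | h | h
      exacts [absurd h (ab0_4_1), absurd h (q0_4_1_2), absurd h (q0_4_1_3), absurd h (q0_4_1_4)]
  have D1_3 : Disjoint B1 B3 := by
    rw [hB1, hB3]
    refine Set.disjoint_left.2 ?_
    intro z hz hz'
    simp only [Set.mem_insert_iff, Set.mem_singleton_iff, Set.mem_union] at hz hz'
    rcases hz with rfl | rfl | rfl | rfl
    · exact absurd hz' (d0_2)
    · exact absurd hz' (ab0_2_2)
    · exact absurd hz' (ab0_3_2)
    · exact absurd hz' (ab0_4_2)
  have D1_4 : Disjoint B1 B4 := by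
    rw [hB1, hB4]
    refine Set.disjoint_left.2 ?_
    intro z hz hz'
    simp only [Set.mem_insert_iff, Set.mem_singleton_iff, Set.mem_union] at hz hz'
    rcases hz with rfl | rfl | rfl | rfl
    · exact absurd hz' (d0_3)
    · exact absurd hz' (ab0_2_3)
    · exact absurd hz' (ab0_3_3)
    · exact absurd hz' (ab0_4_3)
  have D1_5 : Disjoint B1 B5 := by
    rw [hB1, hB5]
    refine Set.disjoint_left.2 ?_
    intro z hz hz'
    simp only [Set.mem_insert_iff, Set.mem_singleton_iff, Set.mem_union] at hz hz'
    rcases hz with rfl | rfl | rfl | rfl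
    · exact absurd hz' (d0_4)
    · exact absurd hz' (ab0_2_4)
    · exact absurd hz' (ab0_3_4)
    · exact absurd hz' (ab0_4_4)
  have D2_3 : Disjoint B2 B3 := by
    rw [hB2, hB3]
    refine Set.disjoint_left.2 ?_
    intro z hz hz'
    simp only [Set.mem_insert_iff, Set.mem_singleton_iff, Set.mem_union] at hz hz'
    rcases hz with rfl | rfl | rfl | rfl
    · exact absurd hz' (d1_2)
    · exact absurd hz' (ab1_2_2)
    · exact absurd hz' (ab1_3_2)
    · exact absurd hz' (ab1_4_2)
  have D2_4 : Disjoint B2 B4 := by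
    rw [hB2, hB4]
    refine Set.disjoint_left.2 ?_
    intro z hz hz'
    simp only [Set.mem_insert_iff, Set.mem_singleton_iff, Set.mem_union] at hz hz'
    rcases hz with rfl | rfl | rfl | rfl
    · exact absurd hz' (d1_3)
    · exact absurd hz' (ab1_2_3)
    · exact absurd hz' (ab1_3_3)
    · exact absurd hz' (ab1_4_3)
  have D2_5 : Disjoint B2 B5 := by
    rw [hB2, hB5]
    refine Set.disjoint_left.2 ?_
    intro z hz hz'
    simp only [Set.mem_insert_iff, Set.mem_singleton_iff, Set.mem_union] at hz hz'
    rcases hz with rfl | rfl | rfl | rfl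
    · exact absurd hz' (d1_4)
    · exact absurd hz' (ab1_2_4)
    · exact absurd hz' (ab1_3_4)
    · exact absurd hz' (ab1_4_4)
  have D3_4 : Disjoint B3 B4 := by
    rw [hB3, hB4]
    refine Set.disjoint_left.2 ?_
    intro z hz hz'
    simp only [Set.mem_insert_iff, Set.mem_singleton_iff, Set.mem_union] at hz hz'
    rcases hz with rfl
    · exact absurd hz' (d2_3)
  have D3_5 : Disjoint B3 B5 := by
    rw [hB3, hB5]
    refine Set.disjoint_left.2 ?_
    intro z hz hz'
    simp only [Set.mem_insert_iff, Set.mem_singleton_iff, Set.mem_union] at hz hz'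
    rcases hz with rfl
    · exact absurd hz' (d2_4)
  have D4_5 : Disjoint B4 B5 := by
    rw [hB4, hB5]
    refine Set.disjoint_left.2 ?_
    intro z hz hz'
    simp only [Set.mem_insert_iff, Set.mem_singleton_iff, Set.mem_union] at hz hz'
    rcases hz with rfl
    · exact absurd hz' (d3_4)
  have Esymm : ∀ (s t : Set V), (∃ v₁ ∈ s, ∃ v₂ ∈ t, G.Adj v₁ v₂) → ∃ v₁ ∈ t, ∃ v₂ ∈ s, G.Adj v₁ v₂ := fun s t ⟨a, ha, b, hb, hab⟩ => ⟨b, hb, a, ha, hab.symm⟩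
  have E0_3 : ∃ v₁ ∈ B0, ∃ v₂ ∈ B3, G.Adj v₁ v₂ := ⟨w, by rw [hB0]; simp, x2, by rw [hB3]; simp, hx2⟩
  have E0_4 : ∃ v₁ ∈ B0, ∃ v₂ ∈ B4, G.Adj v₁ v₂ := ⟨w, by rw [hB0]; simp, x3, by rw [hB4]; simp, hx3⟩
  have E0_5 : ∃ v₁ ∈ B0, ∃ v₂ ∈ B5, G.Adj v₁ v₂ := ⟨w, by rw [hB0]; simp, x4, by rw [hB5]; simp, hx4⟩
  have E1_3 : ∃ v₁ ∈ B1, ∃ v₂ ∈ B3, G.Adj v₁ v₂ := ⟨(ap s(x0, x2)), by rw [hB1]; simp, x2, by rw [hB3]; simp, jB0_2⟩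
  have E1_4 : ∃ v₁ ∈ B1, ∃ v₂ ∈ B4, G.Adj v₁ v₂ := ⟨(ap s(x0, x3)), by rw [hB1]; simp, x3, by rw [hB4]; simp, jB0_3⟩
  have E1_5 : ∃ v₁ ∈ B1, ∃ v₂ ∈ B5, G.Adj v₁ v₂ := ⟨(ap s(x0, x4)), by rw [hB1]; simp, x4, by rw [hB5]; simp, jB0_4⟩
  have E2_3 : ∃ v₁ ∈ B2, ∃ v₂ ∈ B3, G.Adj v₁ v₂ := ⟨(ap s(x1, x2)), by rw [hB2]; simp, x2, by rw [hB3]; simp, jB1_2⟩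
  have E2_4 : ∃ v₁ ∈ B2, ∃ v₂ ∈ B4, G.Adj v₁ v₂ := ⟨(ap s(x1, x3)), by rw [hB2]; simp, x3, by rw [hB4]; simp, jB1_3⟩
  have E2_5 : ∃ v₁ ∈ B2, ∃ v₂ ∈ B5, G.Adj v₁ v₂ := ⟨(ap s(x1, x4)), by rw [hB2]; simp, x4, by rw [hB5]; simp, jB1_4⟩
  refine ⟨Sum.elim ![B0, B1, B2] ![B3, B4, B5], ?_, ?_, ?_, ?_⟩
  · intro z; rcases z with i | i <;> fin_cases i
    exacts [NE0, NE1, NE2, NE3, NE4, NE5]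
  · intro z; rcases z with i | i <;> fin_cases i
    exacts [CN0, CN1, CN2, CN3, CN4, CN5]
  · intro z1 z2 hne; rcases z1 with i | i <;> rcases z2 with j | j <;> fin_cases i <;> fin_cases j
    exacts [absurd rfl hne, D0_1, D0_2, D0_1.symm, absurd rfl hne, D1_2, D0_2.symm, D1_2.symm, absurd rfl hne, D0_3, D0_4, D0_5, D1_3, D1_4, D1_5, D2_3, D2_4, D2_5, D0_3.symm, D1_3.symm, D2_3.symm, D0_4.symm, D1_4.symm, D2_4.symm, D0_5.symm, D1_5.symm, D2_5.symm, absurd rfl hne, D3_4, D3_5, D3_4.symm, absurd rfl hne, D4_5, D3_5.symm, D4_5.symm, absurd rfl hne]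
  · intro z1 z2 hadj; rcases z1 with i | i <;> rcases z2 with j | j <;> fin_cases i <;> fin_cases j
    exacts [absurd hadj (by simp), absurd hadj (by simp), absurd hadj (by simp), absurd hadj (by simp), absurd hadj (by simp), absurd hadj (by simp), absurd hadj (by simp), absurd hadj (by simp), absurd hadj (by simp), E0_3, E0_4, E0_5, E1_3, E1_4, E1_5, E2_3, E2_4, E2_5, Esymm _ _ E0_3, Esymm _ _ E1_3, Esymm _ _ E2_3, Esymm _ _ E0_4, Esymm _ _ E1_4, Esymm _ _ E2_4, Esymm _ _ E0_5, Esymm _ _ E1_5, Esymm _ _ E2_5, absurd hadj (by simp), absurd hadj (by simp), absurd hadj (by simp), absurd hadj (by simp), absurd hadj (by simp), absurd hadj (by simp), absurd hadj (by simp), absurd hadj (by simp), absurd hadj (by simp)]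

lemma patternC (G : SimpleGraph V) (hT : ¬ HasMinor G (completeBipartiteGraph (Fin 3) (Fin 3)))
    (w : V)
    (x0 x1 x2 x3 x4 x5 : V)
    (hx0 : G.Adj w x0)
    (hx1 : G.Adj w x1)
    (hx2 : G.Adj w x2)
    (hx3 : G.Adj w x3)
    (hx4 : G.Adj w x4)
    (hx5 : G.Adj w x5)
    (d0_1 : x0 ≠ x1)
    (d0_2 : x0 ≠ x2)
    (d0_3 : x0 ≠ x3)
    (d0_4 : x0 ≠ x4)
    (d0_5 : x0 ≠ x5)
    (d1_2 : x1 ≠ x2)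
    (d1_3 : x1 ≠ x3)
    (d1_4 : x1 ≠ x4)
    (d1_5 : x1 ≠ x5)
    (d2_3 : x2 ≠ x3)
    (d2_4 : x2 ≠ x4)
    (d2_5 : x2 ≠ x5)
    (d3_4 : x3 ≠ x4)
    (d3_5 : x3 ≠ x5)
    (d4_5 : x4 ≠ x5)
    (Used : Sym2 V → Prop) (ap : Sym2 V → V)
    (hap : ∀ p, Used p → ∀ a b, p = s(a, b) → G.Adj (ap p) a ∧ G.Adj (ap p) b)
    (hax : ∀ p, Used p → ¬ G.Adj w (ap p) ∧ ap p ≠ w)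
    (hinj : ∀ p q, Used p → Used q → ap p = ap q → p = q)
    (u0_3 : Used s(x0, x3))
    (u0_4 : Used s(x0, x4))
    (u0_5 : Used s(x0, x5))
    (u1_2 : Used s(x1, x2))
    (u2_3 : Used s(x2, x3))
    (u1_4 : Used s(x1, x4))
    (u1_5 : Used s(x1, x5))
    : False := by
  apply hT
  obtain ⟨jA0_3, jB0_3⟩ := hap _ u0_3 x0 x3 rfl
  obtain ⟨n0_3, m0_3⟩ := hax _ u0_3
  obtain ⟨jA0_4, jB0_4⟩ := hap _ u0_4 x0 x4 rfl
  obtain ⟨n0_4, m0_4⟩ := hax _ u0_4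
  obtain ⟨jA0_5, jB0_5⟩ := hap _ u0_5 x0 x5 rfl
  obtain ⟨n0_5, m0_5⟩ := hax _ u0_5
  obtain ⟨jA1_2, jB1_2⟩ := hap _ u1_2 x1 x2 rfl
  obtain ⟨n1_2, m1_2⟩ := hax _ u1_2
  obtain ⟨jA2_3, jB2_3⟩ := hap _ u2_3 x2 x3 rfl
  obtain ⟨n2_3, m2_3⟩ := hax _ u2_3
  obtain ⟨jA1_4, jB1_4⟩ := hap _ u1_4 x1 x4 rfl
  obtain ⟨n1_4, m1_4⟩ := hax _ u1_4
  obtain ⟨jA1_5, jB1_5⟩ := hap _ u1_5 x1 x5 rfl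
  obtain ⟨n1_5, m1_5⟩ := hax _ u1_5
  have e0 : x0 ≠ w := fun h => G.irrefl (h ▸ hx0)
  have e1 : x1 ≠ w := fun h => G.irrefl (h ▸ hx1)
  have e2 : x2 ≠ w := fun h => G.irrefl (h ▸ hx2)
  have e3 : x3 ≠ w := fun h => G.irrefl (h ▸ hx3)
  have e4 : x4 ≠ w := fun h => G.irrefl (h ▸ hx4)
  have e5 : x5 ≠ w := fun h => G.irrefl (h ▸ hx5)
  have ab0_3_0 : ap s(x0, x3) ≠ x0 := fun h => n0_3 (by rw [h]; exact hx0)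
  have ab0_3_1 : ap s(x0, x3) ≠ x1 := fun h => n0_3 (by rw [h]; exact hx1)
  have ab0_3_2 : ap s(x0, x3) ≠ x2 := fun h => n0_3 (by rw [h]; exact hx2)
  have ab0_3_3 : ap s(x0, x3) ≠ x3 := fun h => n0_3 (by rw [h]; exact hx3)
  have ab0_3_4 : ap s(x0, x3) ≠ x4 := fun h => n0_3 (by rw [h]; exact hx4)
  have ab0_3_5 : ap s(x0, x3) ≠ x5 := fun h => n0_3 (by rw [h]; exact hx5)
  have ab0_4_0 : ap s(x0, x4) ≠ x0 := fun h => n0_4 (by rw [h]; exact hx0)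
  have ab0_4_1 : ap s(x0, x4) ≠ x1 := fun h => n0_4 (by rw [h]; exact hx1)
  have ab0_4_2 : ap s(x0, x4) ≠ x2 := fun h => n0_4 (by rw [h]; exact hx2)
  have ab0_4_3 : ap s(x0, x4) ≠ x3 := fun h => n0_4 (by rw [h]; exact hx3)
  have ab0_4_4 : ap s(x0, x4) ≠ x4 := fun h => n0_4 (by rw [h]; exact hx4)
  have ab0_4_5 : ap s(x0, x4) ≠ x5 := fun h => n0_4 (by rw [h]; exact hx5)
  have ab0_5_0 : ap s(x0, x5) ≠ x0 := fun h => n0_5 (by rw [h]; exact hx0)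
  have ab0_5_1 : ap s(x0, x5) ≠ x1 := fun h => n0_5 (by rw [h]; exact hx1)
  have ab0_5_2 : ap s(x0, x5) ≠ x2 := fun h => n0_5 (by rw [h]; exact hx2)
  have ab0_5_3 : ap s(x0, x5) ≠ x3 := fun h => n0_5 (by rw [h]; exact hx3)
  have ab0_5_4 : ap s(x0, x5) ≠ x4 := fun h => n0_5 (by rw [h]; exact hx4)
  have ab0_5_5 : ap s(x0, x5) ≠ x5 := fun h => n0_5 (by rw [h]; exact hx5)
  have ab1_2_0 : ap s(x1, x2) ≠ x0 := fun h => n1_2 (by rw [h]; exact hx0)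
  have ab1_2_1 : ap s(x1, x2) ≠ x1 := fun h => n1_2 (by rw [h]; exact hx1)
  have ab1_2_2 : ap s(x1, x2) ≠ x2 := fun h => n1_2 (by rw [h]; exact hx2)
  have ab1_2_3 : ap s(x1, x2) ≠ x3 := fun h => n1_2 (by rw [h]; exact hx3)
  have ab1_2_4 : ap s(x1, x2) ≠ x4 := fun h => n1_2 (by rw [h]; exact hx4)
  have ab1_2_5 : ap s(x1, x2) ≠ x5 := fun h => n1_2 (by rw [h]; exact hx5)
  have ab2_3_0 : ap s(x2, x3) ≠ x0 := fun h => n2_3 (by rw [h]; exact hx0)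
  have ab2_3_1 : ap s(x2, x3) ≠ x1 := fun h => n2_3 (by rw [h]; exact hx1)
  have ab2_3_2 : ap s(x2, x3) ≠ x2 := fun h => n2_3 (by rw [h]; exact hx2)
  have ab2_3_3 : ap s(x2, x3) ≠ x3 := fun h => n2_3 (by rw [h]; exact hx3)
  have ab2_3_4 : ap s(x2, x3) ≠ x4 := fun h => n2_3 (by rw [h]; exact hx4)
  have ab2_3_5 : ap s(x2, x3) ≠ x5 := fun h => n2_3 (by rw [h]; exact hx5)
  have ab1_4_0 : ap s(x1, x4) ≠ x0 := fun h => n1_4 (by rw [h]; exact hx0)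
  have ab1_4_1 : ap s(x1, x4) ≠ x1 := fun h => n1_4 (by rw [h]; exact hx1)
  have ab1_4_2 : ap s(x1, x4) ≠ x2 := fun h => n1_4 (by rw [h]; exact hx2)
  have ab1_4_3 : ap s(x1, x4) ≠ x3 := fun h => n1_4 (by rw [h]; exact hx3)
  have ab1_4_4 : ap s(x1, x4) ≠ x4 := fun h => n1_4 (by rw [h]; exact hx4)
  have ab1_4_5 : ap s(x1, x4) ≠ x5 := fun h => n1_4 (by rw [h]; exact hx5)
  have ab1_5_0 : ap s(x1, x5) ≠ x0 := fun h => n1_5 (by rw [h]; exact hx0)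
  have ab1_5_1 : ap s(x1, x5) ≠ x1 := fun h => n1_5 (by rw [h]; exact hx1)
  have ab1_5_2 : ap s(x1, x5) ≠ x2 := fun h => n1_5 (by rw [h]; exact hx2)
  have ab1_5_3 : ap s(x1, x5) ≠ x3 := fun h => n1_5 (by rw [h]; exact hx3)
  have ab1_5_4 : ap s(x1, x5) ≠ x4 := fun h => n1_5 (by rw [h]; exact hx4)
  have ab1_5_5 : ap s(x1, x5) ≠ x5 := fun h => n1_5 (by rw [h]; exact hx5)
  have s0_3_0_4 : (s(x0, x3) : Sym2 V) ≠ s(x0, x4) := by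
    intro h; rw [Sym2.eq_iff] at h
    rcases h with ⟨h1, h2⟩ | ⟨h1, h2⟩
    · exact absurd h2 d3_4
    · exact absurd h1 d0_4
  have q0_3_0_4 : ap s(x0, x3) ≠ ap s(x0, x4) := fun h => s0_3_0_4 (hinj _ _ u0_3 u0_4 h)
  have s0_3_0_5 : (s(x0, x3) : Sym2 V) ≠ s(x0, x5) := by
    intro h; rw [Sym2.eq_iff] at h
    rcases h with ⟨h1, h2⟩ | ⟨h1, h2⟩
    · exact absurd h2 d3_5
    · exact absurd h1 d0_5
  have q0_3_0_5 : ap s(x0, x3) ≠ ap s(x0, x5) := fun h => s0_3_0_5 (hinj _ _ u0_3 u0_5 h)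
  have s0_3_1_2 : (s(x0, x3) : Sym2 V) ≠ s(x1, x2) := by
    intro h; rw [Sym2.eq_iff] at h
    rcases h with ⟨h1, h2⟩ | ⟨h1, h2⟩
    · exact absurd h1 d0_1
    · exact absurd h1 d0_2
  have q0_3_1_2 : ap s(x0, x3) ≠ ap s(x1, x2) := fun h => s0_3_1_2 (hinj _ _ u0_3 u1_2 h)
  have s0_3_2_3 : (s(x0, x3) : Sym2 V) ≠ s(x2, x3) := by
    intro h; rw [Sym2.eq_iff] at h
    rcases h with ⟨h1, h2⟩ | ⟨h1, h2⟩
    · exact absurd h1 d0_2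
    · exact absurd h1 d0_3
  have q0_3_2_3 : ap s(x0, x3) ≠ ap s(x2, x3) := fun h => s0_3_2_3 (hinj _ _ u0_3 u2_3 h)
  have s0_3_1_4 : (s(x0, x3) : Sym2 V) ≠ s(x1, x4) := by
    intro h; rw [Sym2.eq_iff] at h
    rcases h with ⟨h1, h2⟩ | ⟨h1, h2⟩
    · exact absurd h1 d0_1
    · exact absurd h1 d0_4
  have q0_3_1_4 : ap s(x0, x3) ≠ ap s(x1, x4) := fun h => s0_3_1_4 (hinj _ _ u0_3 u1_4 h)
  have s0_3_1_5 : (s(x0, x3) : Sym2 V) ≠ s(x1, x5) := by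
    intro h; rw [Sym2.eq_iff] at h
    rcases h with ⟨h1, h2⟩ | ⟨h1, h2⟩
    · exact absurd h1 d0_1
    · exact absurd h1 d0_5
  have q0_3_1_5 : ap s(x0, x3) ≠ ap s(x1, x5) := fun h => s0_3_1_5 (hinj _ _ u0_3 u1_5 h)
  have s0_4_0_5 : (s(x0, x4) : Sym2 V) ≠ s(x0, x5) := by
    intro h; rw [Sym2.eq_iff] at h
    rcases h with ⟨h1, h2⟩ | ⟨h1, h2⟩
    · exact absurd h2 d4_5
    · exact absurd h1 d0_5
  have q0_4_0_5 : ap s(x0, x4) ≠ ap s(x0, x5) := fun h => s0_4_0_5 (hinj _ _ u0_4 u0_5 h)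
  have s0_4_1_2 : (s(x0, x4) : Sym2 V) ≠ s(x1, x2) := by
    intro h; rw [Sym2.eq_iff] at h
    rcases h with ⟨h1, h2⟩ | ⟨h1, h2⟩
    · exact absurd h1 d0_1
    · exact absurd h1 d0_2
  have q0_4_1_2 : ap s(x0, x4) ≠ ap s(x1, x2) := fun h => s0_4_1_2 (hinj _ _ u0_4 u1_2 h)
  have s0_4_2_3 : (s(x0, x4) : Sym2 V) ≠ s(x2, x3) := by
    intro h; rw [Sym2.eq_iff] at h
    rcases h with ⟨h1, h2⟩ | ⟨h1, h2⟩
    · exact absurd h1 d0_2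
    · exact absurd h1 d0_3
  have q0_4_2_3 : ap s(x0, x4) ≠ ap s(x2, x3) := fun h => s0_4_2_3 (hinj _ _ u0_4 u2_3 h)
  have s0_4_1_4 : (s(x0, x4) : Sym2 V) ≠ s(x1, x4) := by
    intro h; rw [Sym2.eq_iff] at h
    rcases h with ⟨h1, h2⟩ | ⟨h1, h2⟩
    · exact absurd h1 d0_1
    · exact absurd h1 d0_4
  have q0_4_1_4 : ap s(x0, x4) ≠ ap s(x1, x4) := fun h => s0_4_1_4 (hinj _ _ u0_4 u1_4 h)
  have s0_4_1_5 : (s(x0, x4) : Sym2 V) ≠ s(x1, x5) := by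
    intro h; rw [Sym2.eq_iff] at h
    rcases h with ⟨h1, h2⟩ | ⟨h1, h2⟩
    · exact absurd h1 d0_1
    · exact absurd h1 d0_5
  have q0_4_1_5 : ap s(x0, x4) ≠ ap s(x1, x5) := fun h => s0_4_1_5 (hinj _ _ u0_4 u1_5 h)
  have s0_5_1_2 : (s(x0, x5) : Sym2 V) ≠ s(x1, x2) := by
    intro h; rw [Sym2.eq_iff] at h
    rcases h with ⟨h1, h2⟩ | ⟨h1, h2⟩
    · exact absurd h1 d0_1
    · exact absurd h1 d0_2
  have q0_5_1_2 : ap s(x0, x5) ≠ ap s(x1, x2) := fun h => s0_5_1_2 (hinj _ _ u0_5 u1_2 h)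
  have s0_5_2_3 : (s(x0, x5) : Sym2 V) ≠ s(x2, x3) := by
    intro h; rw [Sym2.eq_iff] at h
    rcases h with ⟨h1, h2⟩ | ⟨h1, h2⟩
    · exact absurd h1 d0_2
    · exact absurd h1 d0_3
  have q0_5_2_3 : ap s(x0, x5) ≠ ap s(x2, x3) := fun h => s0_5_2_3 (hinj _ _ u0_5 u2_3 h)
  have s0_5_1_4 : (s(x0, x5) : Sym2 V) ≠ s(x1, x4) := by
    intro h; rw [Sym2.eq_iff] at h
    rcases h with ⟨h1, h2⟩ | ⟨h1, h2⟩
    · exact absurd h1 d0_1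
    · exact absurd h1 d0_4
  have q0_5_1_4 : ap s(x0, x5) ≠ ap s(x1, x4) := fun h => s0_5_1_4 (hinj _ _ u0_5 u1_4 h)
  have s0_5_1_5 : (s(x0, x5) : Sym2 V) ≠ s(x1, x5) := by
    intro h; rw [Sym2.eq_iff] at h
    rcases h with ⟨h1, h2⟩ | ⟨h1, h2⟩
    · exact absurd h1 d0_1
    · exact absurd h1 d0_5
  have q0_5_1_5 : ap s(x0, x5) ≠ ap s(x1, x5) := fun h => s0_5_1_5 (hinj _ _ u0_5 u1_5 h)
  have s1_2_2_3 : (s(x1, x2) : Sym2 V) ≠ s(x2, x3) := by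
    intro h; rw [Sym2.eq_iff] at h
    rcases h with ⟨h1, h2⟩ | ⟨h1, h2⟩
    · exact absurd h1 d1_2
    · exact absurd h1 d1_3
  have q1_2_2_3 : ap s(x1, x2) ≠ ap s(x2, x3) := fun h => s1_2_2_3 (hinj _ _ u1_2 u2_3 h)
  have s1_2_1_4 : (s(x1, x2) : Sym2 V) ≠ s(x1, x4) := by
    intro h; rw [Sym2.eq_iff] at h
    rcases h with ⟨h1, h2⟩ | ⟨h1, h2⟩
    · exact absurd h2 d2_4
    · exact absurd h1 d1_4
  have q1_2_1_4 : ap s(x1, x2) ≠ ap s(x1, x4) := fun h => s1_2_1_4 (hinj _ _ u1_2 u1_4 h)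
  have s1_2_1_5 : (s(x1, x2) : Sym2 V) ≠ s(x1, x5) := by
    intro h; rw [Sym2.eq_iff] at h
    rcases h with ⟨h1, h2⟩ | ⟨h1, h2⟩
    · exact absurd h2 d2_5
    · exact absurd h1 d1_5
  have q1_2_1_5 : ap s(x1, x2) ≠ ap s(x1, x5) := fun h => s1_2_1_5 (hinj _ _ u1_2 u1_5 h)
  have s2_3_1_4 : (s(x2, x3) : Sym2 V) ≠ s(x1, x4) := by
    intro h; rw [Sym2.eq_iff] at h
    rcases h with ⟨h1, h2⟩ | ⟨h1, h2⟩
    · exact absurd h1 d1_2.symm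
    · exact absurd h1 d2_4
  have q2_3_1_4 : ap s(x2, x3) ≠ ap s(x1, x4) := fun h => s2_3_1_4 (hinj _ _ u2_3 u1_4 h)
  have s2_3_1_5 : (s(x2, x3) : Sym2 V) ≠ s(x1, x5) := by
    intro h; rw [Sym2.eq_iff] at h
    rcases h with ⟨h1, h2⟩ | ⟨h1, h2⟩
    · exact absurd h1 d1_2.symm
    · exact absurd h1 d2_5
  have q2_3_1_5 : ap s(x2, x3) ≠ ap s(x1, x5) := fun h => s2_3_1_5 (hinj _ _ u2_3 u1_5 h)
  have s1_4_1_5 : (s(x1, x4) : Sym2 V) ≠ s(x1, x5) := by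
    intro h; rw [Sym2.eq_iff] at h
    rcases h with ⟨h1, h2⟩ | ⟨h1, h2⟩
    · exact absurd h2 d4_5
    · exact absurd h1 d1_5
  have q1_4_1_5 : ap s(x1, x4) ≠ ap s(x1, x5) := fun h => s1_4_1_5 (hinj _ _ u1_4 u1_5 h)
  set B0 : Set V := {w} with hB0
  set B1 : Set V := {x0, (ap s(x0, x3)), (ap s(x0, x4)), (ap s(x0, x5))} with hB1
  set B2 : Set V := ({x1, (ap s(x1, x2)), (ap s(x1, x4)), (ap s(x1, x5))} ∪ {x2, (ap s(x1, x2)), (ap s(x2, x3))}) with hB2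
  set B3 : Set V := {x3} with hB3
  set B4 : Set V := {x4} with hB4
  set B5 : Set V := {x5} with hB5
  have NE0 : B0.Nonempty := ⟨w, by rw [hB0]; simp⟩
  have NE1 : B1.Nonempty := ⟨x0, by rw [hB1]; simp⟩
  have NE2 : B2.Nonempty := ⟨x1, by rw [hB2]; simp⟩
  have NE3 : B3.Nonempty := ⟨x3, by rw [hB3]; simp⟩
  have NE4 : B4.Nonempty := ⟨x4, by rw [hB4]; simp⟩
  have NE5 : B5.Nonempty := ⟨x5, by rw [hB5]; simp⟩
  have CN0 : (G.induce B0).Connected := by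
    rw [hB0]
    exact induce_connected_star G w {w} rfl (fun y hy => Or.inl hy)
  have CN1 : (G.induce B1).Connected := by
    rw [hB1]
    exact induce_connected_star G x0 {x0, (ap s(x0, x3)), (ap s(x0, x4)), (ap s(x0, x5))} (by simp) (by rintro y (rfl | rfl | rfl | rfl); exacts [Or.inl rfl, Or.inr jA0_3.symm, Or.inr jA0_4.symm, Or.inr jA0_5.symm])
  have CN2 : (G.induce B2).Connected := by
    rw [hB2]
    exact induce_union_connected (induce_connected_star G x1 {x1, (ap s(x1, x2)), (ap s(x1, x4)), (ap s(x1, x5))} (by simp) (by rintro y (rfl | rfl | rfl | rfl); exacts [Or.inl rfl, Or.inr jA1_2.symm, Or.inr jA1_4.symm, Or.inr jA1_5.symm])).preconnected (induce_connected_star G x2 {x2, (ap s(x1, x2)), (ap s(x2, x3))} (by simp) (by rintro y (rfl | rfl | rfl); exacts [Or.inl rfl, Or.inr jB1_2.symm, Or.inr jA2_3.symm])).preconnected ⟨(ap s(x1, x2)), by simp, by simp⟩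
  have CN3 : (G.induce B3).Connected := by
    rw [hB3]
    exact induce_connected_star G x3 {x3} rfl (fun y hy => Or.inl hy)
  have CN4 : (G.induce B4).Connected := by
    rw [hB4]
    exact induce_connected_star G x4 {x4} rfl (fun y hy => Or.inl hy)
  have CN5 : (G.induce B5).Connected := by
    rw [hB5]
    exact induce_connected_star G x5 {x5} rfl (fun y hy => Or.inl hy)
  have D0_1 : Disjoint B0 B1 := by
    rw [hB0, hB1]
    refine Set.disjoint_left.2 ?_
    intro z hz hz'
    simp only [Set.mem_insert_iff, Set.mem_singleton_iff, Set.mem_union] at hz hz'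
    rcases hz with rfl
    · rcases hz' with h | h | h | h
      exacts [absurd h (e0.symm), absurd h (m0_3.symm), absurd h (m0_4.symm), absurd h (m0_5.symm)]
  have D0_2 : Disjoint B0 B2 := by
    rw [hB0, hB2]
    refine Set.disjoint_left.2 ?_
    intro z hz hz'
    simp only [Set.mem_insert_iff, Set.mem_singleton_iff, Set.mem_union] at hz hz'
    rcases hz with rfl
    · rcases hz' with (h | h | h | h) | (h | h | h)
      exacts [absurd h (e1.symm), absurd h (m1_2.symm), absurd h (m1_4.symm), absurd h (m1_5.symm), absurd h (e2.symm), absurd h (m1_2.symm), absurd h (m2_3.symm)]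
  have D0_3 : Disjoint B0 B3 := by
    rw [hB0, hB3]
    refine Set.disjoint_left.2 ?_
    intro z hz hz'
    simp only [Set.mem_insert_iff, Set.mem_singleton_iff, Set.mem_union] at hz hz'
    rcases hz with rfl
    · exact absurd hz' (e3.symm)
  have D0_4 : Disjoint B0 B4 := by
    rw [hB0, hB4]
    refine Set.disjoint_left.2 ?_
    intro z hz hz'
    simp only [Set.mem_insert_iff, Set.mem_singleton_iff, Set.mem_union] at hz hz'
    rcases hz with rfl
    · exact absurd hz' (e4.symm)
  have D0_5 : Disjoint B0 B5 := by
    rw [hB0, hB5]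
    refine Set.disjoint_left.2 ?_
    intro z hz hz'
    simp only [Set.mem_insert_iff, Set.mem_singleton_iff, Set.mem_union] at hz hz'
    rcases hz with rfl
    · exact absurd hz' (e5.symm)
  have D1_2 : Disjoint B1 B2 := by
    rw [hB1, hB2]
    refine Set.disjoint_left.2 ?_
    intro z hz hz'
    simp only [Set.mem_insert_iff, Set.mem_singleton_iff, Set.mem_union] at hz hz'
    rcases hz with rfl | rfl | rfl | rfl
    · rcases hz' with (h | h | h | h) | (h | h | h)
      exacts [absurd h (d0_1), absurd h ((ab1_2_0).symm), absurd h ((ab1_4_0).symm), absurd h ((ab1_5_0).symm), absurd h (d0_2), absurd h ((ab1_2_0).symm), absurd h ((ab2_3_0).symm)]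
    · rcases hz' with (h | h | h | h) | (h | h | h)
      exacts [absurd h (ab0_3_1), absurd h (q0_3_1_2), absurd h (q0_3_1_4), absurd h (q0_3_1_5), absurd h (ab0_3_2), absurd h (q0_3_1_2), absurd h (q0_3_2_3)]
    · rcases hz' with (h | h | h | h) | (h | h | h)
      exacts [absurd h (ab0_4_1), absurd h (q0_4_1_2), absurd h (q0_4_1_4), absurd h (q0_4_1_5), absurd h (ab0_4_2), absurd h (q0_4_1_2), absurd h (q0_4_2_3)]
    · rcases hz' with (h | h | h | h) | (h | h | h)
      exacts [absurd h (ab0_5_1), absurd h (q0_5_1_2), absurd h (q0_5_1_4), absurd h (q0_5_1_5), absurd h (ab0_5_2), absurd h (q0_5_1_2), absurd h (q0_5_2_3)]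
  have D1_3 : Disjoint B1 B3 := by
    rw [hB1, hB3]
    refine Set.disjoint_left.2 ?_
    intro z hz hz'
    simp only [Set.mem_insert_iff, Set.mem_singleton_iff, Set.mem_union] at hz hz'
    rcases hz with rfl | rfl | rfl | rfl
    · exact absurd hz' (d0_3)
    · exact absurd hz' (ab0_3_3)
    · exact absurd hz' (ab0_4_3)
    · exact absurd hz' (ab0_5_3)
  have D1_4 : Disjoint B1 B4 := by
    rw [hB1, hB4]
    refine Set.disjoint_left.2 ?_
    intro z hz hz'
    simp only [Set.mem_insert_iff, Set.mem_singleton_iff, Set.mem_union] at hz hz'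
    rcases hz with rfl | rfl | rfl | rfl
    · exact absurd hz' (d0_4)
    · exact absurd hz' (ab0_3_4)
    · exact absurd hz' (ab0_4_4)
    · exact absurd hz' (ab0_5_4)
  have D1_5 : Disjoint B1 B5 := by
    rw [hB1, hB5]
    refine Set.disjoint_left.2 ?_
    intro z hz hz'
    simp only [Set.mem_insert_iff, Set.mem_singleton_iff, Set.mem_union] at hz hz'
    rcases hz with rfl | rfl | rfl | rfl
    · exact absurd hz' (d0_5)
    · exact absurd hz' (ab0_3_5)
    · exact absurd hz' (ab0_4_5)
    · exact absurd hz' (ab0_5_5)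
  have D2_3 : Disjoint B2 B3 := by
    rw [hB2, hB3]
    refine Set.disjoint_left.2 ?_
    intro z hz hz'
    simp only [Set.mem_insert_iff, Set.mem_singleton_iff, Set.mem_union] at hz hz'
    rcases hz with (rfl | rfl | rfl | rfl) | (rfl | rfl | rfl)
    · exact absurd hz' (d1_3)
    · exact absurd hz' (ab1_2_3)
    · exact absurd hz' (ab1_4_3)
    · exact absurd hz' (ab1_5_3)
    · exact absurd hz' (d2_3)
    · exact absurd hz' (ab1_2_3)
    · exact absurd hz' (ab2_3_3)
  have D2_4 : Disjoint B2 B4 := by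
    rw [hB2, hB4]
    refine Set.disjoint_left.2 ?_
    intro z hz hz'
    simp only [Set.mem_insert_iff, Set.mem_singleton_iff, Set.mem_union] at hz hz'
    rcases hz with (rfl | rfl | rfl | rfl) | (rfl | rfl | rfl)
    · exact absurd hz' (d1_4)
    · exact absurd hz' (ab1_2_4)
    · exact absurd hz' (ab1_4_4)
    · exact absurd hz' (ab1_5_4)
    · exact absurd hz' (d2_4)
    · exact absurd hz' (ab1_2_4)
    · exact absurd hz' (ab2_3_4)
  have D2_5 : Disjoint B2 B5 := by
    rw [hB2, hB5]
    refine Set.disjoint_left.2 ?_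
    intro z hz hz'
    simp only [Set.mem_insert_iff, Set.mem_singleton_iff, Set.mem_union] at hz hz'
    rcases hz with (rfl | rfl | rfl | rfl) | (rfl | rfl | rfl)
    · exact absurd hz' (d1_5)
    · exact absurd hz' (ab1_2_5)
    · exact absurd hz' (ab1_4_5)
    · exact absurd hz' (ab1_5_5)
    · exact absurd hz' (d2_5)
    · exact absurd hz' (ab1_2_5)
    · exact absurd hz' (ab2_3_5)
  have D3_4 : Disjoint B3 B4 := by
    rw [hB3, hB4]
    refine Set.disjoint_left.2 ?_
    intro z hz hz'
    simp only [Set.mem_insert_iff, Set.mem_singleton_iff, Set.mem_union] at hz hz'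
    rcases hz with rfl
    · exact absurd hz' (d3_4)
  have D3_5 : Disjoint B3 B5 := by
    rw [hB3, hB5]
    refine Set.disjoint_left.2 ?_
    intro z hz hz'
    simp only [Set.mem_insert_iff, Set.mem_singleton_iff, Set.mem_union] at hz hz'
    rcases hz with rfl
    · exact absurd hz' (d3_5)
  have D4_5 : Disjoint B4 B5 := by
    rw [hB4, hB5]
    refine Set.disjoint_left.2 ?_
    intro z hz hz'
    simp only [Set.mem_insert_iff, Set.mem_singleton_iff, Set.mem_union] at hz hz'
    rcases hz with rfl
    · exact absurd hz' (d4_5)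
  have Esymm : ∀ (s t : Set V), (∃ v₁ ∈ s, ∃ v₂ ∈ t, G.Adj v₁ v₂) → ∃ v₁ ∈ t, ∃ v₂ ∈ s, G.Adj v₁ v₂ := fun s t ⟨a, ha, b, hb, hab⟩ => ⟨b, hb, a, ha, hab.symm⟩
  have E0_3 : ∃ v₁ ∈ B0, ∃ v₂ ∈ B3, G.Adj v₁ v₂ := ⟨w, by rw [hB0]; simp, x3, by rw [hB3]; simp, hx3⟩
  have E0_4 : ∃ v₁ ∈ B0, ∃ v₂ ∈ B4, G.Adj v₁ v₂ := ⟨w, by rw [hB0]; simp, x4, by rw [hB4]; simp, hx4⟩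
  have E0_5 : ∃ v₁ ∈ B0, ∃ v₂ ∈ B5, G.Adj v₁ v₂ := ⟨w, by rw [hB0]; simp, x5, by rw [hB5]; simp, hx5⟩
  have E1_3 : ∃ v₁ ∈ B1, ∃ v₂ ∈ B3, G.Adj v₁ v₂ := ⟨(ap s(x0, x3)), by rw [hB1]; simp, x3, by rw [hB3]; simp, jB0_3⟩
  have E1_4 : ∃ v₁ ∈ B1, ∃ v₂ ∈ B4, G.Adj v₁ v₂ := ⟨(ap s(x0, x4)), by rw [hB1]; simp, x4, by rw [hB4]; simp, jB0_4⟩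
  have E1_5 : ∃ v₁ ∈ B1, ∃ v₂ ∈ B5, G.Adj v₁ v₂ := ⟨(ap s(x0, x5)), by rw [hB1]; simp, x5, by rw [hB5]; simp, jB0_5⟩
  have E2_3 : ∃ v₁ ∈ B2, ∃ v₂ ∈ B3, G.Adj v₁ v₂ := ⟨(ap s(x2, x3)), by rw [hB2]; simp, x3, by rw [hB3]; simp, jB2_3⟩
  have E2_4 : ∃ v₁ ∈ B2, ∃ v₂ ∈ B4, G.Adj v₁ v₂ := ⟨(ap s(x1, x4)), by rw [hB2]; simp, x4, by rw [hB4]; simp, jB1_4⟩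
  have E2_5 : ∃ v₁ ∈ B2, ∃ v₂ ∈ B5, G.Adj v₁ v₂ := ⟨(ap s(x1, x5)), by rw [hB2]; simp, x5, by rw [hB5]; simp, jB1_5⟩
  refine ⟨Sum.elim ![B0, B1, B2] ![B3, B4, B5], ?_, ?_, ?_, ?_⟩
  · intro z; rcases z with i | i <;> fin_cases i
    exacts [NE0, NE1, NE2, NE3, NE4, NE5]
  · intro z; rcases z with i | i <;> fin_cases i
    exacts [CN0, CN1, CN2, CN3, CN4, CN5]
  · intro z1 z2 hne; rcases z1 with i | i <;> rcases z2 with j | j <;> fin_cases i <;> fin_cases j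
    exacts [absurd rfl hne, D0_1, D0_2, D0_1.symm, absurd rfl hne, D1_2, D0_2.symm, D1_2.symm, absurd rfl hne, D0_3, D0_4, D0_5, D1_3, D1_4, D1_5, D2_3, D2_4, D2_5, D0_3.symm, D1_3.symm, D2_3.symm, D0_4.symm, D1_4.symm, D2_4.symm, D0_5.symm, D1_5.symm, D2_5.symm, absurd rfl hne, D3_4, D3_5, D3_4.symm, absurd rfl hne, D4_5, D3_5.symm, D4_5.symm, absurd rfl hne]
  · intro z1 z2 hadj; rcases z1 with i | i <;> rcases z2 with j | j <;> fin_cases i <;> fin_cases j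
    exacts [absurd hadj (by simp), absurd hadj (by simp), absurd hadj (by simp), absurd hadj (by simp), absurd hadj (by simp), absurd hadj (by simp), absurd hadj (by simp), absurd hadj (by simp), absurd hadj (by simp), E0_3, E0_4, E0_5, E1_3, E1_4, E1_5, E2_3, E2_4, E2_5, Esymm _ _ E0_3, Esymm _ _ E1_3, Esymm _ _ E2_3, Esymm _ _ E0_4, Esymm _ _ E1_4, Esymm _ _ E2_4, Esymm _ _ E0_5, Esymm _ _ E1_5, Esymm _ _ E2_5, absurd hadj (by simp), absurd hadj (by simp), absurd hadj (by simp), absurd hadj (by simp), absurd hadj (by simp), absurd hadj (by simp), absurd hadj (by simp), absurd hadj (by simp), absurd hadj (by simp)]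

lemma patternD (G : SimpleGraph V) (hT : ¬ HasMinor G (⊤ : SimpleGraph (Fin 5)))
    (w : V)
    (x0 x1 x2 x3 x4 : V)
    (hx0 : G.Adj w x0)
    (hx1 : G.Adj w x1)
    (hx2 : G.Adj w x2)
    (hx3 : G.Adj w x3)
    (hx4 : G.Adj w x4)
    (d0_1 : x0 ≠ x1)
    (d0_2 : x0 ≠ x2)
    (d0_3 : x0 ≠ x3)
    (d0_4 : x0 ≠ x4)
    (d1_2 : x1 ≠ x2)
    (d1_3 : x1 ≠ x3)
    (d1_4 : x1 ≠ x4)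
    (d2_3 : x2 ≠ x3)
    (d2_4 : x2 ≠ x4)
    (d3_4 : x3 ≠ x4)
    (Used : Sym2 V → Prop) (ap : Sym2 V → V)
    (hap : ∀ p, Used p → ∀ a b, p = s(a, b) → G.Adj (ap p) a ∧ G.Adj (ap p) b)
    (hax : ∀ p, Used p → ¬ G.Adj w (ap p) ∧ ap p ≠ w)
    (hinj : ∀ p q, Used p → Used q → ap p = ap q → p = q)
    (u0_1 : Used s(x0, x1))
    (u0_3 : Used s(x0, x3))
    (u0_4 : Used s(x0, x4))
    (u1_3 : Used s(x1, x3))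
    (u1_4 : Used s(x1, x4))
    (u2_3 : Used s(x2, x3))
    (u2_4 : Used s(x2, x4))
    : False := by
  apply hT
  obtain ⟨jA0_1, jB0_1⟩ := hap _ u0_1 x0 x1 rfl
  obtain ⟨n0_1, m0_1⟩ := hax _ u0_1
  obtain ⟨jA0_3, jB0_3⟩ := hap _ u0_3 x0 x3 rfl
  obtain ⟨n0_3, m0_3⟩ := hax _ u0_3
  obtain ⟨jA0_4, jB0_4⟩ := hap _ u0_4 x0 x4 rfl
  obtain ⟨n0_4, m0_4⟩ := hax _ u0_4
  obtain ⟨jA1_3, jB1_3⟩ := hap _ u1_3 x1 x3 rfl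
  obtain ⟨n1_3, m1_3⟩ := hax _ u1_3
  obtain ⟨jA1_4, jB1_4⟩ := hap _ u1_4 x1 x4 rfl
  obtain ⟨n1_4, m1_4⟩ := hax _ u1_4
  obtain ⟨jA2_3, jB2_3⟩ := hap _ u2_3 x2 x3 rfl
  obtain ⟨n2_3, m2_3⟩ := hax _ u2_3
  obtain ⟨jA2_4, jB2_4⟩ := hap _ u2_4 x2 x4 rfl
  obtain ⟨n2_4, m2_4⟩ := hax _ u2_4
  have e0 : x0 ≠ w := fun h => G.irrefl (h ▸ hx0)
  have e1 : x1 ≠ w := fun h => G.irrefl (h ▸ hx1)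
  have e2 : x2 ≠ w := fun h => G.irrefl (h ▸ hx2)
  have e3 : x3 ≠ w := fun h => G.irrefl (h ▸ hx3)
  have e4 : x4 ≠ w := fun h => G.irrefl (h ▸ hx4)
  have ab0_1_0 : ap s(x0, x1) ≠ x0 := fun h => n0_1 (by rw [h]; exact hx0)
  have ab0_1_1 : ap s(x0, x1) ≠ x1 := fun h => n0_1 (by rw [h]; exact hx1)
  have ab0_1_2 : ap s(x0, x1) ≠ x2 := fun h => n0_1 (by rw [h]; exact hx2)
  have ab0_1_3 : ap s(x0, x1) ≠ x3 := fun h => n0_1 (by rw [h]; exact hx3)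
  have ab0_1_4 : ap s(x0, x1) ≠ x4 := fun h => n0_1 (by rw [h]; exact hx4)
  have ab0_3_0 : ap s(x0, x3) ≠ x0 := fun h => n0_3 (by rw [h]; exact hx0)
  have ab0_3_1 : ap s(x0, x3) ≠ x1 := fun h => n0_3 (by rw [h]; exact hx1)
  have ab0_3_2 : ap s(x0, x3) ≠ x2 := fun h => n0_3 (by rw [h]; exact hx2)
  have ab0_3_3 : ap s(x0, x3) ≠ x3 := fun h => n0_3 (by rw [h]; exact hx3)
  have ab0_3_4 : ap s(x0, x3) ≠ x4 := fun h => n0_3 (by rw [h]; exact hx4)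
  have ab0_4_0 : ap s(x0, x4) ≠ x0 := fun h => n0_4 (by rw [h]; exact hx0)
  have ab0_4_1 : ap s(x0, x4) ≠ x1 := fun h => n0_4 (by rw [h]; exact hx1)
  have ab0_4_2 : ap s(x0, x4) ≠ x2 := fun h => n0_4 (by rw [h]; exact hx2)
  have ab0_4_3 : ap s(x0, x4) ≠ x3 := fun h => n0_4 (by rw [h]; exact hx3)
  have ab0_4_4 : ap s(x0, x4) ≠ x4 := fun h => n0_4 (by rw [h]; exact hx4)
  have ab1_3_0 : ap s(x1, x3) ≠ x0 := fun h => n1_3 (by rw [h]; exact hx0)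
  have ab1_3_1 : ap s(x1, x3) ≠ x1 := fun h => n1_3 (by rw [h]; exact hx1)
  have ab1_3_2 : ap s(x1, x3) ≠ x2 := fun h => n1_3 (by rw [h]; exact hx2)
  have ab1_3_3 : ap s(x1, x3) ≠ x3 := fun h => n1_3 (by rw [h]; exact hx3)
  have ab1_3_4 : ap s(x1, x3) ≠ x4 := fun h => n1_3 (by rw [h]; exact hx4)
  have ab1_4_0 : ap s(x1, x4) ≠ x0 := fun h => n1_4 (by rw [h]; exact hx0)
  have ab1_4_1 : ap s(x1, x4) ≠ x1 := fun h => n1_4 (by rw [h]; exact hx1)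
  have ab1_4_2 : ap s(x1, x4) ≠ x2 := fun h => n1_4 (by rw [h]; exact hx2)
  have ab1_4_3 : ap s(x1, x4) ≠ x3 := fun h => n1_4 (by rw [h]; exact hx3)
  have ab1_4_4 : ap s(x1, x4) ≠ x4 := fun h => n1_4 (by rw [h]; exact hx4)
  have ab2_3_0 : ap s(x2, x3) ≠ x0 := fun h => n2_3 (by rw [h]; exact hx0)
  have ab2_3_1 : ap s(x2, x3) ≠ x1 := fun h => n2_3 (by rw [h]; exact hx1)
  have ab2_3_2 : ap s(x2, x3) ≠ x2 := fun h => n2_3 (by rw [h]; exact hx2)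
  have ab2_3_3 : ap s(x2, x3) ≠ x3 := fun h => n2_3 (by rw [h]; exact hx3)
  have ab2_3_4 : ap s(x2, x3) ≠ x4 := fun h => n2_3 (by rw [h]; exact hx4)
  have ab2_4_0 : ap s(x2, x4) ≠ x0 := fun h => n2_4 (by rw [h]; exact hx0)
  have ab2_4_1 : ap s(x2, x4) ≠ x1 := fun h => n2_4 (by rw [h]; exact hx1)
  have ab2_4_2 : ap s(x2, x4) ≠ x2 := fun h => n2_4 (by rw [h]; exact hx2)
  have ab2_4_3 : ap s(x2, x4) ≠ x3 := fun h => n2_4 (by rw [h]; exact hx3)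
  have ab2_4_4 : ap s(x2, x4) ≠ x4 := fun h => n2_4 (by rw [h]; exact hx4)
  have s0_1_0_3 : (s(x0, x1) : Sym2 V) ≠ s(x0, x3) := by
    intro h; rw [Sym2.eq_iff] at h
    rcases h with ⟨h1, h2⟩ | ⟨h1, h2⟩
    · exact absurd h2 d1_3
    · exact absurd h1 d0_3
  have q0_1_0_3 : ap s(x0, x1) ≠ ap s(x0, x3) := fun h => s0_1_0_3 (hinj _ _ u0_1 u0_3 h)
  have s0_1_0_4 : (s(x0, x1) : Sym2 V) ≠ s(x0, x4) := by
    intro h; rw [Sym2.eq_iff] at h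
    rcases h with ⟨h1, h2⟩ | ⟨h1, h2⟩
    · exact absurd h2 d1_4
    · exact absurd h1 d0_4
  have q0_1_0_4 : ap s(x0, x1) ≠ ap s(x0, x4) := fun h => s0_1_0_4 (hinj _ _ u0_1 u0_4 h)
  have s0_1_1_3 : (s(x0, x1) : Sym2 V) ≠ s(x1, x3) := by
    intro h; rw [Sym2.eq_iff] at h
    rcases h with ⟨h1, h2⟩ | ⟨h1, h2⟩
    · exact absurd h1 d0_1
    · exact absurd h1 d0_3
  have q0_1_1_3 : ap s(x0, x1) ≠ ap s(x1, x3) := fun h => s0_1_1_3 (hinj _ _ u0_1 u1_3 h)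
  have s0_1_1_4 : (s(x0, x1) : Sym2 V) ≠ s(x1, x4) := by
    intro h; rw [Sym2.eq_iff] at h
    rcases h with ⟨h1, h2⟩ | ⟨h1, h2⟩
    · exact absurd h1 d0_1
    · exact absurd h1 d0_4
  have q0_1_1_4 : ap s(x0, x1) ≠ ap s(x1, x4) := fun h => s0_1_1_4 (hinj _ _ u0_1 u1_4 h)
  have s0_1_2_3 : (s(x0, x1) : Sym2 V) ≠ s(x2, x3) := by
    intro h; rw [Sym2.eq_iff] at h
    rcases h with ⟨h1, h2⟩ | ⟨h1, h2⟩
    · exact absurd h1 d0_2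
    · exact absurd h1 d0_3
  have q0_1_2_3 : ap s(x0, x1) ≠ ap s(x2, x3) := fun h => s0_1_2_3 (hinj _ _ u0_1 u2_3 h)
  have s0_1_2_4 : (s(x0, x1) : Sym2 V) ≠ s(x2, x4) := by
    intro h; rw [Sym2.eq_iff] at h
    rcases h with ⟨h1, h2⟩ | ⟨h1, h2⟩
    · exact absurd h1 d0_2
    · exact absurd h1 d0_4
  have q0_1_2_4 : ap s(x0, x1) ≠ ap s(x2, x4) := fun h => s0_1_2_4 (hinj _ _ u0_1 u2_4 h)
  have s0_3_0_4 : (s(x0, x3) : Sym2 V) ≠ s(x0, x4) := by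
    intro h; rw [Sym2.eq_iff] at h
    rcases h with ⟨h1, h2⟩ | ⟨h1, h2⟩
    · exact absurd h2 d3_4
    · exact absurd h1 d0_4
  have q0_3_0_4 : ap s(x0, x3) ≠ ap s(x0, x4) := fun h => s0_3_0_4 (hinj _ _ u0_3 u0_4 h)
  have s0_3_1_3 : (s(x0, x3) : Sym2 V) ≠ s(x1, x3) := by
    intro h; rw [Sym2.eq_iff] at h
    rcases h with ⟨h1, h2⟩ | ⟨h1, h2⟩
    · exact absurd h1 d0_1
    · exact absurd h1 d0_3
  have q0_3_1_3 : ap s(x0, x3) ≠ ap s(x1, x3) := fun h => s0_3_1_3 (hinj _ _ u0_3 u1_3 h)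
  have s0_3_1_4 : (s(x0, x3) : Sym2 V) ≠ s(x1, x4) := by
    intro h; rw [Sym2.eq_iff] at h
    rcases h with ⟨h1, h2⟩ | ⟨h1, h2⟩
    · exact absurd h1 d0_1
    · exact absurd h1 d0_4
  have q0_3_1_4 : ap s(x0, x3) ≠ ap s(x1, x4) := fun h => s0_3_1_4 (hinj _ _ u0_3 u1_4 h)
  have s0_3_2_3 : (s(x0, x3) : Sym2 V) ≠ s(x2, x3) := by
    intro h; rw [Sym2.eq_iff] at h
    rcases h with ⟨h1, h2⟩ | ⟨h1, h2⟩
    · exact absurd h1 d0_2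
    · exact absurd h1 d0_3
  have q0_3_2_3 : ap s(x0, x3) ≠ ap s(x2, x3) := fun h => s0_3_2_3 (hinj _ _ u0_3 u2_3 h)
  have s0_3_2_4 : (s(x0, x3) : Sym2 V) ≠ s(x2, x4) := by
    intro h; rw [Sym2.eq_iff] at h
    rcases h with ⟨h1, h2⟩ | ⟨h1, h2⟩
    · exact absurd h1 d0_2
    · exact absurd h1 d0_4
  have q0_3_2_4 : ap s(x0, x3) ≠ ap s(x2, x4) := fun h => s0_3_2_4 (hinj _ _ u0_3 u2_4 h)
  have s0_4_1_3 : (s(x0, x4) : Sym2 V) ≠ s(x1, x3) := by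
    intro h; rw [Sym2.eq_iff] at h
    rcases h with ⟨h1, h2⟩ | ⟨h1, h2⟩
    · exact absurd h1 d0_1
    · exact absurd h1 d0_3
  have q0_4_1_3 : ap s(x0, x4) ≠ ap s(x1, x3) := fun h => s0_4_1_3 (hinj _ _ u0_4 u1_3 h)
  have s0_4_1_4 : (s(x0, x4) : Sym2 V) ≠ s(x1, x4) := by
    intro h; rw [Sym2.eq_iff] at h
    rcases h with ⟨h1, h2⟩ | ⟨h1, h2⟩
    · exact absurd h1 d0_1
    · exact absurd h1 d0_4
  have q0_4_1_4 : ap s(x0, x4) ≠ ap s(x1, x4) := fun h => s0_4_1_4 (hinj _ _ u0_4 u1_4 h)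
  have s0_4_2_3 : (s(x0, x4) : Sym2 V) ≠ s(x2, x3) := by
    intro h; rw [Sym2.eq_iff] at h
    rcases h with ⟨h1, h2⟩ | ⟨h1, h2⟩
    · exact absurd h1 d0_2
    · exact absurd h1 d0_3
  have q0_4_2_3 : ap s(x0, x4) ≠ ap s(x2, x3) := fun h => s0_4_2_3 (hinj _ _ u0_4 u2_3 h)
  have s0_4_2_4 : (s(x0, x4) : Sym2 V) ≠ s(x2, x4) := by
    intro h; rw [Sym2.eq_iff] at h
    rcases h with ⟨h1, h2⟩ | ⟨h1, h2⟩
    · exact absurd h1 d0_2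
    · exact absurd h1 d0_4
  have q0_4_2_4 : ap s(x0, x4) ≠ ap s(x2, x4) := fun h => s0_4_2_4 (hinj _ _ u0_4 u2_4 h)
  have s1_3_1_4 : (s(x1, x3) : Sym2 V) ≠ s(x1, x4) := by
    intro h; rw [Sym2.eq_iff] at h
    rcases h with ⟨h1, h2⟩ | ⟨h1, h2⟩
    · exact absurd h2 d3_4
    · exact absurd h1 d1_4
  have q1_3_1_4 : ap s(x1, x3) ≠ ap s(x1, x4) := fun h => s1_3_1_4 (hinj _ _ u1_3 u1_4 h)
  have s1_3_2_3 : (s(x1, x3) : Sym2 V) ≠ s(x2, x3) := by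
    intro h; rw [Sym2.eq_iff] at h
    rcases h with ⟨h1, h2⟩ | ⟨h1, h2⟩
    · exact absurd h1 d1_2
    · exact absurd h1 d1_3
  have q1_3_2_3 : ap s(x1, x3) ≠ ap s(x2, x3) := fun h => s1_3_2_3 (hinj _ _ u1_3 u2_3 h)
  have s1_3_2_4 : (s(x1, x3) : Sym2 V) ≠ s(x2, x4) := by
    intro h; rw [Sym2.eq_iff] at h
    rcases h with ⟨h1, h2⟩ | ⟨h1, h2⟩
    · exact absurd h1 d1_2
    · exact absurd h1 d1_4
  have q1_3_2_4 : ap s(x1, x3) ≠ ap s(x2, x4) := fun h => s1_3_2_4 (hinj _ _ u1_3 u2_4 h)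
  have s1_4_2_3 : (s(x1, x4) : Sym2 V) ≠ s(x2, x3) := by
    intro h; rw [Sym2.eq_iff] at h
    rcases h with ⟨h1, h2⟩ | ⟨h1, h2⟩
    · exact absurd h1 d1_2
    · exact absurd h1 d1_3
  have q1_4_2_3 : ap s(x1, x4) ≠ ap s(x2, x3) := fun h => s1_4_2_3 (hinj _ _ u1_4 u2_3 h)
  have s1_4_2_4 : (s(x1, x4) : Sym2 V) ≠ s(x2, x4) := by
    intro h; rw [Sym2.eq_iff] at h
    rcases h with ⟨h1, h2⟩ | ⟨h1, h2⟩
    · exact absurd h1 d1_2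
    · exact absurd h1 d1_4
  have q1_4_2_4 : ap s(x1, x4) ≠ ap s(x2, x4) := fun h => s1_4_2_4 (hinj _ _ u1_4 u2_4 h)
  have s2_3_2_4 : (s(x2, x3) : Sym2 V) ≠ s(x2, x4) := by
    intro h; rw [Sym2.eq_iff] at h
    rcases h with ⟨h1, h2⟩ | ⟨h1, h2⟩
    · exact absurd h2 d3_4
    · exact absurd h1 d2_4
  have q2_3_2_4 : ap s(x2, x3) ≠ ap s(x2, x4) := fun h => s2_3_2_4 (hinj _ _ u2_3 u2_4 h)
  set B0 : Set V := {w} with hB0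
  set B1 : Set V := {x0, (ap s(x0, x1)), (ap s(x0, x3)), (ap s(x0, x4))} with hB1
  set B2 : Set V := {x1, (ap s(x1, x3)), (ap s(x1, x4))} with hB2
  set B3 : Set V := ({x2, (ap s(x2, x3)), (ap s(x2, x4))} ∪ {x3, (ap s(x2, x3))}) with hB3
  set B4 : Set V := {x4} with hB4
  have NE0 : B0.Nonempty := ⟨w, by rw [hB0]; simp⟩
  have NE1 : B1.Nonempty := ⟨x0, by rw [hB1]; simp⟩
  have NE2 : B2.Nonempty := ⟨x1, by rw [hB2]; simp⟩
  have NE3 : B3.Nonempty := ⟨x2, by rw [hB3]; simp⟩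
  have NE4 : B4.Nonempty := ⟨x4, by rw [hB4]; simp⟩
  have CN0 : (G.induce B0).Connected := by
    rw [hB0]
    exact induce_connected_star G w {w} rfl (fun y hy => Or.inl hy)
  have CN1 : (G.induce B1).Connected := by
    rw [hB1]
    exact induce_connected_star G x0 {x0, (ap s(x0, x1)), (ap s(x0, x3)), (ap s(x0, x4))} (by simp) (by rintro y (rfl | rfl | rfl | rfl); exacts [Or.inl rfl, Or.inr jA0_1.symm, Or.inr jA0_3.symm, Or.inr jA0_4.symm])
  have CN2 : (G.induce B2).Connected := by
    rw [hB2]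
    exact induce_connected_star G x1 {x1, (ap s(x1, x3)), (ap s(x1, x4))} (by simp) (by rintro y (rfl | rfl | rfl); exacts [Or.inl rfl, Or.inr jA1_3.symm, Or.inr jA1_4.symm])
  have CN3 : (G.induce B3).Connected := by
    rw [hB3]
    exact induce_union_connected (induce_connected_star G x2 {x2, (ap s(x2, x3)), (ap s(x2, x4))} (by simp) (by rintro y (rfl | rfl | rfl); exacts [Or.inl rfl, Or.inr jA2_3.symm, Or.inr jA2_4.symm])).preconnected (induce_connected_star G x3 {x3, (ap s(x2, x3))} (by simp) (by rintro y (rfl | rfl); exacts [Or.inl rfl, Or.inr jB2_3.symm])).preconnected ⟨(ap s(x2, x3)), by simp, by simp⟩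
  have CN4 : (G.induce B4).Connected := by
    rw [hB4]
    exact induce_connected_star G x4 {x4} rfl (fun y hy => Or.inl hy)
  have D0_1 : Disjoint B0 B1 := by
    rw [hB0, hB1]
    refine Set.disjoint_left.2 ?_
    intro z hz hz'
    simp only [Set.mem_insert_iff, Set.mem_singleton_iff, Set.mem_union] at hz hz'
    rcases hz with rfl
    · rcases hz' with h | h | h | h
      exacts [absurd h (e0.symm), absurd h (m0_1.symm), absurd h (m0_3.symm), absurd h (m0_4.symm)]
  have D0_2 : Disjoint B0 B2 := by
    rw [hB0, hB2]
    refine Set.disjoint_left.2 ?_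
    intro z hz hz'
    simp only [Set.mem_insert_iff, Set.mem_singleton_iff, Set.mem_union] at hz hz'
    rcases hz with rfl
    · rcases hz' with h | h | h
      exacts [absurd h (e1.symm), absurd h (m1_3.symm), absurd h (m1_4.symm)]
  have D0_3 : Disjoint B0 B3 := by
    rw [hB0, hB3]
    refine Set.disjoint_left.2 ?_
    intro z hz hz'
    simp only [Set.mem_insert_iff, Set.mem_singleton_iff, Set.mem_union] at hz hz'
    rcases hz with rfl
    · rcases hz' with (h | h | h) | (h | h)
      exacts [absurd h (e2.symm), absurd h (m2_3.symm), absurd h (m2_4.symm), absurd h (e3.symm), absurd h (m2_3.symm)]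
  have D0_4 : Disjoint B0 B4 := by
    rw [hB0, hB4]
    refine Set.disjoint_left.2 ?_
    intro z hz hz'
    simp only [Set.mem_insert_iff, Set.mem_singleton_iff, Set.mem_union] at hz hz'
    rcases hz with rfl
    · exact absurd hz' (e4.symm)
  have D1_2 : Disjoint B1 B2 := by
    rw [hB1, hB2]
    refine Set.disjoint_left.2 ?_
    intro z hz hz'
    simp only [Set.mem_insert_iff, Set.mem_singleton_iff, Set.mem_union] at hz hz'
    rcases hz with rfl | rfl | rfl | rfl
    · rcases hz' with h | h | h
      exacts [absurd h (d0_1), absurd h ((ab1_3_0).symm), absurd h ((ab1_4_0).symm)]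
    · rcases hz' with h | h | h
      exacts [absurd h (ab0_1_1), absurd h (q0_1_1_3), absurd h (q0_1_1_4)]
    · rcases hz' with h | h | h
      exacts [absurd h (ab0_3_1), absurd h (q0_3_1_3), absurd h (q0_3_1_4)]
    · rcases hz' with h | h | h
      exacts [absurd h (ab0_4_1), absurd h (q0_4_1_3), absurd h (q0_4_1_4)]
  have D1_3 : Disjoint B1 B3 := by
    rw [hB1, hB3]
    refine Set.disjoint_left.2 ?_
    intro z hz hz'
    simp only [Set.mem_insert_iff, Set.mem_singleton_iff, Set.mem_union] at hz hz'
    rcases hz with rfl | rfl | rfl | rfl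
    · rcases hz' with (h | h | h) | (h | h)
      exacts [absurd h (d0_2), absurd h ((ab2_3_0).symm), absurd h ((ab2_4_0).symm), absurd h (d0_3), absurd h ((ab2_3_0).symm)]
    · rcases hz' with (h | h | h) | (h | h)
      exacts [absurd h (ab0_1_2), absurd h (q0_1_2_3), absurd h (q0_1_2_4), absurd h (ab0_1_3), absurd h (q0_1_2_3)]
    · rcases hz' with (h | h | h) | (h | h)
      exacts [absurd h (ab0_3_2), absurd h (q0_3_2_3), absurd h (q0_3_2_4), absurd h (ab0_3_3), absurd h (q0_3_2_3)]
    · rcases hz' with (h | h | h) | (h | h)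
      exacts [absurd h (ab0_4_2), absurd h (q0_4_2_3), absurd h (q0_4_2_4), absurd h (ab0_4_3), absurd h (q0_4_2_3)]
  have D1_4 : Disjoint B1 B4 := by
    rw [hB1, hB4]
    refine Set.disjoint_left.2 ?_
    intro z hz hz'
    simp only [Set.mem_insert_iff, Set.mem_singleton_iff, Set.mem_union] at hz hz'
    rcases hz with rfl | rfl | rfl | rfl
    · exact absurd hz' (d0_4)
    · exact absurd hz' (ab0_1_4)
    · exact absurd hz' (ab0_3_4)
    · exact absurd hz' (ab0_4_4)
  have D2_3 : Disjoint B2 B3 := by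
    rw [hB2, hB3]
    refine Set.disjoint_left.2 ?_
    intro z hz hz'
    simp only [Set.mem_insert_iff, Set.mem_singleton_iff, Set.mem_union] at hz hz'
    rcases hz with rfl | rfl | rfl
    · rcases hz' with (h | h | h) | (h | h)
      exacts [absurd h (d1_2), absurd h ((ab2_3_1).symm), absurd h ((ab2_4_1).symm), absurd h (d1_3), absurd h ((ab2_3_1).symm)]
    · rcases hz' with (h | h | h) | (h | h)
      exacts [absurd h (ab1_3_2), absurd h (q1_3_2_3), absurd h (q1_3_2_4), absurd h (ab1_3_3), absurd h (q1_3_2_3)]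
    · rcases hz' with (h | h | h) | (h | h)
      exacts [absurd h (ab1_4_2), absurd h (q1_4_2_3), absurd h (q1_4_2_4), absurd h (ab1_4_3), absurd h (q1_4_2_3)]
  have D2_4 : Disjoint B2 B4 := by
    rw [hB2, hB4]
    refine Set.disjoint_left.2 ?_
    intro z hz hz'
    simp only [Set.mem_insert_iff, Set.mem_singleton_iff, Set.mem_union] at hz hz'
    rcases hz with rfl | rfl | rfl
    · exact absurd hz' (d1_4)
    · exact absurd hz' (ab1_3_4)
    · exact absurd hz' (ab1_4_4)
  have D3_4 : Disjoint B3 B4 := by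
    rw [hB3, hB4]
    refine Set.disjoint_left.2 ?_
    intro z hz hz'
    simp only [Set.mem_insert_iff, Set.mem_singleton_iff, Set.mem_union] at hz hz'
    rcases hz with (rfl | rfl | rfl) | (rfl | rfl)
    · exact absurd hz' (d2_4)
    · exact absurd hz' (ab2_3_4)
    · exact absurd hz' (ab2_4_4)
    · exact absurd hz' (d3_4)
    · exact absurd hz' (ab2_3_4)
  have Esymm : ∀ (s t : Set V), (∃ v₁ ∈ s, ∃ v₂ ∈ t, G.Adj v₁ v₂) → ∃ v₁ ∈ t, ∃ v₂ ∈ s, G.Adj v₁ v₂ := fun s t ⟨a, ha, b, hb, hab⟩ => ⟨b, hb, a, ha, hab.symm⟩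
  have E0_1 : ∃ v₁ ∈ B0, ∃ v₂ ∈ B1, G.Adj v₁ v₂ := ⟨w, by rw [hB0]; simp, x0, by rw [hB1]; simp, hx0⟩
  have E0_2 : ∃ v₁ ∈ B0, ∃ v₂ ∈ B2, G.Adj v₁ v₂ := ⟨w, by rw [hB0]; simp, x1, by rw [hB2]; simp, hx1⟩
  have E0_3 : ∃ v₁ ∈ B0, ∃ v₂ ∈ B3, G.Adj v₁ v₂ := ⟨w, by rw [hB0]; simp, x2, by rw [hB3]; simp, hx2⟩
  have E0_4 : ∃ v₁ ∈ B0, ∃ v₂ ∈ B4, G.Adj v₁ v₂ := ⟨w, by rw [hB0]; simp, x4, by rw [hB4]; simp, hx4⟩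
  have E1_2 : ∃ v₁ ∈ B1, ∃ v₂ ∈ B2, G.Adj v₁ v₂ := ⟨(ap s(x0, x1)), by rw [hB1]; simp, x1, by rw [hB2]; simp, jB0_1⟩
  have E1_3 : ∃ v₁ ∈ B1, ∃ v₂ ∈ B3, G.Adj v₁ v₂ := ⟨(ap s(x0, x3)), by rw [hB1]; simp, x3, by rw [hB3]; simp, jB0_3⟩
  have E1_4 : ∃ v₁ ∈ B1, ∃ v₂ ∈ B4, G.Adj v₁ v₂ := ⟨(ap s(x0, x4)), by rw [hB1]; simp, x4, by rw [hB4]; simp, jB0_4⟩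
  have E2_3 : ∃ v₁ ∈ B2, ∃ v₂ ∈ B3, G.Adj v₁ v₂ := ⟨(ap s(x1, x3)), by rw [hB2]; simp, x3, by rw [hB3]; simp, jB1_3⟩
  have E2_4 : ∃ v₁ ∈ B2, ∃ v₂ ∈ B4, G.Adj v₁ v₂ := ⟨(ap s(x1, x4)), by rw [hB2]; simp, x4, by rw [hB4]; simp, jB1_4⟩
  have E3_4 : ∃ v₁ ∈ B3, ∃ v₂ ∈ B4, G.Adj v₁ v₂ := ⟨(ap s(x2, x4)), by rw [hB3]; simp, x4, by rw [hB4]; simp, jB2_4⟩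
  refine ⟨![B0, B1, B2, B3, B4], ?_, ?_, ?_, ?_⟩
  · intro i; fin_cases i
    exacts [NE0, NE1, NE2, NE3, NE4]
  · intro i; fin_cases i
    exacts [CN0, CN1, CN2, CN3, CN4]
  · intro i j hij; fin_cases i <;> fin_cases j
    exacts [absurd rfl hij, D0_1, D0_2, D0_3, D0_4, D0_1.symm, absurd rfl hij, D1_2, D1_3, D1_4, D0_2.symm, D1_2.symm, absurd rfl hij, D2_3, D2_4, D0_3.symm, D1_3.symm, D2_3.symm, absurd rfl hij, D3_4, D0_4.symm, D1_4.symm, D2_4.symm, D3_4.symm, absurd rfl hij]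
  · intro i j hadj; fin_cases i <;> fin_cases j
    exacts [absurd rfl hadj.ne, E0_1, E0_2, E0_3, E0_4, Esymm _ _ E0_1, absurd rfl hadj.ne, E1_2, E1_3, E1_4, Esymm _ _ E0_2, Esymm _ _ E1_2, absurd rfl hadj.ne, E2_3, E2_4, Esymm _ _ E0_3, Esymm _ _ E1_3, Esymm _ _ E2_3, absurd rfl hadj.ne, E3_4, Esymm _ _ E0_4, Esymm _ _ E1_4, Esymm _ _ E2_4, Esymm _ _ E3_4, absurd rfl hadj.ne]

lemma exists_four {α : Type} (s : Finset α) (h : 4 ≤ s.card) :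
    ∃ a b c d : α, a ∈ s ∧ b ∈ s ∧ c ∈ s ∧ d ∈ s ∧ a ≠ b ∧ a ≠ c ∧ a ≠ d ∧ b ≠ c ∧ b ≠ d ∧ c ≠ d := by
  classical
  obtain ⟨t, hts, ht⟩ := Finset.exists_subset_card_eq h
  rw [show (4 : ℕ) = 3 + 1 from rfl, Finset.card_eq_succ] at ht
  obtain ⟨a, t3, hat, rfl, h3⟩ := ht
  obtain ⟨x, y, z, hxy, hxz, hyz, rfl⟩ := Finset.card_eq_three.1 h3
  refine ⟨a, x, y, z, hts (by simp), hts (by simp), hts (by simp), hts (by simp),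
    ?_, ?_, ?_, hxy, hxz, hyz⟩ <;>
  · rintro rfl; simp at hat
  
lemma sym2_repr {α : Type} (e : Sym2 α) : ∃ a b : α, e = s(a, b) := by
  induction e using Sym2.ind with
  | _ a b => exact ⟨a, b, rfl⟩

lemma sym2_eq_left {α : Type} {c z1 z2 : α} (h : s(c, z1) = s(c, z2)) : z1 = z2 := by
  rw [Sym2.eq_iff] at h
  rcases h with ⟨-, h⟩ | ⟨h1, h2⟩
  · exact h
  · rw [h2, ← h1]

lemma crux [Fintype V] (G : SimpleGraph V)
    (hK5 : ¬ HasMinor G (⊤ : SimpleGraph (Fin 5)))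
    (hK33 : ¬ HasMinor G (completeBipartiteGraph (Fin 3) (Fin 3)))
    (w : V) (hdegw : (G.neighborSet w).ncard ≤ 6)
    (P : Finset (Sym2 V))
    (hPe : ∀ p ∈ P, ∀ a b : V, p = s(a, b) → G.Adj w a ∧ G.Adj w b)
    (hPd : ∀ p ∈ P, ¬ p.IsDiag)
    (ap : Sym2 V → V)
    (hap : ∀ p, p ∈ P → ∀ a b : V, p = s(a, b) → G.Adj (ap p) a ∧ G.Adj (ap p) b)
    (hax : ∀ p, p ∈ P → ¬ G.Adj w (ap p) ∧ ap p ≠ w)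
    (hinj : ∀ p, p ∈ P → ∀ q, q ∈ P → ap p = ap q → p = q) :
    P.card ≤ 9 := by
  classical
  by_contra hP10'
  push_neg at hP10'
  have hP10 : 10 ≤ P.card := hP10'
  have hinj' : ∀ p q, (p ∈ P) → (q ∈ P) → ap p = ap q → p = q := fun p q hp hq => hinj p hp q hq
  set T : Finset V := (Set.toFinite (G.neighborSet w)).toFinset with hTdef
  have hTmem : ∀ a, a ∈ T ↔ G.Adj w a := by
    intro a; rw [hTdef, Set.Finite.mem_toFinset, SimpleGraph.mem_neighborSet]
  have hTcard : T.card = (G.neighborSet w).ncard := by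
    rw [hTdef, Set.ncard_eq_toFinset_card']
    congr 1
    apply Finset.coe_injective
    simp
  have hT6 : T.card ≤ 6 := by omega
  have adjT : ∀ a, a ∈ T → G.Adj w a := fun a ha => (hTmem a).1 ha
  have hdiag : ∀ a : V, Sym2.diag a = s(a, a) := fun a => rfl
  have hPT : ∀ p, p ∈ P → p ∈ T.sym2 := by
    intro p hp
    obtain ⟨a, b, rfl⟩ := sym2_repr p
    obtain ⟨h1, h2⟩ := hPe _ hp a b rfl
    rw [Finset.mk_mem_sym2_iff]
    exact ⟨(hTmem a).2 h1, (hTmem b).2 h2⟩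
  set Dg : Finset (Sym2 V) := T.image Sym2.diag with hDg
  have hDgcard : Dg.card = T.card := Finset.card_image_of_injective _ Sym2.diag_injective
  have hDgsub : Dg ⊆ T.sym2 := by
    intro p hp
    rw [hDg, Finset.mem_image] at hp
    obtain ⟨a, ha, rfl⟩ := hp
    rw [hdiag a, Finset.mk_mem_sym2_iff]
    exact ⟨ha, ha⟩
  have hPDg : Disjoint P Dg := by
    rw [Finset.disjoint_left]
    intro p hp hpd
    apply hPd p hp
    rw [hDg, Finset.mem_image] at hpd
    obtain ⟨a, _, rfl⟩ := hpd
    rw [hdiag a]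
    exact Sym2.mk_isDiag_iff.2 rfl
  have hkey : P.card + T.card ≤ (T.card + 1).choose 2 := by
    have hle := Finset.card_le_card (Finset.union_subset (fun p hp => hPT p hp) hDgsub)
    rw [Finset.card_union_of_disjoint hPDg, Finset.card_sym2, hDgcard] at hle
    exact hle
  have h56 : T.card = 5 ∨ T.card = 6 := by
    have hc : ∀ n : Fin 7, (n : ℕ) ≠ 5 → (n : ℕ) ≠ 6 → ((n : ℕ) + 1).choose 2 < 10 + (n : ℕ) := by decide
    by_contra hcon
    push_neg at hcon
    have := hc ⟨T.card, by omega⟩ hcon.1 hcon.2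
    simp only [] at this
    omega
  set OD : Finset (Sym2 V) := T.sym2 \ Dg with hOD
  have hPOD : P ⊆ OD := fun p hp =>
    Finset.mem_sdiff.2 ⟨hPT p hp, fun hd => (Finset.disjoint_left.1 hPDg hp) hd⟩
  have hODcard : OD.card = (T.card + 1).choose 2 - T.card := by
    rw [hOD, Finset.card_sdiff_of_subset hDgsub, Finset.card_sym2, hDgcard]
  have hODmem : ∀ a b : V, a ∈ T → b ∈ T → a ≠ b → s(a, b) ∈ OD := by
    intro a b ha hb hab
    rw [hOD, Finset.mem_sdiff]
    refine ⟨Finset.mk_mem_sym2_iff.2 ⟨ha, hb⟩, ?_⟩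
    intro hd
    rw [hDg, Finset.mem_image] at hd
    obtain ⟨c, _, hc⟩ := hd
    rw [hdiag c, Sym2.eq_iff] at hc
    rcases hc with ⟨h1, h2⟩ | ⟨h1, h2⟩
    · exact hab (h1.symm.trans h2)
    · exact hab (h2.symm.trans h1)
  rcases h56 with h5 | h6
  · -- T.card = 5 : all pairs used
    have hOD10 : OD.card = 10 := by rw [hODcard, h5]; rfl
    have hPeq : P = OD := Finset.eq_of_subset_of_card_le hPOD (by omega)
    have allused : ∀ a b : V, a ∈ T → b ∈ T → a ≠ b → s(a, b) ∈ P := by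
      intro a b ha hb hab
      rw [hPeq]; exact hODmem a b ha hb hab
    obtain ⟨x0, x1, x2, x3, m0, m1, m2, m3, d01, d02, d03, d12, d13, d23⟩ :=
      exists_four T (by omega)
    exact patternA G hK5 w x0 x1 x2 x3 (adjT _ m0) (adjT _ m1) (adjT _ m2) (adjT _ m3)
      d01 d02 d03 d12 d13 d23 (fun p => p ∈ P) ap hap hax hinj'
      (allused _ _ m0 m1 d01) (allused _ _ m0 m2 d02) (allused _ _ m0 m3 d03)
      (allused _ _ m1 m2 d12) (allused _ _ m1 m3 d13) (allused _ _ m2 m3 d23)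
  · -- T.card = 6
    have hOD15 : OD.card = 15 := by rw [hODcard, h6]; rfl
    set U : Finset (Sym2 V) := OD \ P with hU
    have hU5 : U.card ≤ 5 := by
      rw [hU, Finset.card_sdiff_of_subset hPOD]
      omega
    have husd : ∀ a b : V, a ∈ T → b ∈ T → a ≠ b → s(a, b) ∉ U → s(a, b) ∈ P := by
      intro a b ha hb hab hnu
      by_contra hnp
      exact hnu (by rw [hU, Finset.mem_sdiff]; exact ⟨hODmem a b ha hb hab, hnp⟩)
    have hUOD : ∀ e, e ∈ U → e ∈ OD := fun e he => (Finset.mem_sdiff.1 (hU ▸ he)).1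
    have hUend : ∀ e, e ∈ U → ∀ a, a ∈ e → a ∈ T := by
      intro e he a ha
      have := (Finset.mem_sdiff.1 (hUOD e he)).1
      exact (Finset.mem_sym2_iff).1 this a ha
    have hUnd : ∀ e, e ∈ U → ¬ e.IsDiag := by
      intro e he hd
      obtain ⟨c, hc⟩ := (show ∃ c, Sym2.diag c = e by obtain ⟨a, b, rfl⟩ := sym2_repr e; exact ⟨a, by cases Sym2.mk_isDiag_iff.1 hd; rfl⟩)
      have hce : c ∈ e := by rw [← hc, hdiag c]; exact Sym2.mem_iff.2 (Or.inl rfl)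
      have hcT : c ∈ T := hUend e he c hce
      have : e ∈ Dg := by rw [hDg, Finset.mem_image]; exact ⟨c, hcT, hc⟩
      exact (Finset.mem_sdiff.1 (hUOD e he)).2 this
    by_cases C1 : ∃ (c : V) (e1 e2 e3 : Sym2 V), e1 ∈ U ∧ e2 ∈ U ∧ e3 ∈ U ∧
        c ∈ e1 ∧ c ∈ e2 ∧ c ∈ e3 ∧ e1 ≠ e2 ∧ e1 ≠ e3 ∧ e2 ≠ e3
    · obtain ⟨c, e1, e2, e3, h1U, h2U, h3U, hc1, hc2, hc3, h12, h13, h23⟩ := C1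
      have hcT : c ∈ T := hUend _ h1U c hc1
      set Uv : Finset (Sym2 V) := U.filter (fun e => c ∈ e) with hUv
      set Ur : Finset (Sym2 V) := U.filter (fun e => ¬ c ∈ e) with hUr
      have hUv3 : 3 ≤ Uv.card := by
        have hsub : ({e1, e2, e3} : Finset (Sym2 V)) ⊆ Uv := by
          intro e he
          simp only [Finset.mem_insert, Finset.mem_singleton] at he
          rw [hUv, Finset.mem_filter]
          rcases he with rfl | rfl | rfl
          exacts [⟨h1U, hc1⟩, ⟨h2U, hc2⟩, ⟨h3U, hc3⟩]
        have hcc : ({e1, e2, e3} : Finset (Sym2 V)).card = 3 := by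
          rw [Finset.card_insert_of_notMem (by simp [h12, h13]),
            Finset.card_insert_of_notMem (by simp [h23]), Finset.card_singleton]
        calc (3 : ℕ) = ({e1, e2, e3} : Finset (Sym2 V)).card := hcc.symm
          _ ≤ Uv.card := Finset.card_le_card hsub
      have hUrU : ∀ e, e ∈ Ur → e ∈ U := by
        intro e he
        rw [hUr, Finset.mem_filter] at he
        exact he.1
      have hUrc : ∀ e, e ∈ Ur → ¬ c ∈ e := by
        intro e he
        rw [hUr, Finset.mem_filter] at he
        exact he.2
      have hUr2 : Ur.card ≤ 2 := by
        have hfc := Finset.card_filter_add_card_filter_not (s := U) (p := fun e => c ∈ e)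
        rw [← hUv, ← hUr] at hfc
        omega
      set W5 : Finset V := T.erase c with hW5
      have hW5card : W5.card = 5 := by rw [hW5, Finset.card_erase_of_mem hcT, h6]
      have hW5T : W5 ⊆ T := by rw [hW5]; exact Finset.erase_subset c T
      have hW5c : ∀ z, z ∈ W5 → z ≠ c := by
        intro z hz
        rw [hW5] at hz
        exact Finset.ne_of_mem_erase hz
      have hUrW : ∀ z1 z2 : V, z1 ∈ W5 → z2 ∈ W5 → s(z1, z2) ∈ U → s(z1, z2) ∈ Ur := by
        intro z1 z2 hz1 hz2 hU'
        rw [hUr, Finset.mem_filter]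
        refine ⟨hU', fun hcm => ?_⟩
        rcases Sym2.mem_iff.1 hcm with rfl | rfl
        exacts [hW5c _ hz1 rfl, hW5c _ hz2 rfl]
      have finish4 : ∀ z : V, (∀ e, e ∈ Ur → z ∈ e) → False := by
        intro z hz
        have hW4 : 4 ≤ (W5.erase z).card := by
          have := Finset.pred_card_le_card_erase (s := W5) (a := z)
          omega
        obtain ⟨x0, x1, x2, x3, m0, m1, m2, m3, d01, d02, d03, d12, d13, d23⟩ :=
          exists_four _ hW4
        have hmT : ∀ a, a ∈ W5.erase z → a ∈ T := fun a ha => hW5T (Finset.erase_subset _ _ ha)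
        have hmW : ∀ a, a ∈ W5.erase z → a ∈ W5 := fun a ha => Finset.erase_subset _ _ ha
        have hmz : ∀ a, a ∈ W5.erase z → a ≠ z := fun a ha => Finset.ne_of_mem_erase ha
        have allused : ∀ a b : V, a ∈ W5.erase z → b ∈ W5.erase z → a ≠ b → s(a, b) ∈ P := by
          intro a b ha hb hab
          refine husd a b (hmT a ha) (hmT b hb) hab (fun hU' => ?_)
          have hur := hUrW a b (hmW a ha) (hmW b hb) hU'
          rcases Sym2.mem_iff.1 (hz _ hur) with rfl | rfl
          exacts [hmz _ ha rfl, hmz _ hb rfl]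
        exact patternA G hK5 w x0 x1 x2 x3 (adjT _ (hmT _ m0)) (adjT _ (hmT _ m1))
          (adjT _ (hmT _ m2)) (adjT _ (hmT _ m3)) d01 d02 d03 d12 d13 d23
          (fun pp => pp ∈ P) ap hap hax hinj'
          (allused _ _ m0 m1 d01) (allused _ _ m0 m2 d02) (allused _ _ m0 m3 d03)
          (allused _ _ m1 m2 d12) (allused _ _ m1 m3 d13) (allused _ _ m2 m3 d23)
      rcases (by omega : Ur.card = 0 ∨ Ur.card = 1 ∨ Ur.card = 2) with h0 | h1 | h2
      · exact finish4 c (fun e he => absurd he (by simp [Finset.card_eq_zero.1 h0]))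
      · obtain ⟨f, hf⟩ := Finset.card_eq_one.1 h1
        obtain ⟨a, b, hab'⟩ := sym2_repr f
        refine finish4 a (fun e he => ?_)
        rw [hf, Finset.mem_singleton] at he
        rw [he, hab']
        exact Sym2.mem_iff.2 (Or.inl rfl)
      · obtain ⟨f, g, hfg, hfgeq⟩ := Finset.card_eq_two.1 h2
        by_cases hsh : ∃ z, z ∈ f ∧ z ∈ g
        · obtain ⟨z, hzf, hzg⟩ := hsh
          refine finish4 z (fun e he => ?_)
          rw [hfgeq] at he
          simp only [Finset.mem_insert, Finset.mem_singleton] at he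
          rcases he with rfl | rfl
          exacts [hzf, hzg]
        · push_neg at hsh
          obtain ⟨a, b, rfl⟩ := sym2_repr f
          obtain ⟨a', b', rfl⟩ := sym2_repr g
          have hfUr : s(a, b) ∈ Ur := by rw [hfgeq]; simp
          have hgUr : s(a', b') ∈ Ur := by rw [hfgeq]; simp
          have hab : a ≠ b := fun h => hUnd _ (hUrU _ hfUr) (Sym2.mk_isDiag_iff.2 h)
          have ha'b' : a' ≠ b' := fun h => hUnd _ (hUrU _ hgUr) (Sym2.mk_isDiag_iff.2 h)
          have hma : a ∈ s(a, b) := Sym2.mem_iff.2 (Or.inl rfl)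
          have hmb : b ∈ s(a, b) := Sym2.mem_iff.2 (Or.inr rfl)
          have hma' : a' ∈ s(a', b') := Sym2.mem_iff.2 (Or.inl rfl)
          have hmb' : b' ∈ s(a', b') := Sym2.mem_iff.2 (Or.inr rfl)
          have haa' : a ≠ a' := fun h => hsh a hma (h ▸ hma')
          have hab' : a ≠ b' := fun h => hsh a hma (h ▸ hmb')
          have hba' : b ≠ a' := fun h => hsh b hmb (h ▸ hma')
          have hbb' : b ≠ b' := fun h => hsh b hmb (h ▸ hmb')
          have hWmem : ∀ z e, e ∈ Ur → z ∈ e → z ∈ W5 := by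
            intro z e he hze
            rw [hW5]
            exact Finset.mem_erase.2 ⟨fun h => hUrc e he (h ▸ hze), hUend _ (hUrU _ he) z hze⟩
          have haW : a ∈ W5 := hWmem a _ hfUr hma
          have hbW : b ∈ W5 := hWmem b _ hfUr hmb
          have ha'W : a' ∈ W5 := hWmem a' _ hgUr hma'
          have hb'W : b' ∈ W5 := hWmem b' _ hgUr hmb'
          have hsub4 : ({a, b, a', b'} : Finset V) ⊆ W5 := by
            intro z hz
            simp only [Finset.mem_insert, Finset.mem_singleton] at hz
            rcases hz with rfl | rfl | rfl | rfl
            exacts [haW, hbW, ha'W, hb'W]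
          have hc4 : ({a, b, a', b'} : Finset V).card = 4 := by
            rw [Finset.card_insert_of_notMem (by simp [hab, haa', hab']),
              Finset.card_insert_of_notMem (by simp [hba', hbb']),
              Finset.card_insert_of_notMem (by simp [ha'b']), Finset.card_singleton]
          have hE1 : (W5 \ ({a, b, a', b'} : Finset V)).card = 1 := by
            rw [Finset.card_sdiff_of_subset hsub4, hc4, hW5card]
          obtain ⟨e5, hE⟩ := Finset.card_eq_one.1 hE1
          have he5mem : e5 ∈ W5 \ ({a, b, a', b'} : Finset V) := by rw [hE]; simp
          have he5W : e5 ∈ W5 := (Finset.mem_sdiff.1 he5mem).1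
          have he5not : e5 ∉ ({a, b, a', b'} : Finset V) := (Finset.mem_sdiff.1 he5mem).2
          have he5a : e5 ≠ a := fun h => he5not (by simp [h])
          have he5b : e5 ≠ b := fun h => he5not (by simp [h])
          have he5a' : e5 ≠ a' := fun h => he5not (by simp [h])
          have he5b' : e5 ≠ b' := fun h => he5not (by simp [h])
          have notU : ∀ z1 z2 : V, z1 ∈ W5 → z2 ∈ W5 → s(z1, z2) ≠ s(a, b) →
              s(z1, z2) ≠ s(a', b') → s(z1, z2) ∉ U := by
            intro z1 z2 hz1 hz2 hne1 hne2 hU'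
            have := hUrW z1 z2 hz1 hz2 hU'
            rw [hfgeq] at this
            simp only [Finset.mem_insert, Finset.mem_singleton] at this
            rcases this with hh | hh
            exacts [hne1 hh, hne2 hh]
          have pairne : ∀ z1 z2 w1 w2 : V, z1 ≠ w1 → z1 ≠ w2 →
              s(z1, z2) ≠ s(w1, w2) := by
            intro z1 z2 w1 w2 hn1 hn2 h
            rw [Sym2.eq_iff] at h
            rcases h with ⟨hh1, hh2⟩ | ⟨hh1, hh2⟩
            exacts [hn1 hh1, hn2 hh1]
          have pairne2 : ∀ z1 z2 w1 w2 : V, z2 ≠ w1 → z2 ≠ w2 →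
              s(z1, z2) ≠ s(w1, w2) := by
            intro z1 z2 w1 w2 hn1 hn2 h
            rw [Sym2.eq_iff] at h
            rcases h with ⟨hh1, hh2⟩ | ⟨hh1, hh2⟩
            exacts [hn2 hh2, hn1 hh2]
          have uaa' : s(a, a') ∈ P := husd a a' (hW5T haW) (hW5T ha'W) haa'
            (notU _ _ haW ha'W (fun h => hba' (sym2_eq_left h).symm)
              (pairne _ _ _ _ haa' hab'))
          have uab' : s(a, b') ∈ P := husd a b' (hW5T haW) (hW5T hb'W) hab'
            (notU _ _ haW hb'W (fun h => hbb' (sym2_eq_left h).symm)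
              (pairne _ _ _ _ haa' hab'))
          have uae : s(a, e5) ∈ P := husd a e5 (hW5T haW) (hW5T he5W) (Ne.symm he5a)
            (notU _ _ haW he5W (fun h => he5b (sym2_eq_left h))
              (pairne _ _ _ _ haa' hab'))
          have uba' : s(b, a') ∈ P := husd b a' (hW5T hbW) (hW5T ha'W) hba'
            (notU _ _ hbW ha'W
              (pairne2 _ _ _ _ (Ne.symm haa') (Ne.symm hba'))
              (pairne _ _ _ _ hba' hbb'))
          have ubb' : s(b, b') ∈ P := husd b b' (hW5T hbW) (hW5T hb'W) hbb'
            (notU _ _ hbW hb'W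
              (pairne2 _ _ _ _ (Ne.symm hab') (Ne.symm hbb'))
              (pairne _ _ _ _ hba' hbb'))
          have ube : s(b, e5) ∈ P := husd b e5 (hW5T hbW) (hW5T he5W) (Ne.symm he5b)
            (notU _ _ hbW he5W
              (pairne2 _ _ _ _ he5a he5b)
              (pairne _ _ _ _ hba' hbb'))
          exact patternB G hK33 w a b a' b' e5 (adjT _ (hW5T haW)) (adjT _ (hW5T hbW))
            (adjT _ (hW5T ha'W)) (adjT _ (hW5T hb'W)) (adjT _ (hW5T he5W))
            hab haa' hab' (Ne.symm he5a) hba' hbb' (Ne.symm he5b) ha'b' (Ne.symm he5a')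
            (Ne.symm he5b')
            (fun pp => pp ∈ P) ap hap hax hinj'
            uaa' uab' uae uba' ubb' ube
    · have htwo : ∀ c z1 z2 z3 : V, z1 ≠ z2 → z1 ≠ z3 → z2 ≠ z3 →
          s(c, z1) ∈ U → s(c, z2) ∈ U → s(c, z3) ∈ U → False := by
        intro c z1 z2 z3 h12 h13 h23 hu1 hu2 hu3
        exact C1 ⟨c, s(c, z1), s(c, z2), s(c, z3), hu1, hu2, hu3,
          Sym2.mem_iff.2 (Or.inl rfl), Sym2.mem_iff.2 (Or.inl rfl), Sym2.mem_iff.2 (Or.inl rfl),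
          fun h => h12 (sym2_eq_left h), fun h => h13 (sym2_eq_left h),
          fun h => h23 (sym2_eq_left h)⟩
      by_cases C2 : ∃ c z1 z2 : V, z1 ≠ z2 ∧ s(c, z1) ∈ U ∧ s(c, z2) ∈ U
      · -- CASE 2b
        obtain ⟨v, x, y, hxy, hf1U, hf2U⟩ := C2
        have hvx : v ≠ x := fun h => hUnd _ hf1U (Sym2.mk_isDiag_iff.2 h)
        have hvy : v ≠ y := fun h => hUnd _ hf2U (Sym2.mk_isDiag_iff.2 h)
        have hvT : v ∈ T := hUend _ hf1U v (Sym2.mem_iff.2 (Or.inl rfl))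
        have hxT : x ∈ T := hUend _ hf1U x (Sym2.mem_iff.2 (Or.inr rfl))
        have hyT : y ∈ T := hUend _ hf2U y (Sym2.mem_iff.2 (Or.inr rfl))
        have hxvU : s(x, v) ∈ U := by rw [Sym2.eq_swap]; exact hf1U
        have hyvU : s(y, v) ∈ U := by rw [Sym2.eq_swap]; exact hf2U
        have hsub3 : ({v, x, y} : Finset V) ⊆ T := by
          intro z hz
          simp only [Finset.mem_insert, Finset.mem_singleton] at hz
          rcases hz with rfl | rfl | rfl
          exacts [hvT, hxT, hyT]
        have hc3 : ({v, x, y} : Finset V).card = 3 := by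
          rw [Finset.card_insert_of_notMem (by simp [hvx, hvy]),
            Finset.card_insert_of_notMem (by simp [hxy]), Finset.card_singleton]
        have hR3 : (T \ ({v, x, y} : Finset V)).card = 3 := by
          rw [Finset.card_sdiff_of_subset hsub3, hc3, h6]
        obtain ⟨p, q, r, hpq, hpr, hqr, hReq⟩ := Finset.card_eq_three.1 hR3
        have hmemR : ∀ z, z ∈ (T \ ({v, x, y} : Finset V)) → z ∈ T ∧ z ≠ v ∧ z ≠ x ∧ z ≠ y := by
          intro z hz
          rw [Finset.mem_sdiff] at hz
          refine ⟨hz.1, ?_, ?_, ?_⟩ <;> · rintro rfl; exact hz.2 (by simp)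
        obtain ⟨hpT, hpv, hpx, hpy⟩ := hmemR p (by rw [hReq]; simp)
        obtain ⟨hqT, hqv, hqx, hqy⟩ := hmemR q (by rw [hReq]; simp)
        obtain ⟨hrT, hrv, hrx, hry⟩ := hmemR r (by rw [hReq]; simp)
        have core : ∀ a1 a2 a3 : V, a1 ∈ T → a2 ∈ T → a3 ∈ T → a1 ≠ a2 → a1 ≠ a3 → a2 ≠ a3 →
            a1 ≠ v → a1 ≠ x → a1 ≠ y → a2 ≠ v → a2 ≠ x → a2 ≠ y → a3 ≠ v → a3 ≠ x → a3 ≠ y →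
            s(x, a1) ∈ U → False := by
          intro a1 a2 a3 h1T h2T h3T h12 h13 h23 h1v h1x h1y h2v h2x h2y h3v h3x h3y hxa1
          have hxa1U : s(a1, x) ∈ U := by rw [Sym2.eq_swap]; exact hxa1
          have uva1 : s(v, a1) ∈ P := husd v a1 hvT h1T (Ne.symm h1v)
            (fun hU' => htwo v x y a1 hxy (Ne.symm h1x) (Ne.symm h1y) hf1U hf2U hU')
          have uva2 : s(v, a2) ∈ P := husd v a2 hvT h2T (Ne.symm h2v)
            (fun hU' => htwo v x y a2 hxy (Ne.symm h2x) (Ne.symm h2y) hf1U hf2U hU')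
          have uva3 : s(v, a3) ∈ P := husd v a3 hvT h3T (Ne.symm h3v)
            (fun hU' => htwo v x y a3 hxy (Ne.symm h3x) (Ne.symm h3y) hf1U hf2U hU')
          have uxa2 : s(x, a2) ∈ P := husd x a2 hxT h2T (Ne.symm h2x)
            (fun hU' => htwo x v a1 a2 (Ne.symm h1v) (Ne.symm h2v) h12 hxvU hxa1 hU')
          have uxa3 : s(x, a3) ∈ P := husd x a3 hxT h3T (Ne.symm h3x)
            (fun hU' => htwo x v a1 a3 (Ne.symm h1v) (Ne.symm h3v) h13 hxvU hxa1 hU')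
          have uxy : s(x, y) ∈ P := husd x y hxT hyT hxy
            (fun hU' => htwo x v a1 y (Ne.symm h1v) hvy h1y hxvU hxa1 hU')
          by_cases hya1 : s(y, a1) ∈ U
          · have hya1U' : s(a1, y) ∈ U := by rw [Sym2.eq_swap]; exact hya1
            have upa2 : s(a1, a2) ∈ P := husd a1 a2 h1T h2T h12
              (fun hU' => htwo a1 x y a2 hxy (Ne.symm h2x) (Ne.symm h2y) hxa1U hya1U' hU')
            have upa3 : s(a1, a3) ∈ P := husd a1 a3 h1T h3T h13
              (fun hU' => htwo a1 x y a3 hxy (Ne.symm h3x) (Ne.symm h3y) hxa1U hya1U' hU')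
            by_cases hqr' : s(a2, a3) ∈ U
            · exact patternD G hK5 w v a1 x a2 a3 (adjT _ hvT) (adjT _ h1T) (adjT _ hxT)
                (adjT _ h2T) (adjT _ h3T) (Ne.symm h1v) hvx (Ne.symm h2v) (Ne.symm h3v)
                h1x h12 h13 (Ne.symm h2x) (Ne.symm h3x) h23
                (fun pp => pp ∈ P) ap hap hax hinj'
                uva1 uva2 uva3 upa2 upa3 uxa2 uxa3
            · have uqr : s(a2, a3) ∈ P := husd a2 a3 h2T h3T h23 hqr'
              exact patternA G hK5 w v a1 a2 a3 (adjT _ hvT) (adjT _ h1T) (adjT _ h2T)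
                (adjT _ h3T) (Ne.symm h1v) (Ne.symm h2v) (Ne.symm h3v) h12 h13 h23
                (fun pp => pp ∈ P) ap hap hax hinj'
                uva1 uva2 uva3 upa2 upa3 uqr
          · have uya1 : s(y, a1) ∈ P := husd y a1 hyT h1T (Ne.symm h1y) (fun h => hya1 h)
            by_cases hya2 : s(y, a2) ∈ U
            · exact patternC G hK33 w v x y a1 a2 a3 (adjT _ hvT) (adjT _ hxT) (adjT _ hyT)
                (adjT _ h1T) (adjT _ h2T) (adjT _ h3T)
                hvx hvy (Ne.symm h1v) (Ne.symm h2v) (Ne.symm h3v)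
                hxy (Ne.symm h1x) (Ne.symm h2x) (Ne.symm h3x)
                (Ne.symm h1y) (Ne.symm h2y) (Ne.symm h3y)
                h12 h13 h23
                (fun pp => pp ∈ P) ap hap hax hinj'
                uva1 uva2 uva3 uxy uya1 uxa2 uxa3
            · by_cases hya3 : s(y, a3) ∈ U
              · exact patternC G hK33 w v x y a1 a3 a2 (adjT _ hvT) (adjT _ hxT) (adjT _ hyT)
                  (adjT _ h1T) (adjT _ h3T) (adjT _ h2T)
                  hvx hvy (Ne.symm h1v) (Ne.symm h3v) (Ne.symm h2v)
                  hxy (Ne.symm h1x) (Ne.symm h3x) (Ne.symm h2x)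
                  (Ne.symm h1y) (Ne.symm h3y) (Ne.symm h2y)
                  h13 h12 (Ne.symm h23)
                  (fun pp => pp ∈ P) ap hap hax hinj'
                  uva1 uva3 uva2 uxy uya1 uxa3 uxa2
              · have uya2 : s(y, a2) ∈ P := husd y a2 hyT h2T (Ne.symm h2y) (fun h => hya2 h)
                have uya3 : s(y, a3) ∈ P := husd y a3 hyT h3T (Ne.symm h3y) (fun h => hya3 h)
                exact patternB G hK33 w v y a1 a2 a3 (adjT _ hvT) (adjT _ hyT) (adjT _ h1T)
                  (adjT _ h2T) (adjT _ h3T) hvy (Ne.symm h1v) (Ne.symm h2v) (Ne.symm h3v)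
                  (Ne.symm h1y) (Ne.symm h2y) (Ne.symm h3y) h12 h13 h23
                  (fun pp => pp ∈ P) ap hap hax hinj'
                  uva1 uva2 uva3 uya1 uya2 uya3
        by_cases hxp : s(x, p) ∈ U
        · exact core p q r hpT hqT hrT hpq hpr hqr hpv hpx hpy hqv hqx hqy hrv hrx hry hxp
        · by_cases hxq : s(x, q) ∈ U
          · exact core q p r hqT hpT hrT (Ne.symm hpq) hqr hpr hqv hqx hqy hpv hpx hpy
              hrv hrx hry hxq
          · by_cases hxr : s(x, r) ∈ U
            · exact core r p q hrT hpT hqT (Ne.symm hpr) (Ne.symm hqr) hpq hrv hrx hry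
                hpv hpx hpy hqv hqx hqy hxr
            · have uvp : s(v, p) ∈ P := husd v p hvT hpT (Ne.symm hpv)
                (fun hU' => htwo v x y p hxy (Ne.symm hpx) (Ne.symm hpy) hf1U hf2U hU')
              have uvq : s(v, q) ∈ P := husd v q hvT hqT (Ne.symm hqv)
                (fun hU' => htwo v x y q hxy (Ne.symm hqx) (Ne.symm hqy) hf1U hf2U hU')
              have uvr : s(v, r) ∈ P := husd v r hvT hrT (Ne.symm hrv)
                (fun hU' => htwo v x y r hxy (Ne.symm hrx) (Ne.symm hry) hf1U hf2U hU')
              have uxp : s(x, p) ∈ P := husd x p hxT hpT (Ne.symm hpx) (fun h => hxp h)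
              have uxq : s(x, q) ∈ P := husd x q hxT hqT (Ne.symm hqx) (fun h => hxq h)
              have uxr : s(x, r) ∈ P := husd x r hxT hrT (Ne.symm hrx) (fun h => hxr h)
              exact patternB G hK33 w v x p q r (adjT _ hvT) (adjT _ hxT) (adjT _ hpT)
                (adjT _ hqT) (adjT _ hrT) hvx (Ne.symm hpv) (Ne.symm hqv) (Ne.symm hrv)
                (Ne.symm hpx) (Ne.symm hqx) (Ne.symm hrx) hpq hpr hqr
                (fun pp => pp ∈ P) ap hap hax hinj'
                uvp uvq uvr uxp uxq uxr
      · -- CASE 2a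
        by_cases hUe : U = ∅
        · obtain ⟨x0, x1, x2, x3, m0, m1, m2, m3, d01, d02, d03, d12, d13, d23⟩ :=
            exists_four T (by omega)
          have allused : ∀ a b : V, a ∈ T → b ∈ T → a ≠ b → s(a, b) ∈ P := fun a b ha hb hab =>
            husd a b ha hb hab (by simp [hUe])
          exact patternA G hK5 w x0 x1 x2 x3 (adjT _ m0) (adjT _ m1) (adjT _ m2) (adjT _ m3)
            d01 d02 d03 d12 d13 d23 (fun p => p ∈ P) ap hap hax hinj'
            (allused _ _ m0 m1 d01) (allused _ _ m0 m2 d02) (allused _ _ m0 m3 d03)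
            (allused _ _ m1 m2 d12) (allused _ _ m1 m3 d13) (allused _ _ m2 m3 d23)
        · obtain ⟨e, heU⟩ := Finset.nonempty_of_ne_empty hUe
          obtain ⟨a, b, rfl⟩ := sym2_repr e
          have hab : a ≠ b := fun h => hUnd _ heU (Sym2.mk_isDiag_iff.2 h)
          have haT : a ∈ T := hUend _ heU a (Sym2.mem_iff.2 (Or.inl rfl))
          have hbT : b ∈ T := hUend _ heU b (Sym2.mem_iff.2 (Or.inr rfl))
          have hbaU : s(b, a) ∈ U := by rw [Sym2.eq_swap]; exact heU
          have hsub : ({a, b} : Finset V) ⊆ T := by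
            intro z hz
            rcases Finset.mem_insert.1 hz with rfl | hz
            · exact haT
            · rw [Finset.mem_singleton.1 hz]; exact hbT
          have hW4 : 4 ≤ (T \ {a, b}).card := by
            rw [Finset.card_sdiff_of_subset hsub, Finset.card_pair hab]
            omega
          obtain ⟨c1, c2, c3, _c4, mc1, mc2, mc3, _, dc12, dc13, _, dc23, _, _⟩ :=
            exists_four _ hW4
          have hprop : ∀ z, z ∈ T \ ({a, b} : Finset V) → z ∈ T ∧ z ≠ a ∧ z ≠ b := by
            intro z hz
            rw [Finset.mem_sdiff] at hz
            refine ⟨hz.1, ?_, ?_⟩ <;> · rintro rfl; exact hz.2 (by simp)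
          have uac : ∀ cz, cz ∈ T \ ({a, b} : Finset V) → s(a, cz) ∈ P := by
            intro cz hcz
            obtain ⟨hczT, hcza, hczb⟩ := hprop cz hcz
            exact husd a cz haT hczT (Ne.symm hcza)
              (fun hU' => C2 ⟨a, b, cz, fun hh => hczb hh.symm, heU, hU'⟩)
          have ubc : ∀ cz, cz ∈ T \ ({a, b} : Finset V) → s(b, cz) ∈ P := by
            intro cz hcz
            obtain ⟨hczT, hcza, hczb⟩ := hprop cz hcz
            exact husd b cz hbT hczT (Ne.symm hczb)
              (fun hU' => C2 ⟨b, a, cz, fun hh => hcza hh.symm, hbaU, hU'⟩)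
          obtain ⟨hc1T, hc1a, hc1b⟩ := hprop c1 mc1
          obtain ⟨hc2T, hc2a, hc2b⟩ := hprop c2 mc2
          obtain ⟨hc3T, hc3a, hc3b⟩ := hprop c3 mc3
          exact patternB G hK33 w a b c1 c2 c3 (adjT _ haT) (adjT _ hbT) (adjT _ hc1T)
            (adjT _ hc2T) (adjT _ hc3T) hab (Ne.symm hc1a) (Ne.symm hc2a) (Ne.symm hc3a)
            (Ne.symm hc1b) (Ne.symm hc2b) (Ne.symm hc3b) dc12 dc13 dc23
            (fun p => p ∈ P) ap hap hax hinj'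
            (uac _ mc1) (uac _ mc2) (uac _ mc3) (ubc _ mc1) (ubc _ mc2) (ubc _ mc3)

lemma two_nbrs [Fintype V] (G : SimpleGraph V) (h4 : KConnected 4 G) (w : V) :
    ∃ a b : V, a ≠ b ∧ G.Adj w a ∧ G.Adj w b := by
  classical
  by_contra hcon
  push_neg at hcon
  have hsub : ∀ a ∈ G.neighborSet w, ∀ b ∈ G.neighborSet w, a = b := by
    intro a ha b hb
    by_contra hne
    exact (hcon a b hne ha) hb
  set F : Finset V := (Set.toFinite (G.neighborSet w)).toFinset with hF
  have hFmem : ∀ a, a ∈ F ↔ G.Adj w a := by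
    intro a; simp [hF, Set.Finite.mem_toFinset, mem_neighborSet]
  have hFcard : F.card ≤ 1 := by
    rw [Finset.card_le_one]
    intro a ha b hb
    exact hsub a (by simpa [mem_neighborSet] using (hFmem a).1 ha) b
      (by simpa [mem_neighborSet] using (hFmem b).1 hb)
  have hconn := h4.2 F (lt_of_le_of_lt hFcard (by norm_num))
  have hwF : w ∉ F := fun hw => G.irrefl ((hFmem w).1 hw)
  have hcard : (insert w F).card < Fintype.card V := by
    have h1 : (insert w F).card ≤ 2 := le_trans (Finset.card_insert_le _ _) (by omega)
    have := h4.1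
    omega
  have hy : ∃ y : V, y ∉ insert w F := by
    by_contra hy
    push_neg at hy
    have : (Finset.univ : Finset V) ⊆ insert w F := fun y _ => hy y
    have := Finset.card_le_card this
    simp [Finset.card_univ] at this
    omega
  obtain ⟨y, hy⟩ := hy
  have hyw : y ≠ w := fun h => hy (h ▸ Finset.mem_insert_self w F)
  have hyF : y ∉ F := fun h => hy (Finset.mem_insert_of_mem h)
  have hwc : w ∈ ((↑F : Set V)ᶜ) := by simpa using hwF
  have hyc : y ∈ ((↑F : Set V)ᶜ) := by simpa using hyF
  have hreach := hconn.preconnected ⟨w, hwc⟩ ⟨y, hyc⟩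
  obtain ⟨p⟩ := hreach
  cases p with
  | nil => exact hyw rfl
  | cons h p' =>
    rename_i b
    have hb : G.Adj w (↑b : V) := h
    have : (↑b : V) ∈ F := (hFmem _).2 hb
    exact b.prop (by simpa using this)

lemma exists_distinct [Fintype V] (G : SimpleGraph V) (h4 : KConnected 4 G) :
    ∃ v x : V, v ≠ x := by
  have : 1 < Fintype.card V := by have := h4.1; omega
  exact Fintype.exists_pair_of_one_lt_card this

lemma quad_extract (G : SimpleGraph V) (S S' : Set V) (hS : IndepSet G S) (hsub : S' ⊆ S)
    (u : V) (hu : u ∈ S) (hu' : u ∉ S')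
    (v0 v1 v2 v3 : V)
    (h01 : v0 ≠ v1) (h02 : v0 ≠ v2) (h03 : v0 ≠ v3) (h12 : v1 ≠ v2) (h13 : v1 ≠ v3)
    (h23 : v2 ≠ v3)
    (a01 : G.Adj v0 v1) (a12 : G.Adj v1 v2) (a23 : G.Adj v2 v3) (a30 : G.Adj v3 v0)
    (hC : ((insert u S') ∩ ({v0, v1, v2, v3} : Set V)).ncard = 2)
    (hSnot : (S' ∩ ({v0, v1, v2, v3} : Set V)).ncard ≠ 2) :
    ∃ w a b : V, w ∈ S' ∧ a ≠ b ∧ G.Adj w a ∧ G.Adj w b ∧ G.Adj u a ∧ G.Adj u b := by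
  set Q : Set V := {v0, v1, v2, v3} with hQ
  obtain ⟨s, t, hst, hset⟩ := Set.ncard_eq_two.1 hC
  -- u is on the cycle
  have huQ : u ∈ Q := by
    by_contra huQ
    apply hSnot
    have : S' ∩ Q = insert u S' ∩ Q := by
      ext z
      simp only [Set.mem_inter_iff, Set.mem_insert_iff]
      constructor
      · rintro ⟨hz, hzQ⟩; exact ⟨Or.inr hz, hzQ⟩
      · rintro ⟨(rfl | hz), hzQ⟩
        · exact absurd hzQ huQ
        · exact ⟨hz, hzQ⟩
    rw [this, hset]
    exact Set.ncard_pair hst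
  have huM : u ∈ ({s, t} : Set V) := by
    rw [← hset]; exact ⟨Set.mem_insert _ _, huQ⟩
  -- name the S' vertex t'
  have main : ∀ t' : V, t' ≠ u → t' ∈ ({s, t} : Set V) → u ∈ ({s,t} : Set V) →
      ∃ w a b : V, w ∈ S' ∧ a ≠ b ∧ G.Adj w a ∧ G.Adj w b ∧ G.Adj u a ∧ G.Adj u b := by
    intro t' ht'u ht'M _
    have ht'T : t' ∈ insert u S' ∩ Q := by rw [hset]; exact ht'M
    have ht'S' : t' ∈ S' := by
      rcases ht'T.1 with h | h
      · exact absurd h ht'u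
      · exact h
    have ht'Q : t' ∈ Q := ht'T.2
    have hnadj : ¬ G.Adj u t' := hS hu (hsub ht'S')
    have hnadj' : ¬ G.Adj t' u := fun h => hnadj h.symm
    clear ht'M hset hC hSnot huM
    rcases huQ with rfl | rfl | rfl | rfl <;> rcases ht'Q with h | h | h | h <;>
      subst_vars <;>
      first
        | (exact absurd rfl ht'u)
        | (exact absurd a01 hnadj)
        | (exact absurd a12 hnadj)
        | (exact absurd a23 hnadj)
        | (exact absurd a30 hnadj)
        | (exact absurd a01 hnadj')
        | (exact absurd a12 hnadj')
        | (exact absurd a23 hnadj')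
        | (exact absurd a30 hnadj')
        | (exact ⟨_, _, _, ht'S', h13, a12.symm, a23, a01, a30.symm⟩)
        | (exact ⟨_, _, _, ht'S', h02, a30, a23.symm, a01.symm, a12⟩)
        | (exact ⟨_, _, _, ht'S', h13, a01, a30.symm, a12.symm, a23⟩)
        | (exact ⟨_, _, _, ht'S', h02, a01.symm, a12, a30, a23.symm⟩)
  -- u = s or u = t
  rcases huM with rfl | rfl
  · exact main t (fun h => hst h.symm) (Or.inr rfl) (Or.inl rfl)
  · exact main s (fun h => hst h) (Or.inl rfl) (Or.inr rfl)

lemma key_extract (G : SimpleGraph V) (S S' : Set V) (hS : IndepSet G S) (hsub : S' ⊆ S)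
    (hsat : ¬ Saturates G S' 4) (u : V) (hu : u ∈ S) (hu' : u ∉ S')
    (hTsat : Saturates G (insert u S') 4) :
    ∃ w a b : V, w ∈ S' ∧ a ≠ b ∧ G.Adj w a ∧ G.Adj w b ∧ G.Adj u a ∧ G.Adj u b := by
  obtain ⟨v0, c, hcyc, hlen, hcard⟩ := hTsat
  cases c with
  | nil => simp at hlen
  | cons h1 c =>
    cases c with
    | nil => simp at hlen
    | cons h2 c =>
      cases c with
      | nil => simp at hlen
      | cons h3 c =>
        cases c with
        | nil => simp at hlen
        | cons h4 c =>
          cases c with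
          | cons h5 c => simp [SimpleGraph.Walk.length_cons] at hlen
          | nil =>
            rename_i b1 b2 b3
            have nd := hcyc.support_nodup
            simp only [SimpleGraph.Walk.support_cons, SimpleGraph.Walk.support_nil,
              List.tail_cons, List.nodup_cons, List.mem_cons, List.mem_singleton,
              List.not_mem_nil, or_false, List.nodup_nil, and_true] at nd
            push_neg at nd
            obtain ⟨⟨nd12, nd13, nd10⟩, ⟨nd23, nd20⟩, nd30, -⟩ := nd
            have hsupp : {x | x ∈ (SimpleGraph.Walk.cons h1 (SimpleGraph.Walk.cons h2
                (SimpleGraph.Walk.cons h3 (SimpleGraph.Walk.cons h4 SimpleGraph.Walk.nil)))).support}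
                = ({v0, b1, b2, b3} : Set V) := by
              ext z
              simp only [SimpleGraph.Walk.support_cons, SimpleGraph.Walk.support_nil,
                List.mem_cons, List.not_mem_nil, List.mem_singleton, Set.mem_insert_iff,
                Set.mem_setOf_eq, Set.mem_singleton_iff]
              tauto
            rw [hsupp] at hcard
            have hSnot : (S' ∩ ({v0, b1, b2, b3} : Set V)).ncard ≠ 2 := by
              intro hc2
              exact hsat ⟨v0, _, hcyc, hlen, by rw [hsupp]; exact hc2⟩
            exact quad_extract G S S' hS hsub u hu hu' v0 b1 b2 b3
              (fun h => nd10 h.symm) (fun h => nd20 h.symm) (fun h => nd30 h.symm)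
              nd12 nd13 nd23 h1 h2 h3 h4 hcard hSnot


lemma adjtrans (G : SimpleGraph V) (u a b a' b' : V) (h : s(a', b') = s(a, b))
    (h1 : G.Adj u a') (h2 : G.Adj u b') : G.Adj u a ∧ G.Adj u b := by
  rw [Sym2.eq_iff] at h
  rcases h with ⟨hh1, hh2⟩ | ⟨hh1, hh2⟩
  · exact ⟨hh1 ▸ h1, hh2 ▸ h2⟩
  · exact ⟨hh2 ▸ h2, hh1 ▸ h1⟩

theorem common_neighbourhood_from_maximal_nonsaturating_subset'
    {V : Type} [Fintype V] (G : SimpleGraph V)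
    (hK5 : ¬ HasMinor G (⊤ : SimpleGraph (Fin 5)))
    (hK33 : ¬ HasMinor G (completeBipartiteGraph (Fin 3) (Fin 3)))
    (h4 : KConnected 4 G)
    (S : Set V) (hS : IndepSet G S) (hdeg : ∀ u ∈ S, (G.neighborSet u).ncard ≤ 6)
    (S' : Set V) (hsub : S' ⊆ S) (hsat : ¬ Saturates G S' 4)
    (hmax : ∀ T : Set V, S' ⊆ T → T ⊆ S → ¬ Saturates G T 4 → T = S') :
    ∃ v x : V, v ≠ x ∧
      (S.ncard : ℝ) / (9 * (S'.ncard : ℝ)) ≤ ((G.neighborSet v ∩ G.neighborSet x ∩ S).ncard : ℝ) := by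
  classical
  by_cases hSe : S = ∅
  · obtain ⟨v, x, hvx⟩ := exists_distinct G h4
    have hS'e : S' = ∅ := Set.subset_eq_empty hsub hSe
    refine ⟨v, x, hvx, ?_⟩
    rw [hSe, hS'e]
    simp
  · -- S nonempty
    have hSne : S.Nonempty := Set.nonempty_iff_ne_empty.2 hSe
    have hS'ne : S'.Nonempty := by
      by_contra hc
      rw [Set.not_nonempty_iff_eq_empty] at hc
      obtain ⟨u, hu⟩ := hSne
      have hns : ¬ Saturates G {u} 4 := by
        rintro ⟨v0, c, _, _, hc2⟩
        have hle : ({u} ∩ {x | x ∈ c.support} : Set V).ncard ≤ 1 := by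
          have h1 : ({u} ∩ {x | x ∈ c.support} : Set V) ⊆ {u} := Set.inter_subset_left
          calc ({u} ∩ {x | x ∈ c.support} : Set V).ncard
              ≤ ({u} : Set V).ncard := Set.ncard_le_ncard h1 (Set.finite_singleton u)
            _ = 1 := Set.ncard_singleton u
        omega
      have := hmax {u} (by rw [hc]; exact Set.empty_subset _)
        (Set.singleton_subset_iff.2 hu) hns
      rw [hc] at this
      exact (Set.singleton_ne_empty u) this
    -- existence of key slots for u ∈ S \ S'
    have key0 : ∀ u : V, ∃ t : V × V × V, u ∈ S → u ∉ S' →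
        (t.1 ∈ S' ∧ t.2.1 ≠ t.2.2 ∧ G.Adj t.1 t.2.1 ∧ G.Adj t.1 t.2.2 ∧
          G.Adj u t.2.1 ∧ G.Adj u t.2.2) := by
      intro u
      by_cases hu : u ∈ S ∧ u ∉ S'
      · have hsat' : Saturates G (insert u S') 4 := by
          by_contra hns
          have := hmax (insert u S') (Set.subset_insert _ _)
            (Set.insert_subset hu.1 hsub) hns
          exact hu.2 (this ▸ Set.mem_insert u S')
        obtain ⟨w, a, b, h1, h2, h3, h4', h5, h6⟩ :=
          key_extract G S S' hS hsub hsat u hu.1 hu.2 hsat'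
        exact ⟨(w, a, b), fun _ _ => ⟨h1, h2, h3, h4', h5, h6⟩⟩
      · exact ⟨(u, u, u), fun h1 h2 => absurd ⟨h1, h2⟩ hu⟩
    choose F0 hF0 using key0
    have nbrs : ∀ u : V, ∃ t : V × V, t.1 ≠ t.2 ∧ G.Adj u t.1 ∧ G.Adj u t.2 := by
      intro u
      obtain ⟨a, b, h1, h2, h3⟩ := two_nbrs G h4 u
      exact ⟨(a, b), h1, h2, h3⟩
    choose N2 hN2 using nbrs
    -- construct the slot function
    obtain ⟨Φ, PrA, PrB, PrC⟩ :
        ∃ Φ : V → V × Sym2 V,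
          (∀ u, u ∈ S → (Φ u).1 ∈ S' ∧ ∃ a b : V, (Φ u).2 = s(a, b) ∧ a ≠ b ∧
            G.Adj (Φ u).1 a ∧ G.Adj (Φ u).1 b ∧ G.Adj u a ∧ G.Adj u b) ∧
          (∀ u, u ∈ S' → (Φ u).1 = u) ∧
          (∀ w, w ∈ S' → (∃ u₀, (u₀ ∈ S ∧ u₀ ∉ S') ∧ (Φ u₀).1 = w) →
            ∃ u₁, (u₁ ∈ S ∧ u₁ ∉ S') ∧ Φ u₁ = Φ w) := by
      refine ⟨fun u => if h : u ∈ S ∧ u ∉ S' then ((F0 u).1, s((F0 u).2.1, (F0 u).2.2))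
        else if h2 : ∃ u₀, (u₀ ∈ S ∧ u₀ ∉ S') ∧ (F0 u₀).1 = u
          then (u, s((F0 (Classical.choose h2)).2.1, (F0 (Classical.choose h2)).2.2))
          else (u, s((N2 u).1, (N2 u).2)), ?_, ?_, ?_⟩
      · intro u hu
        by_cases h : u ∈ S ∧ u ∉ S'
        · dsimp only
          rw [dif_pos h]
          obtain ⟨p1, p2, p3, p4, p5, p6⟩ := hF0 u h.1 h.2
          exact ⟨p1, (F0 u).2.1, (F0 u).2.2, rfl, p2, p3, p4, p5, p6⟩
        · have hu' : u ∈ S' := by by_contra hc; exact h ⟨hu, hc⟩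
          dsimp only
          rw [dif_neg h]
          by_cases h2 : ∃ u₀, (u₀ ∈ S ∧ u₀ ∉ S') ∧ (F0 u₀).1 = u
          · rw [dif_pos h2]
            obtain ⟨⟨hu0S, hu0S'⟩, heq⟩ := Classical.choose_spec h2
            obtain ⟨p1, p2, p3, p4, p5, p6⟩ := hF0 _ hu0S hu0S'
            rw [heq] at p3 p4
            exact ⟨hu', _, _, rfl, p2, p3, p4, p3, p4⟩
          · rw [dif_neg h2]
            obtain ⟨q1, q2, q3⟩ := hN2 u
            exact ⟨hu', _, _, rfl, q1, q2, q3, q2, q3⟩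
      · intro u hu'
        have h : ¬ (u ∈ S ∧ u ∉ S') := fun h => h.2 hu'
        dsimp only
        rw [dif_neg h]
        by_cases h2 : ∃ u₀, (u₀ ∈ S ∧ u₀ ∉ S') ∧ (F0 u₀).1 = u
        · rw [dif_pos h2]
        · rw [dif_neg h2]
      · intro w hw hex
        have h : ¬ (w ∈ S ∧ w ∉ S') := fun h => h.2 hw
        have hex' : ∃ u₀, (u₀ ∈ S ∧ u₀ ∉ S') ∧ (F0 u₀).1 = w := by
          obtain ⟨u₀, hu₀, h1⟩ := hex
          refine ⟨u₀, hu₀, ?_⟩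
          dsimp only at h1
          rw [dif_pos hu₀] at h1
          exact h1
        obtain ⟨⟨h1S, h1S'⟩, h1eq⟩ := Classical.choose_spec hex'
        refine ⟨Classical.choose hex', ⟨h1S, h1S'⟩, ?_⟩
        dsimp only
        rw [dif_pos ⟨h1S, h1S'⟩, dif_neg h, dif_pos hex', h1eq]
    -- Finsets
    set Sf : Finset V := (Set.toFinite S).toFinset with hSf
    set S'f : Finset V := (Set.toFinite S').toFinset with hS'f
    have hSfmem : ∀ u, u ∈ Sf ↔ u ∈ S := by intro u; rw [hSf, Set.Finite.mem_toFinset]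
    have hS'fmem : ∀ u, u ∈ S'f ↔ u ∈ S' := by intro u; rw [hS'f, Set.Finite.mem_toFinset]
    set Ψ : V → Sym2 V := fun u => (Φ u).2 with hΨ
    -- per-w bound
    have perw : ∀ w, w ∈ S'f → ((Sf.filter (fun u => (Φ u).1 = w)).image Ψ).card ≤ 9 := by
      intro w hw
      have hwS' : w ∈ S' := (hS'fmem w).1 hw
      by_cases hex : ∃ u₀, (u₀ ∈ S ∧ u₀ ∉ S') ∧ (Φ u₀).1 = w
      · set Pw : Finset (Sym2 V) := (Sf.filter (fun u => (Φ u).1 = w)).image Ψ with hPw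
        have hrepex : ∀ p, p ∈ Pw → ∃ u, (u ∈ S ∧ u ∉ S') ∧ Φ u = (w, p) := by
          intro p hp
          rw [hPw, Finset.mem_image] at hp
          obtain ⟨u, hu, rfl⟩ := hp
          rw [Finset.mem_filter] at hu
          obtain ⟨huSf, huw⟩ := hu
          have huS : u ∈ S := (hSfmem u).1 huSf
          have hPhiu : Φ u = (w, Ψ u) := by
            rw [hΨ, ← huw]
          by_cases hu' : u ∈ S'
          · have huw' : u = w := by rw [← PrB u hu', huw]
            obtain ⟨u₁, hu₁, heq⟩ := PrC w hwS' hex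
            exact ⟨u₁, hu₁, by rw [heq, ← huw', hPhiu, huw']⟩
          · exact ⟨u, ⟨huS, hu'⟩, hPhiu⟩
        set ap : Sym2 V → V := fun p =>
          if h : ∃ u, (u ∈ S ∧ u ∉ S') ∧ Φ u = (w, p) then Classical.choose h else w with hap0
        have hapspec : ∀ p, p ∈ Pw → (ap p ∈ S ∧ ap p ∉ S') ∧ Φ (ap p) = (w, p) := by
          intro p hp
          have h := hrepex p hp
          rw [hap0]
          dsimp only
          rw [dif_pos h]
          exact Classical.choose_spec h
        refine crux G hK5 hK33 w (hdeg w (hsub hwS')) Pw ?_ ?_ ap ?_ ?_ ?_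
        · intro p hp a b hab
          obtain ⟨⟨huS, _⟩, hPhi⟩ := hapspec p hp
          obtain ⟨_, a', b', he, _, hwa, hwb, _, _⟩ := PrA _ huS
          rw [hPhi] at he hwa hwb
          exact adjtrans G w a b a' b' (by rw [← he, ← hab]) hwa hwb
        · intro p hp hdg
          obtain ⟨⟨huS, _⟩, hPhi⟩ := hapspec p hp
          obtain ⟨_, a', b', he, hne, _, _, _, _⟩ := PrA _ huS
          rw [hPhi] at he
          dsimp only at he
          rw [he] at hdg
          exact hne (Sym2.mk_isDiag_iff.1 hdg)
        · intro p hp a b hab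
          obtain ⟨⟨huS, _⟩, hPhi⟩ := hapspec p hp
          obtain ⟨_, a', b', he, _, _, _, hua, hub⟩ := PrA _ huS
          rw [hPhi] at he
          dsimp only at he
          exact adjtrans G (ap p) a b a' b' (by rw [← he, ← hab]) hua hub
        · intro p hp
          obtain ⟨⟨huS, huS'⟩, hPhi⟩ := hapspec p hp
          constructor
          · exact hS (hsub hwS') huS
          · intro hc; exact huS' (hc ▸ hwS')
        · intro p hp q hq hpq
          obtain ⟨_, hPhip⟩ := hapspec p hp
          obtain ⟨_, hPhiq⟩ := hapspec q hq
          have h2 : (w, p) = (w, q) := by rw [← hPhip, ← hPhiq, hpq]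
          have := (Prod.mk.injEq w p w q) ▸ h2
          exact ((Prod.mk.injEq w p w q).mp h2).2
      · -- degenerate: at most one slot
        refine le_trans (Finset.card_le_card ?_) (by simp : ({Ψ w} : Finset (Sym2 V)).card ≤ 9)
        intro p hp
        rw [Finset.mem_image] at hp
        obtain ⟨u, hu, rfl⟩ := hp
        rw [Finset.mem_filter] at hu
        obtain ⟨huSf, huw⟩ := hu
        have huS : u ∈ S := (hSfmem u).1 huSf
        by_cases hu' : u ∈ S'
        · have : u = w := by rw [← PrB u hu', huw]
          rw [this]
          exact Finset.mem_singleton_self _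
        · exact absurd ⟨u, ⟨huS, hu'⟩, huw⟩ hex
    -- global image bound
    have himg : (Sf.image Ψ).card ≤ 9 * S'f.card := by
      have hsubB : Sf.image Ψ ⊆ S'f.biUnion
          (fun w => (Sf.filter (fun u => (Φ u).1 = w)).image Ψ) := by
        intro p hp
        rw [Finset.mem_image] at hp
        obtain ⟨u, hu, rfl⟩ := hp
        have huS : u ∈ S := (hSfmem u).1 hu
        rw [Finset.mem_biUnion]
        refine ⟨(Φ u).1, (hS'fmem _).2 (PrA u huS).1, ?_⟩
        rw [Finset.mem_image]
        exact ⟨u, Finset.mem_filter.2 ⟨hu, rfl⟩, rfl⟩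
      calc (Sf.image Ψ).card ≤ _ := Finset.card_le_card hsubB
        _ ≤ ∑ w ∈ S'f, ((Sf.filter (fun u => (Φ u).1 = w)).image Ψ).card :=
          Finset.card_biUnion_le
        _ ≤ S'f.card • 9 := Finset.sum_le_card_nsmul _ _ 9 perw
        _ = 9 * S'f.card := by rw [smul_eq_mul, Nat.mul_comm]
    -- pigeonhole
    have hSfne : Sf.Nonempty := by
      obtain ⟨u, hu⟩ := hSne
      exact ⟨u, (hSfmem u).2 hu⟩
    have himgne : (Sf.image Ψ).Nonempty := hSfne.image Ψ
    obtain ⟨pstar, hpstar, hmaxf⟩ := Finset.exists_max_image (Sf.image Ψ)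
      (fun p => (Sf.filter (fun u => Ψ u = p)).card) himgne
    set M : ℕ := (Sf.filter (fun u => Ψ u = pstar)).card with hM
    have hsum : Sf.card = ∑ p ∈ Sf.image Ψ, (Sf.filter (fun u => Ψ u = p)).card :=
      Finset.card_eq_sum_card_image Ψ Sf
    have hcount : Sf.card ≤ 9 * S'f.card * M := by
      calc Sf.card = _ := hsum
        _ ≤ (Sf.image Ψ).card • M := Finset.sum_le_card_nsmul _ _ M hmaxf
        _ = (Sf.image Ψ).card * M := by rw [smul_eq_mul]
        _ ≤ 9 * S'f.card * M := Nat.mul_le_mul_right M himg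
    -- identify the pair
    obtain ⟨u0, hu0, hu0p⟩ := Finset.mem_image.1 hpstar
    have hu0S : u0 ∈ S := (hSfmem u0).1 hu0
    obtain ⟨_, a, b, hab, hne, _, _, _, _⟩ := PrA u0 hu0S
    have hpstarab : pstar = s(a, b) := by rw [← hu0p, hΨ]; exact hab
    -- the fiber is contained in the common neighbourhood
    have hfib : ∀ u, u ∈ Sf.filter (fun u => Ψ u = pstar) →
        u ∈ G.neighborSet a ∩ G.neighborSet b ∩ S := by
      intro u hu
      rw [Finset.mem_filter] at hu
      obtain ⟨huSf, hup⟩ := hu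
      have huS : u ∈ S := (hSfmem u).1 huSf
      obtain ⟨_, a', b', he, _, _, _, hua, hub⟩ := PrA u huS
      have : s(a', b') = s(a, b) := by rw [← he, ← hpstarab, ← hup, hΨ]
      obtain ⟨h1, h2⟩ := adjtrans G u a b a' b' this hua hub
      exact ⟨⟨h1.symm, h2.symm⟩, huS⟩
    have hMle : M ≤ (G.neighborSet a ∩ G.neighborSet b ∩ S).ncard := by
      rw [hM, Set.ncard_eq_toFinset_card' _]
      apply Finset.card_le_card
      intro u hu
      rw [Set.mem_toFinset]
      exact hfib u hu
    -- cardinalities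
    have hScard : S.ncard = Sf.card := by rw [hSf, Set.ncard_eq_toFinset_card]
    have hS'card : S'.ncard = S'f.card := by rw [hS'f, Set.ncard_eq_toFinset_card]
    have hS'pos : 0 < S'.ncard := (Set.ncard_pos (Set.toFinite S')).2 hS'ne
    refine ⟨a, b, hne, ?_⟩
    have hposR : (0 : ℝ) < 9 * (S'.ncard : ℝ) := by
      have : (0 : ℝ) < (S'.ncard : ℝ) := by exact_mod_cast hS'pos
      linarith
    rw [div_le_iff₀ hposR]
    have hnat : S.ncard ≤ (G.neighborSet a ∩ G.neighborSet b ∩ S).ncard * (9 * S'.ncard) := by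
      calc S.ncard = Sf.card := hScard
        _ ≤ 9 * S'f.card * M := hcount
        _ ≤ 9 * S'f.card * (G.neighborSet a ∩ G.neighborSet b ∩ S).ncard :=
          Nat.mul_le_mul_left _ hMle
        _ = (G.neighborSet a ∩ G.neighborSet b ∩ S).ncard * (9 * S'.ncard) := by
          rw [hS'card]; ring
    exact_mod_cast hnat

/-- Let `G` be a 4-connected planar triangulation, `S` an independent
set of vertices of degree at most 6, and `S'` a maximal subset of `S` saturating no
4-cycle. Then there are distinct `v, x` with `|(N(v) ∩ N(x)) ∩ S| ≥ |S|/(9|S'|)`. -/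
theorem common_neighbourhood_from_maximal_nonsaturating_subset
    {V : Type} [Fintype V] (G : SimpleGraph V)
    (hG : IsPlanarTriangulation G) (h4 : KConnected 4 G)
    (S : Set V) (hS : IndepSet G S) (hdeg : ∀ u ∈ S, vdeg G u ≤ 6)
    (S' : Set V) (hsub : S' ⊆ S) (hsat : ¬ Saturates G S' 4)
    (hmax : ∀ T : Set V, S' ⊆ T → T ⊆ S → ¬ Saturates G T 4 → T = S') :
    ∃ v x : V, v ≠ x ∧
      (S.ncard : ℝ) / (9 * (S'.ncard : ℝ)) ≤ ((G.neighborSet v ∩ G.neighborSet x ∩ S).ncard : ℝ) := by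
  exact common_neighbourhood_from_maximal_nonsaturating_subset' G hG.2.1.1 hG.2.1.2 h4 S hS
    (fun u hu => hdeg u hu) S' hsub hsat hmax
end
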